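/- arXiv:2407.14273 — 6 statements merged into one kernel-verified Lean document; each statement's English description precedes it below -/
import Mathlib

section
/- Let F be a finite field with q elements, let n be a positive integer, let 0 ≤ r ≤ n, let A be an n×n matrix over F of rank k with 1 ≤ k ≤ n, and let α ∈ F. Then the number of n×n matrices X over F of rank r with tr(AX) = α equals f^α_{n,r,k}, the number of n×n matrices over F of rank r whose k-trace equals α. -/
open Matrix Finset

/-- `fcard F n r k α` is the number of `n × n` matrices over `F` of rank `r`
whose `k`-trace (the sum of the first `k` diagonal entries) equals `α`. -/
noncomputable def fcard (F : Type*) [Field F] [Fintype F] (n r k : ℕ) (α : F) : ℕ :=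
  Nat.card {X : Matrix (Fin n) (Fin n) F // X.rank = r ∧
    (∑ i ∈ Finset.univ.filter (fun i : Fin n => (i : ℕ) < k), X i i) = α}

section Aux

open Module

variable {F : Type*} [Field F]

/-- rank normal form decomposition -/
lemma exists_rank_decomp {n k : ℕ} (hkn : k ≤ n) (A : Matrix (Fin n) (Fin n) F)
    (hA : A.rank = k) :
    ∃ P Q : Matrix (Fin n) (Fin n) F, IsUnit P ∧ IsUnit Q ∧
      A = P * (Matrix.diagonal fun i : Fin n => if (i : ℕ) < k then (1 : F) else 0) * Q := by
  classical
  set f := A.mulVecLin with hf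
  have hrange : finrank F (LinearMap.range f) = k := hA
  have hdim : finrank F (Fin n → F) = n := by simp
  have hker : finrank F (LinearMap.ker f) = n - k := by
    have h := LinearMap.finrank_range_add_finrank_ker f
    omega
  obtain ⟨W, hW⟩ := Submodule.exists_isCompl (LinearMap.ker f)
  have hWk : finrank F W = k := by
    have := Submodule.finrank_add_eq_of_isCompl hW
    omega
  let bW : Basis (Fin k) F W := finBasisOfFinrankEq F W hWk
  let bK : Basis (Fin (n - k)) F (LinearMap.ker f) := finBasisOfFinrankEq F _ hker
  let b : Basis (Fin k ⊕ Fin (n - k)) F (Fin n → F) :=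
    (bW.prod bK).map (Submodule.prodEquivOfIsCompl W (LinearMap.ker f) hW.symm)
  have hb_inl : ∀ i, b (Sum.inl i) = (bW i : Fin n → F) := by
    intro i
    simp [b, Basis.prod_apply, Submodule.coe_prodEquivOfIsCompl']
  have hb_inr : ∀ i, b (Sum.inr i) = (bK i : Fin n → F) := by
    intro i
    simp [b, Basis.prod_apply, Submodule.coe_prodEquivOfIsCompl']
  -- codomain basis
  have hinj : Function.Injective (f.domRestrict W) := by
    rw [← LinearMap.ker_eq_bot, Submodule.eq_bot_iff]
    rintro ⟨x, hxW⟩ hx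
    have hxk : x ∈ LinearMap.ker f := by simpa [LinearMap.mem_ker] using hx
    have := (Submodule.disjoint_def.mp hW.disjoint) x hxk hxW
    simpa using this
  have hrng : LinearMap.range (f.domRestrict W) = LinearMap.range f := by
    rw [LinearMap.range_domRestrict_eq_range_iff]
    rw [codisjoint_iff, sup_comm]
    exact hW.codisjoint.eq_top
  let cR : Basis (Fin k) F (LinearMap.range f) :=
    (bW.map (LinearEquiv.ofInjective _ hinj)).map (LinearEquiv.ofEq _ _ hrng)
  have hcR : ∀ i, (cR i : Fin n → F) = f (bW i) := by
    intro i
    simp [cR, LinearEquiv.ofInjective_apply]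
  obtain ⟨C, hC⟩ := Submodule.exists_isCompl (LinearMap.range f)
  have hCdim : finrank F C = n - k := by
    have := Submodule.finrank_add_eq_of_isCompl hC
    omega
  let bC : Basis (Fin (n - k)) F C := finBasisOfFinrankEq F C hCdim
  let c : Basis (Fin k ⊕ Fin (n - k)) F (Fin n → F) :=
    (cR.prod bC).map (Submodule.prodEquivOfIsCompl (LinearMap.range f) C hC)
  have hc_inl : ∀ i, c (Sum.inl i) = (cR i : Fin n → F) := by
    intro i
    simp [c, Basis.prod_apply, Submodule.coe_prodEquivOfIsCompl']
  -- key images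
  have hfb_inl : ∀ i, f (b (Sum.inl i)) = c (Sum.inl i) := by
    intro i
    rw [hb_inl, hc_inl, hcR]
  have hfb_inr : ∀ i, f (b (Sum.inr i)) = 0 := by
    intro i
    rw [hb_inr]
    exact (bK i).2
  -- reindex
  have hnk : k + (n - k) = n := by omega
  let e : Fin k ⊕ Fin (n - k) ≃ Fin n := finSumFinEquiv.trans (finCongr hnk)
  have he_lt : ∀ (j : Fin k ⊕ Fin (n - k)), ((e j : Fin n) : ℕ) < k ↔ ∃ j₀, j = Sum.inl j₀ := by
    rintro (j₀ | j₀) <;> simp [e, finCongr] <;> omega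
  let b' := b.reindex e
  let c' := c.reindex e
  have hmat : LinearMap.toMatrix b' c' f
      = Matrix.diagonal fun i : Fin n => if (i : ℕ) < k then (1 : F) else 0 := by
    ext i j
    rw [LinearMap.toMatrix_apply]
    rw [Basis.reindex_apply, Basis.repr_reindex_apply]
    rcases hj : e.symm j with j₀ | j₀
    · rw [hfb_inl j₀]
      rw [Basis.repr_self]
      have hj' : j = e (Sum.inl j₀) := by rw [← hj, Equiv.apply_symm_apply]
      have hjk : (j : ℕ) < k := by rw [hj']; exact (he_lt _).2 ⟨j₀, rfl⟩
      by_cases hij : i = j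
      · subst hij
        rw [hj, Finsupp.single_eq_same]
        simp [Matrix.diagonal_apply_eq, hjk]
      · have : e.symm i ≠ Sum.inl j₀ := by
          rw [← hj]; exact fun h => hij (e.symm.injective h)
        rw [Finsupp.single_eq_of_ne' (Ne.symm this)]
        simp [Matrix.diagonal_apply_ne _ hij]
    · rw [hfb_inr j₀]
      have hjk : ¬ (j : ℕ) < k := by
        intro h
        obtain ⟨j₁, hj₁⟩ := (he_lt (e.symm j)).1 (by rwa [Equiv.apply_symm_apply])
        rw [hj] at hj₁; exact absurd hj₁ (by simp)
      rw [map_zero]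
      by_cases hij : i = j
      · subst hij; simp [Matrix.diagonal_apply_eq, hjk]
      · simp [Matrix.diagonal_apply_ne _ hij]
  -- assemble
  let std : Basis (Fin n) F (Fin n → F) := Pi.basisFun F (Fin n)
  have hstd : LinearMap.toMatrix std std f = A := by
    have : f = Matrix.toLin std std A := by
      rw [Matrix.toLin_eq_toLin', Matrix.toLin'_apply']
    rw [this, LinearMap.toMatrix_toLin]
  refine ⟨std.toMatrix c', b'.toMatrix std, ?_, ?_, ?_⟩
  · have := std.invertibleToMatrix c'
    exact isUnit_of_invertible _
  · have := b'.invertibleToMatrix std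
    exact isUnit_of_invertible _
  · rw [← hmat, basis_toMatrix_mul_linearMap_toMatrix_mul_basis_toMatrix, hstd]

end Aux

theorem stmt0 (F : Type*) [Field F] [Fintype F] (q : ℕ) (hq : Fintype.card F = q)
    (n r k : ℕ) (hn : 0 < n) (hr : r ≤ n) (hk1 : 1 ≤ k) (hkn : k ≤ n)
    (A : Matrix (Fin n) (Fin n) F) (hA : A.rank = k) (α : F) :
    Nat.card {X : Matrix (Fin n) (Fin n) F // X.rank = r ∧ Matrix.trace (A * X) = α}
      = fcard F n r k α := by
  classical
  obtain ⟨P, Q, hP, hQ, hAeq⟩ := exists_rank_decomp hkn A hA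
  set E : Matrix (Fin n) (Fin n) F :=
    Matrix.diagonal fun i : Fin n => if (i : ℕ) < k then (1 : F) else 0 with hE
  have hPd : IsUnit P.det := (Matrix.isUnit_iff_isUnit_det P).1 hP
  have hQd : IsUnit Q.det := (Matrix.isUnit_iff_isUnit_det Q).1 hQ
  have hktr : ∀ Y : Matrix (Fin n) (Fin n) F,
      Matrix.trace (E * Y) = ∑ i ∈ Finset.univ.filter (fun i : Fin n => (i : ℕ) < k), Y i i := by
    intro Y
    rw [Finset.sum_filter, Matrix.trace]
    refine Finset.sum_congr rfl fun i _ => ?_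
    rw [Matrix.diag_apply, hE, Matrix.diagonal_mul]
    split <;> simp
  have htr : ∀ X : Matrix (Fin n) (Fin n) F,
      Matrix.trace (A * X) = Matrix.trace (E * (Q * X * P)) := by
    intro X
    rw [hAeq]
    rw [show P * E * Q * X = P * (E * Q * X) by simp [Matrix.mul_assoc], Matrix.trace_mul_comm]
    congr 1
    simp [Matrix.mul_assoc]
  have hrank : ∀ X : Matrix (Fin n) (Fin n) F, (Q * X * P).rank = X.rank := by
    intro X
    rw [Matrix.rank_mul_eq_left_of_isUnit_det P (Q * X) hPd,
      Matrix.rank_mul_eq_right_of_isUnit_det Q X hQd]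
  rw [fcard]
  refine Nat.card_congr ?_
  refine Equiv.ofBijective (fun X => ⟨Q * X.1 * P, ?_, ?_⟩) ⟨?_, ?_⟩
  · rw [hrank]; exact X.2.1
  · rw [← hktr, ← htr]; exact X.2.2
  · rintro ⟨X, hX⟩ ⟨Y, hY⟩ h
    simp only [Subtype.mk.injEq] at h ⊢
    have hcan : ∀ M : Matrix (Fin n) (Fin n) F, Q⁻¹ * (Q * M * P) * P⁻¹ = M := by
      intro M
      rw [show Q⁻¹ * (Q * M * P) = (Q⁻¹ * Q) * (M * P) by simp [Matrix.mul_assoc],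
        Matrix.nonsing_inv_mul _ hQd, Matrix.one_mul, Matrix.mul_assoc,
        Matrix.mul_nonsing_inv _ hPd, Matrix.mul_one]
    rw [← hcan X, ← hcan Y, h]
  · rintro ⟨Y, hY1, hY2⟩
    refine ⟨⟨Q⁻¹ * Y * P⁻¹, ?_, ?_⟩, ?_⟩
    · rw [show Q⁻¹ * Y * P⁻¹ = Q⁻¹ * (Y * P⁻¹) from Matrix.mul_assoc _ _ _,
        Matrix.rank_mul_eq_right_of_isUnit_det Q⁻¹ _ ((Matrix.isUnit_nonsing_inv_det _ hQd)),
        Matrix.rank_mul_eq_left_of_isUnit_det P⁻¹ Y (Matrix.isUnit_nonsing_inv_det _ hPd)]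
      exact hY1
    · rw [htr]
      have : Q * (Q⁻¹ * Y * P⁻¹) * P = Y := by
        rw [← Matrix.mul_assoc, ← Matrix.mul_assoc, Matrix.mul_nonsing_inv _ hQd, Matrix.one_mul,
          Matrix.mul_assoc, Matrix.nonsing_inv_mul _ hPd, Matrix.mul_one]
      rw [this, hktr]
      exact hY2
    · apply Subtype.ext
      simp only
      rw [← Matrix.mul_assoc, ← Matrix.mul_assoc, Matrix.mul_nonsing_inv _ hQd, Matrix.one_mul,
        Matrix.mul_assoc, Matrix.nonsing_inv_mul _ hPd, Matrix.mul_one]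
end

section
/- Let F be a finite field with q elements, let k be a positive integer, set n = k+1, and let 0 ≤ r ≤ k. Then f^0_{k+1,r,k} − f^1_{k+1,r,k} = (−1)^{r} · q^{binom(r,2)} · [k choose k−r]_q · ((q^{k−r+2} − 1) + q^{k+1}(1 − q))/(q^{k+1−r} − 1); equivalently, (q^{k+1−r} − 1)·(f^0_{k+1,r,k} − f^1_{k+1,r,k}) = (−1)^{r} · q^{binom(r,2)} · [k choose r]_q · ((q^{k−r+2} − 1) + q^{k+1}(1 − q)). -/
open Matrix Finset

/-- The Gaussian binomial coefficient `[n choose r]_q`, as a rational number. -/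
def gaussBinom (q n r : ℕ) : ℚ :=
  if r ≤ n then ∏ j ∈ Finset.range r, (((q : ℚ) ^ (n - j) - 1) / ((q : ℚ) ^ (r - j) - 1))
  else 0

namespace QAux

variable (q : ℕ)

/-- q-factorial-ish product -/
def pp (q : ℕ) : ℕ → ℚ := fun m => ∏ i ∈ Finset.range m, ((q : ℚ) ^ (i + 1) - 1)

lemma pp_zero : pp q 0 = 1 := by simp [pp]

lemma pp_succ (m : ℕ) : pp q (m + 1) = pp q m * ((q : ℚ) ^ (m + 1) - 1) := by
  simp [pp, Finset.prod_range_succ]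

variable (hq : 2 ≤ q)
include hq

lemma one_lt_qpow {m : ℕ} (hm : 1 ≤ m) : (1 : ℚ) < (q : ℚ) ^ m := by
  have : (2:ℚ) ≤ (q:ℚ) := by exact_mod_cast hq
  calc (1:ℚ) < 2 ^ m := by
        have : (1:ℚ) = 2 ^ 0 := by norm_num
        rw [this]; exact pow_lt_pow_right₀ (by norm_num) (by omega)
    _ ≤ (q:ℚ) ^ m := by
        apply pow_le_pow_left₀ (by norm_num) this

lemma pp_pos (m : ℕ) : 0 < pp q m := by
  induction m with
  | zero => simp [pp_zero]
  | succ n ih =>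
    rw [pp_succ]
    have := one_lt_qpow q hq (m := n+1) (by omega)
    nlinarith

lemma pp_ne (m : ℕ) : pp q m ≠ 0 := ne_of_gt (pp_pos q hq m)

lemma qpow_sub_one_ne {m : ℕ} (hm : 1 ≤ m) : (q:ℚ) ^ m - 1 ≠ 0 := by
  have := one_lt_qpow q hq hm; linarith

lemma prod_top (r n : ℕ) (h : r ≤ n) :
    pp q n = pp q (n - r) * ∏ j ∈ Finset.range r, ((q : ℚ) ^ (n - j) - 1) := by
  induction r with
  | zero => simp
  | succ t ih =>
    rw [Finset.prod_range_succ]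
    have h1 : n - t = (n - (t+1)) + 1 := by omega
    have h2 : pp q (n - t) = pp q (n - (t+1)) * ((q:ℚ) ^ (n - t) - 1) := by
      rw [h1, pp_succ, ← h1]
    rw [ih (by omega), h2]; ring

lemma gaussBinom_eq_pp {n r : ℕ} (h : r ≤ n) :
    gaussBinom q n r = pp q n / (pp q r * pp q (n - r)) := by
  rw [gaussBinom, if_pos h, Finset.prod_div_distrib]
  have h1 : ∏ j ∈ Finset.range r, ((q : ℚ) ^ (n - j) - 1) = pp q n / pp q (n - r) := by
    rw [eq_div_iff (pp_ne q hq _), mul_comm]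
    exact (prod_top q hq r n h).symm
  have h2 : ∏ j ∈ Finset.range r, ((q : ℚ) ^ (r - j) - 1) = pp q r := by
    have := prod_top q hq r r le_rfl
    simp only [Nat.sub_self, pp_zero, one_mul] at this
    exact this.symm
  rw [h1, h2]
  rw [div_mul_eq_div_div]
  ring

end QAux

namespace QAux
variable (q : ℕ) (hq : 2 ≤ q)
include hq

lemma gb_zero_right (n : ℕ) : gaussBinom q n 0 = 1 := by
  simp [gaussBinom]

omit hq in
lemma gb_of_gt {n r : ℕ} (h : n < r) : gaussBinom q n r = 0 := by
  rw [gaussBinom, if_neg (by omega)]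

lemma gb_pos {n r : ℕ} (h : r ≤ n) : 0 < gaussBinom q n r := by
  rw [gaussBinom_eq_pp q hq h]
  exact div_pos (pp_pos q hq _) (mul_pos (pp_pos q hq _) (pp_pos q hq _))

lemma gb_diag (n : ℕ) : gaussBinom q n n = 1 := by
  rw [gaussBinom_eq_pp q hq le_rfl]
  simp [pp_zero]
  exact pp_ne q hq n

lemma pascal1' (i m : ℕ) :
    gaussBinom q (i+m+1) (i+1)
      = gaussBinom q (i+m) i + (q:ℚ)^(i+1) * gaussBinom q (i+m) (i+1) := by
  cases m with
  | zero =>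
    simp only [Nat.add_zero]
    rw [gb_diag q hq, gb_diag q hq, gb_of_gt q (by omega)]
    ring
  | succ m' =>
    rw [gaussBinom_eq_pp q hq (by omega), gaussBinom_eq_pp q hq (by omega),
      gaussBinom_eq_pp q hq (by omega)]
    rw [show i + (m'+1) + 1 - (i+1) = m' + 1 from by omega,
      show i + (m'+1) - i = m' + 1 from by omega,
      show i + (m'+1) - (i+1) = m' from by omega,
      show i + (m'+1) + 1 = (i + m' + 1) + 1 from by omega,
      show i + (m'+1) = i + m' + 1 from by omega]
    rw [pp_succ q (i+m'+1), pp_succ q i, pp_succ q m']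
    have e1 : (q:ℚ) ^ (i + m' + 1 + 1) = (q:ℚ)^(i+1) * (q:ℚ)^(m'+1) := by
      rw [← pow_add]; congr 1; omega
    have n1 := pp_ne q hq i
    have n2 := pp_ne q hq m'
    have n3 := pp_ne q hq (i + m' + 1)
    have n4 := qpow_sub_one_ne q hq (m := i + 1) (by omega)
    have n5 := qpow_sub_one_ne q hq (m := m' + 1) (by omega)
    field_simp
    rw [e1]; ring
  
lemma pascal2' (i m : ℕ) :
    gaussBinom q (i+m+1) (i+1)
      = gaussBinom q (i+m) (i+1) + (q:ℚ)^m * gaussBinom q (i+m) i := by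
  cases m with
  | zero =>
    simp only [Nat.add_zero, pow_zero]
    rw [gb_diag q hq, gb_diag q hq, gb_of_gt q (by omega)]
    ring
  | succ m' =>
    rw [gaussBinom_eq_pp q hq (by omega), gaussBinom_eq_pp q hq (by omega),
      gaussBinom_eq_pp q hq (by omega)]
    rw [show i + (m'+1) + 1 - (i+1) = m' + 1 from by omega,
      show i + (m'+1) - i = m' + 1 from by omega,
      show i + (m'+1) - (i+1) = m' from by omega,
      show i + (m'+1) + 1 = (i + m' + 1) + 1 from by omega,
      show i + (m'+1) = i + m' + 1 from by omega]
    rw [pp_succ q (i+m'+1), pp_succ q i, pp_succ q m']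
    have e1 : (q:ℚ) ^ (i + m' + 1 + 1) = (q:ℚ)^(i+1) * (q:ℚ)^(m'+1) := by
      rw [← pow_add]; congr 1; omega
    have e2 : (q:ℚ) ^ (m'+1) = (q:ℚ)^(m') * (q:ℚ) := by rw [← pow_succ]
    have n1 := pp_ne q hq i
    have n2 := pp_ne q hq m'
    have n3 := pp_ne q hq (i + m' + 1)
    have n4 := qpow_sub_one_ne q hq (m := i + 1) (by omega)
    have n5 := qpow_sub_one_ne q hq (m := m' + 1) (by omega)
    field_simp
    rw [e1, e2]; ring

lemma pascal2 (s i : ℕ) (h : i ≤ s) :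
    gaussBinom q (s+1) (i+1)
      = gaussBinom q s (i+1) + (q:ℚ)^(s-i) * gaussBinom q s i := by
  have := pascal2' q hq i (s - i)
  rw [show i + (s - i) = s from by omega] at this
  exact this

/-- coefficient in the alternating sum -/
noncomputable def ac (q : ℕ) : ℕ → ℚ := fun j => (-1 : ℚ)^j * (q:ℚ)^(j.choose 2)

lemma ac_succ (i : ℕ) : ac q (i+1) = -((q:ℚ)^i * ac q i) := by
  unfold ac
  rw [show (i+1).choose 2 = i + i.choose 2 from by
    rw [Nat.choose_succ_succ i 1, Nat.choose_one_right]]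
  rw [pow_add, pow_succ]
  ring

noncomputable def Asum (q s : ℕ) : ℚ :=
  ∑ j ∈ Finset.range (s+1), ac q j * gaussBinom q s j

omit hq in
lemma Asum_zero : Asum q 0 = 1 := by
  simp [Asum, ac, gaussBinom]

lemma Asum_succ (s : ℕ) : Asum q (s+1) = (1 - (q:ℚ)^s) * Asum q s := by
  unfold Asum
  rw [Finset.sum_range_succ' (fun j => ac q j * gaussBinom q (s+1) j)]
  have h0 : ac q 0 * gaussBinom q (s+1) 0 = 1 := by
    simp [ac, gb_zero_right q hq]
  rw [h0]
  have hcong : ∀ i ∈ Finset.range (s+1),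
      ac q (i+1) * gaussBinom q (s+1) (i+1)
        = ac q (i+1) * gaussBinom q s (i+1) + (-(q:ℚ)^s) * (ac q i * gaussBinom q s i) := by
    intro i hi
    rw [Finset.mem_range] at hi
    rw [pascal2 q hq s i (by omega), ac_succ q hq i]
    have : (q:ℚ)^i * (q:ℚ)^(s-i) = (q:ℚ)^s := by
      rw [← pow_add]; congr 1; omega
    linear_combination (-(ac q i * gaussBinom q s i)) * this
  rw [Finset.sum_congr rfl hcong, Finset.sum_add_distrib]
  have h1 : ∑ i ∈ Finset.range (s+1), ac q (i+1) * gaussBinom q s (i+1)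
      = ∑ i ∈ Finset.range s, ac q (i+1) * gaussBinom q s (i+1) := by
    rw [Finset.sum_range_succ, gb_of_gt q (by omega), mul_zero, add_zero]
  rw [h1, ← Finset.mul_sum]
  have h2 : ∑ j ∈ Finset.range (s+1), ac q j * gaussBinom q s j
      = ∑ i ∈ Finset.range s, ac q (i+1) * gaussBinom q s (i+1)
        + ac q 0 * gaussBinom q s 0 := by
    rw [Finset.sum_range_succ' (fun j => ac q j * gaussBinom q s j)]
  have h3 : ac q 0 * gaussBinom q s 0 = 1 := by simp [ac, gb_zero_right q hq]
  rw [h3] at h2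
  linear_combination (-1 : ℚ) * h2

lemma Asum_eq_zero {s : ℕ} (h : 1 ≤ s) : Asum q s = 0 := by
  induction s with
  | zero => omega
  | succ t ih =>
    rw [Asum_succ q hq]
    rcases Nat.eq_zero_or_pos t with h'|h'
    · subst h'; rw [Asum_zero]; norm_num
    · rw [ih h']; ring

end QAux

namespace QAux

open Finset Module

variable {F : Type*} [Field F] [Fintype F]
variable {W : Type*} [AddCommGroup W] [Module F W] [Fintype W]

/-- number of linearly independent `j`-tuples -/
lemma card_linInd (j : ℕ) :
    Nat.card {v : Fin j → W // LinearIndependent F v}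
      = ∏ i ∈ Finset.range j, (Fintype.card W - Fintype.card F ^ i) := by
  classical
  induction j with
  | zero =>
    rw [Finset.prod_range_zero]
    have : ∀ v : Fin 0 → W, LinearIndependent F v := fun v =>
      linearIndependent_empty_type
    rw [Nat.card_eq_fintype_card, Fintype.card_subtype]
    simp [Finset.filter_true_of_mem (fun v _ => this v)]
  | succ j ih =>
    rw [Finset.prod_range_succ, ← ih]
    rw [Nat.card_eq_fintype_card, Nat.card_eq_fintype_card,
      Fintype.card_subtype, Fintype.card_subtype]
    rw [Finset.card_eq_sum_card_fiberwise
      (f := fun v : Fin (j+1) → W => Fin.init v)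
      (t := Finset.univ.filter (fun v : Fin j → W => LinearIndependent F v))
      (by
        intro v hv
        simp only [Finset.mem_coe, Finset.mem_filter, Finset.mem_univ, true_and] at hv ⊢
        exact (linearIndependent_fin_succ'.1 hv).1)]
    rw [Finset.sum_congr rfl (g := fun _ => Fintype.card W - Fintype.card F ^ j)
      ?_, Finset.sum_const, smul_eq_mul]
    intro u hu
    simp only [Finset.mem_filter, Finset.mem_univ, true_and] at hu
    -- fiber over u has card |W| - q^j
    have hbij : (Finset.univ.filter (fun v : Fin (j+1) → W =>
          LinearIndependent F v ∧ Fin.init v = u)).card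
        = (Finset.univ.filter (fun x : W =>
            x ∉ Submodule.span F (Set.range u))).card := by
      apply Finset.card_bij (fun v _ => v (Fin.last j))
      · intro v hv
        simp only [Finset.mem_filter, Finset.mem_univ, true_and] at hv ⊢
        obtain ⟨h1, h2⟩ := hv
        have := (linearIndependent_fin_succ'.1 h1).2
        rwa [h2] at this
      · intro v hv v' hv' h
        simp only [Finset.mem_filter, Finset.mem_univ, true_and] at hv hv'
        have : Fin.snoc (Fin.init v) (v (Fin.last j))
            = Fin.snoc (Fin.init v') (v' (Fin.last j)) := by
          rw [hv.2, hv'.2, h]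
        rwa [Fin.snoc_init_self, Fin.snoc_init_self] at this
      · intro x hx
        simp only [Finset.mem_filter, Finset.mem_univ, true_and] at hx
        refine ⟨Fin.snoc u x, ?_, ?_⟩
        · simp only [Finset.mem_filter, Finset.mem_univ, true_and]
          constructor
          · exact linearIndependent_fin_snoc.2 ⟨hu, hx⟩
          · exact Fin.init_snoc ..
        · exact Fin.snoc_last ..
    have hcompl : (Finset.univ.filter (fun x : W =>
          x ∉ Submodule.span F (Set.range u))).card
        = Fintype.card W - Fintype.card F ^ j := by
      have h1 : (Finset.univ.filter (fun x : W =>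
            x ∈ Submodule.span F (Set.range u))).card
          = Fintype.card F ^ j := by
        rw [← Fintype.card_subtype]
        have : Fintype.card {x : W // x ∈ Submodule.span F (Set.range u)}
            = Fintype.card (Submodule.span F (Set.range u)) := rfl
        rw [this, card_eq_pow_finrank (K := F), finrank_span_eq_card hu,
          Fintype.card_fin]
      have h2 := Finset.card_filter_add_card_filter_not
        (s := (Finset.univ : Finset W))
        (p := fun x : W => x ∈ Submodule.span F (Set.range u))
      rw [Finset.card_univ] at h2
      omega
    rw [Finset.filter_filter, hbij, hcompl]
  
end QAux

namespace QAux

open Finset Module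

variable {F : Type*} [Field F] [Fintype F]
variable {W : Type*} [AddCommGroup W] [Module F W] [Fintype W]

lemma card_linInd_span_eq (j : ℕ) (U : Submodule F W) (hU : finrank F U = j) :
    Nat.card {v : Fin j → W // LinearIndependent F v
        ∧ Submodule.span F (Set.range v) = U}
      = ∏ i ∈ Finset.range j, (Fintype.card F ^ j - Fintype.card F ^ i) := by
  classical
  have key : Nat.card {v : Fin j → W // LinearIndependent F v
        ∧ Submodule.span F (Set.range v) = U}
      = Nat.card {v : Fin j → ↥U // LinearIndependent F v} := by
    apply Nat.card_congr
    refine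
      { toFun := fun v => ⟨fun i => ⟨v.1 i, by
          have h := Submodule.subset_span (R := F) (s := Set.range v.1) ⟨i, rfl⟩
          rw [v.2.2] at h; exact h⟩, ?_⟩
        invFun := fun u => ⟨fun i => (u.1 i : W), ?_, ?_⟩
        left_inv := fun v => Subtype.ext (funext fun i => rfl)
        right_inv := fun u => Subtype.ext (funext fun i => Subtype.ext rfl) }
    · -- lifted family is independent
      exact LinearIndependent.of_comp U.subtype (by
        convert v.2.1 using 1; rfl)
    · exact (LinearMap.linearIndependent_iff U.subtype (Submodule.ker_subtype U)).2 u.2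
    · -- span condition
      have h1 : Set.range (fun i => (u.1 i : W)) = U.subtype '' (Set.range u.1) := by
        rw [← Set.range_comp]; rfl
      rw [h1, Submodule.span_image]
      have h2 : Submodule.span F (Set.range u.1) = ⊤ := by
        apply Submodule.eq_top_of_finrank_eq
        rw [finrank_span_eq_card u.2, Fintype.card_fin, hU]
      rw [h2, Submodule.map_subtype_top]
  rw [key, card_linInd]
  congr 1
  ext i
  congr 1
  rw [card_eq_pow_finrank (K := F) (V := ↥U), hU]

/-- The number of `j`-dimensional subspaces of a finite `F`-vector space `W`,
as a product identity. -/
lemma card_submodule_mul (j : ℕ) :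
    Nat.card {U : Submodule F W // finrank F U = j}
        * ∏ i ∈ Finset.range j, (Fintype.card F ^ j - Fintype.card F ^ i)
      = ∏ i ∈ Finset.range j, (Fintype.card W - Fintype.card F ^ i) := by
  classical
  rw [← card_linInd (F := F) (W := W) j]
  rw [Nat.card_eq_fintype_card, Nat.card_eq_fintype_card,
    Fintype.card_subtype, Fintype.card_subtype]
  rw [Finset.card_eq_sum_card_fiberwise
    (f := fun v : Fin j → W => Submodule.span F (Set.range v))
    (t := Finset.univ.filter (fun U : Submodule F W => finrank F U = j))
    (by
      intro v hv
      simp only [Finset.mem_coe, Finset.mem_filter, Finset.mem_univ, true_and] at hv ⊢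
      rw [finrank_span_eq_card hv, Fintype.card_fin])]
  rw [Finset.sum_congr rfl
    (g := fun _ => ∏ i ∈ Finset.range j, (Fintype.card F ^ j - Fintype.card F ^ i))
    ?_, Finset.sum_const, smul_eq_mul, mul_comm]
  intro U hU
  simp only [Finset.mem_filter, Finset.mem_univ, true_and] at hU
  rw [← card_linInd_span_eq j U hU, Nat.card_eq_fintype_card, Fintype.card_subtype,
    Finset.filter_filter]

end QAux

namespace QAux

open Finset Module

variable (q : ℕ)

lemma sum_range_id_choose (j : ℕ) : ∑ i ∈ Finset.range j, i = j.choose 2 := by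
  induction j with
  | zero => rfl
  | succ t ih =>
    have h2 : (t+1).choose 2 = t.choose 1 + t.choose 2 := Nat.choose_succ_succ t 1
    rw [Finset.sum_range_succ, ih, h2, Nat.choose_one_right]
    omega

variable (hq : 2 ≤ q)
include hq

lemma prod_qpow_sub (a j : ℕ) (h : j ≤ a) :
    ∏ i ∈ Finset.range j, ((q:ℚ)^a - (q:ℚ)^i)
      = (q:ℚ)^(j.choose 2) * (pp q a / pp q (a - j)) := by
  have step : ∀ i ∈ Finset.range j,
      (q:ℚ)^a - (q:ℚ)^i = (q:ℚ)^i * ((q:ℚ)^(a-i) - 1) := by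
    intro i hi
    rw [Finset.mem_range] at hi
    rw [mul_sub, mul_one, ← pow_add]
    congr 2
    omega
  rw [Finset.prod_congr rfl step, Finset.prod_mul_distrib,
    Finset.prod_pow_eq_pow_sum, sum_range_id_choose]
  congr 1
  rw [eq_div_iff (pp_ne q hq _), mul_comm]
  exact (prod_top q hq j a h).symm

variable {F : Type*} [Field F] [Fintype F]
variable {W : Type*} [AddCommGroup W] [Module F W] [Fintype W]

lemma card_submodule_rat (hqc : Fintype.card F = q) {s : ℕ} (hs : finrank F W = s)
    (j : ℕ) :
    (Nat.card {U : Submodule F W // finrank F U = j} : ℚ) = gaussBinom q s j := by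
  classical
  rw [Nat.card_eq_fintype_card]
  rcases le_or_gt j s with h | h
  · have key := card_submodule_mul (F := F) (W := W) j
    have hW : Fintype.card W = q ^ s := by
      rw [card_eq_pow_finrank (K := F) (V := W), hqc, hs]
    have cast1 : ((∏ i ∈ Finset.range j,
        (Fintype.card F ^ j - Fintype.card F ^ i) : ℕ) : ℚ)
        = ∏ i ∈ Finset.range j, ((q:ℚ)^j - (q:ℚ)^i) := by
      rw [Nat.cast_prod]
      apply Finset.prod_congr rfl
      intro i hi
      rw [Finset.mem_range] at hi
      rw [Nat.cast_sub (Nat.pow_le_pow_right (by omega) (by omega))]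
      push_cast [hqc]
      ring
    have cast2 : ((∏ i ∈ Finset.range j,
        (Fintype.card W - Fintype.card F ^ i) : ℕ) : ℚ)
        = ∏ i ∈ Finset.range j, ((q:ℚ)^s - (q:ℚ)^i) := by
      rw [Nat.cast_prod]
      apply Finset.prod_congr rfl
      intro i hi
      rw [Finset.mem_range] at hi
      rw [Nat.cast_sub (by
        rw [hW, hqc]
        exact Nat.pow_le_pow_right (by omega) (by omega)), hW]
      push_cast [hqc]
      ring
    have keyq : (Nat.card {U : Submodule F W // finrank F U = j} : ℚ)
        * ∏ i ∈ Finset.range j, ((q:ℚ)^j - (q:ℚ)^i)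
        = ∏ i ∈ Finset.range j, ((q:ℚ)^s - (q:ℚ)^i) := by
      rw [← cast1, ← cast2, ← Nat.cast_mul, key]
    rw [prod_qpow_sub q hq j j le_rfl, prod_qpow_sub q hq s j h] at keyq
    rw [gaussBinom_eq_pp q hq h]
    have hpj := pp_ne q hq j
    have hpsj := pp_ne q hq (s - j)
    have hps := pp_ne q hq s
    have hqp : ((q:ℚ))^(j.choose 2) ≠ 0 := by
      positivity
    rw [Nat.sub_self, pp_zero] at keyq
    field_simp at keyq
    rw [eq_div_iff (mul_ne_zero hpj hpsj)]
    have key2 : (q:ℚ)^(j.choose 2) * ((Fintype.card {U : Submodule F W // finrank F U = j} : ℚ)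
        * (pp q j * pp q (s - j))) = (q:ℚ)^(j.choose 2) * pp q s := by
      rw [Nat.card_eq_fintype_card] at keyq
      linear_combination (q:ℚ)^(j.choose 2) * keyq
    exact mul_left_cancel₀ hqp key2
  · have : IsEmpty {U : Submodule F W // finrank F U = j} := by
      constructor
      rintro ⟨U, hU⟩
      have : finrank F U ≤ finrank F W := Submodule.finrank_le U
      omega
    rw [Fintype.card_eq_zero, gb_of_gt q (by omega)]
    norm_num

end QAux

namespace QAux

open Finset Module

variable {F : Type*} [Field F] [Fintype F]
variable {W : Type*} [AddCommGroup W] [Module F W] [Fintype W]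

/-- subspaces of `V` inside `W` vs submodules of `↥V` -/
lemma card_le_finrank (V : Submodule F W) (j : ℕ) :
    Nat.card {U : Submodule F W // U ≤ V ∧ finrank F U = j}
      = Nat.card {U' : Submodule F ↥V // finrank F U' = j} := by
  apply Nat.card_congr
  refine
    { toFun := fun U => ⟨Submodule.comap V.subtype U.1, ?_⟩
      invFun := fun U' => ⟨Submodule.map V.subtype U'.1, ?_, ?_⟩
      left_inv := fun U => Subtype.ext (by
        dsimp only
        rw [Submodule.map_comap_subtype, inf_eq_right.2 U.2.1])
      right_inv := fun U' => Subtype.ext (by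
        dsimp only
        rw [Submodule.comap_map_eq, Submodule.ker_subtype, sup_bot_eq]) }
  · -- finrank comap = j
    have e := Submodule.comapSubtypeEquivOfLe U.2.1
    rw [LinearEquiv.finrank_eq e, U.2.2]
  · exact Submodule.map_subtype_le V U'.1
  · rw [Submodule.finrank_map_subtype_eq]; exact U'.2

lemma finrank_comap_mkQ (p : Submodule F W) (U' : Submodule F (W ⧸ p)) :
    finrank F (Submodule.comap p.mkQ U') = finrank F p + finrank F U' := by
  set Q := Submodule.comap p.mkQ U' with hQ
  have hpQ : p ≤ Q := by
    intro x hx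
    simp only [hQ, Submodule.mem_comap, Submodule.mkQ_apply]
    rw [(Submodule.Quotient.mk_eq_zero p).2 hx]
    exact zero_mem _
  have h1 := LinearMap.finrank_range_add_finrank_ker (p.mkQ.comp Q.subtype)
  have hrange : LinearMap.range (p.mkQ.comp Q.subtype) = U' := by
    rw [LinearMap.range_comp, Submodule.range_subtype, hQ,
      Submodule.map_comap_eq, Submodule.range_mkQ, top_inf_eq]
  have hker : finrank F (LinearMap.ker (p.mkQ.comp Q.subtype)) = finrank F p := by
    rw [LinearMap.ker_comp, Submodule.ker_mkQ]
    exact (LinearEquiv.finrank_eq (Submodule.comapSubtypeEquivOfLe hpQ))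
  rw [hrange, hker] at h1
  rw [h1.symm, add_comm]

lemma card_above (p : Submodule F W) (j : ℕ) :
    Nat.card {U : Submodule F W // p ≤ U ∧ finrank F U = finrank F p + j}
      = Nat.card {U' : Submodule F (W ⧸ p) // finrank F U' = j} := by
  apply Nat.card_congr
  refine
    { toFun := fun U => ⟨Submodule.map p.mkQ U.1, ?_⟩
      invFun := fun U' => ⟨Submodule.comap p.mkQ U'.1, ?_, ?_⟩
      left_inv := fun U => Subtype.ext (by
        dsimp only
        rw [Submodule.comap_map_eq, Submodule.ker_mkQ, sup_eq_left.2 U.2.1])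
      right_inv := fun U' => Subtype.ext (by
        dsimp only
        rw [Submodule.map_comap_eq, Submodule.range_mkQ, top_inf_eq]) }
  · -- finrank of map
    have hcm : Submodule.comap p.mkQ (Submodule.map p.mkQ U.1) = U.1 := by
      rw [Submodule.comap_map_eq, Submodule.ker_mkQ, sup_eq_left.2 U.2.1]
    have := finrank_comap_mkQ p (Submodule.map p.mkQ U.1)
    rw [hcm, U.2.2] at this
    omega
  · -- p ≤ comap
    intro x hx
    simp only [Submodule.mem_comap, Submodule.mkQ_apply]
    rw [(Submodule.Quotient.mk_eq_zero p).2 hx]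
    exact zero_mem _
  · rw [finrank_comap_mkQ p U'.1, U'.2]

variable (q : ℕ) (hq : 2 ≤ q) (hqc : Fintype.card F = q)
include hq hqc

lemma card_le_rat (V : Submodule F W) (j : ℕ) :
    (Nat.card {U : Submodule F W // U ≤ V ∧ finrank F U = j} : ℚ)
      = gaussBinom q (finrank F V) j := by
  classical
  rw [card_le_finrank]
  exact card_submodule_rat q hq hqc rfl j

lemma card_between_rat (p V : Submodule F W) (hpV : p ≤ V) (hp1 : finrank F p = 1)
    (j : ℕ) :
    (Nat.card {U : Submodule F W // U ≤ V ∧ p ≤ U ∧ finrank F U = j + 1} : ℚ)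
      = gaussBinom q (finrank F V - 1) j := by
  classical
  -- step 1: transfer to ↥V
  set p' : Submodule F ↥V := Submodule.comap V.subtype p with hp'
  have hp'1 : finrank F p' = 1 := by
    rw [hp', LinearEquiv.finrank_eq (Submodule.comapSubtypeEquivOfLe hpV), hp1]
  have step1 : Nat.card {U : Submodule F W // U ≤ V ∧ p ≤ U ∧ finrank F U = j + 1}
      = Nat.card {U' : Submodule F ↥V // p' ≤ U' ∧ finrank F U' = j + 1} := by
    apply Nat.card_congr
    refine
      { toFun := fun U => ⟨Submodule.comap V.subtype U.1, ?_, ?_⟩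
        invFun := fun U' => ⟨Submodule.map V.subtype U'.1, ?_, ?_, ?_⟩
        left_inv := fun U => Subtype.ext (by
          dsimp only
          rw [Submodule.map_comap_subtype, inf_eq_right.2 U.2.1])
        right_inv := fun U' => Subtype.ext (by
          dsimp only
          rw [Submodule.comap_map_eq, Submodule.ker_subtype, sup_bot_eq]) }
    · exact Submodule.comap_mono U.2.2.1
    · rw [LinearEquiv.finrank_eq (Submodule.comapSubtypeEquivOfLe U.2.1), U.2.2.2]
    · exact Submodule.map_subtype_le V U'.1
    · -- p ≤ map subtype U'
      have : p = Submodule.map V.subtype p' := by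
        rw [hp', Submodule.map_comap_subtype, inf_eq_right.2 hpV]
      rw [this]
      exact Submodule.map_mono U'.2.1
    · rw [Submodule.finrank_map_subtype_eq]; exact U'.2.2
  have step2 := card_above (W := ↥V) p' j
  rw [hp'1, show (1 + j) = j + 1 from Nat.add_comm 1 j] at step2
  letI : Fintype (↥V ⧸ p') := Fintype.ofFinite _
  have hfr : finrank F (↥V ⧸ p') = finrank F V - 1 := by
    have := Submodule.finrank_quotient_add_finrank p'
    rw [hp'1] at this
    omega
  rw [step1, step2]
  exact card_submodule_rat q hq hqc hfr j

end QAux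

namespace QAux

open Finset Module Matrix

attribute [local instance] Classical.propDecidable

variable {F : Type*} [Field F] [Fintype F] (k : ℕ)

instance : Finite (Submodule F (Fin (k+1) → F)) :=
  Finite.of_injective (fun U => (U : Set (Fin (k+1) → F))) SetLike.coe_injective

noncomputable instance : Fintype (Submodule F (Fin (k+1) → F)) := Fintype.ofFinite _

variable {k}

/-- the k-trace -/
def trk (X : Matrix (Fin (k+1)) (Fin (k+1)) F) : F :=
  ∑ i ∈ Finset.univ.filter (fun i : Fin (k+1) => (i : ℕ) < k), X i i

lemma trk_add (X Y : Matrix (Fin (k+1)) (Fin (k+1)) F) :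
    trk (X + Y) = trk X + trk Y := by
  unfold trk
  rw [← Finset.sum_add_distrib]
  rfl

variable (F k) in
/-- the distinguished vector -/
def w0 : Fin (k+1) → F := Pi.single (Fin.last k) (1 : F)

variable (F k) in
/-- the distinguished line -/
def W0 : Submodule F (Fin (k+1) → F) :=
  Submodule.span F {w0 F k}

lemma w0_ne_zero : w0 F k ≠ 0 := by
  intro h
  have := congr_fun h (Fin.last k)
  simp [w0] at this

lemma W0_ne_bot : W0 F k ≠ ⊥ := fun h =>
  w0_ne_zero (Submodule.span_singleton_eq_bot.1 h)

lemma finrank_W0 : finrank F (W0 F k) = 1 :=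
  finrank_span_singleton w0_ne_zero

lemma mem_W0_iff {x : Fin (k+1) → F} :
    x ∈ W0 F k ↔ ∀ i : Fin (k+1), (i : ℕ) < k → x i = 0 := by
  constructor
  · intro hx i hi
    rw [W0, Submodule.mem_span_singleton] at hx
    obtain ⟨a, ha⟩ := hx
    rw [← ha]
    have hne : i ≠ Fin.last k := by
      intro h; rw [h] at hi; simp [Fin.last] at hi
    simp [w0, Pi.single_eq_of_ne hne]
  · intro h
    have hx : x = (x (Fin.last k)) • w0 F k := by
      funext i
      by_cases hi : i = Fin.last k
      · subst hi; simp [w0]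
      · have hik : (i : ℕ) < k := by
          have h1 := i.isLt
          have h2 : (i : ℕ) ≠ k := fun hc => hi (Fin.ext (by simp [Fin.last, hc]))
          omega
        simp [w0, h i hik, Pi.single_eq_of_ne hi]
    rw [hx]
    exact Submodule.smul_mem _ _ (Submodule.subset_span rfl)

lemma range_le_iff (X : Matrix (Fin (k+1)) (Fin (k+1)) F)
    (V : Submodule F (Fin (k+1) → F)) :
    LinearMap.range X.mulVecLin ≤ V ↔ ∀ j, Xᵀ j ∈ V := by
  rw [Matrix.range_mulVecLin, Submodule.span_le, Set.range_subset_iff]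
  rfl

variable (F k) in
/-- count of matrices with given column space and k-trace -/
noncomputable def cc (α : F) (V : Submodule F (Fin (k+1) → F)) : ℕ :=
  Nat.card {X : Matrix (Fin (k+1)) (Fin (k+1)) F //
    LinearMap.range X.mulVecLin = V ∧ trk X = α}

variable (F k) in
/-- count of matrices with column space contained in `V` and given k-trace -/
noncomputable def Fc (α : F) (V : Submodule F (Fin (k+1) → F)) : ℕ :=
  Nat.card {X : Matrix (Fin (k+1)) (Fin (k+1)) F //
    LinearMap.range X.mulVecLin ≤ V ∧ trk X = α}

lemma natCard_eq_filter {α : Type*} [Fintype α] (p : α → Prop) :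
    (Nat.card {x // p x}) = (Finset.univ.filter p).card := by
  rw [Nat.card_eq_fintype_card, Fintype.card_subtype]

lemma fcard_eq (r : ℕ) (α : F) :
    fcard F (k+1) r k α
      = ∑ V ∈ Finset.univ.filter
          (fun V : Submodule F (Fin (k+1) → F) => finrank F V = r), cc F k α V := by
  have hrk : ∀ X : Matrix (Fin (k+1)) (Fin (k+1)) F,
      X.rank = finrank F (LinearMap.range X.mulVecLin) := fun X => rfl
  rw [fcard, natCard_eq_filter]
  rw [Finset.card_eq_sum_card_fiberwise
    (f := fun X : Matrix (Fin (k+1)) (Fin (k+1)) F => LinearMap.range X.mulVecLin)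
    (t := Finset.univ.filter
      (fun V : Submodule F (Fin (k+1) → F) => finrank F V = r))
    (by
      intro X hX
      simp only [Finset.mem_coe, Finset.mem_filter, Finset.mem_univ, true_and] at hX ⊢
      rw [← hrk X]
      exact hX.1)]
  apply Finset.sum_congr rfl
  intro V hV
  simp only [Finset.mem_filter, Finset.mem_univ, true_and] at hV
  rw [cc, natCard_eq_filter, Finset.filter_filter]
  congr 1
  ext X
  simp only [Finset.mem_filter, Finset.mem_univ, true_and]
  constructor
  · rintro ⟨⟨h1, h2⟩, h3⟩; exact ⟨h3, h2⟩
  · rintro ⟨h1, h2⟩; exact ⟨⟨by rw [hrk X, h1, hV], h2⟩, h1⟩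

lemma sum_cc_eq_Fc (α : F) (V : Submodule F (Fin (k+1) → F)) :
    ∑ U ∈ Finset.univ.filter
        (fun U : Submodule F (Fin (k+1) → F) => U ≤ V), cc F k α U
      = Fc F k α V := by
  rw [Fc, natCard_eq_filter]
  rw [Finset.card_eq_sum_card_fiberwise
    (f := fun X : Matrix (Fin (k+1)) (Fin (k+1)) F => LinearMap.range X.mulVecLin)
    (t := Finset.univ.filter
      (fun U : Submodule F (Fin (k+1) → F) => U ≤ V))
    (by
      intro X hX
      simp only [Finset.mem_coe, Finset.mem_filter, Finset.mem_univ, true_and] at hX ⊢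
      exact hX.1)]
  apply Finset.sum_congr rfl
  intro U hU
  simp only [Finset.mem_filter, Finset.mem_univ, true_and] at hU
  rw [cc, natCard_eq_filter, Finset.filter_filter]
  congr 1
  ext X
  simp only [Finset.mem_filter, Finset.mem_univ, true_and]
  constructor
  · rintro ⟨h1, h2⟩; exact ⟨⟨le_of_eq_of_le h1 hU, h2⟩, h1⟩
  · rintro ⟨⟨h1, h2⟩, h3⟩; exact ⟨h3, h2⟩

end QAux

namespace QAux

open Finset Module Matrix

attribute [local instance] Classical.propDecidable

variable {F : Type*} [Field F] [Fintype F] {k : ℕ}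

lemma trk_sub (X Y : Matrix (Fin (k+1)) (Fin (k+1)) F) :
    trk (X - Y) = trk X - trk Y := by
  unfold trk
  rw [← Finset.sum_sub_distrib]
  rfl

lemma Fc_shift {V : Submodule F (Fin (k+1) → F)} (hV : ¬ V ≤ W0 F k) (α : F) :
    Fc F k α V = Fc F k (α + 1) V := by
  obtain ⟨v, hvV, hvW⟩ := SetLike.not_le_iff_exists.1 hV
  rw [mem_W0_iff] at hvW
  push_neg at hvW
  obtain ⟨i, hik, hvi⟩ := hvW
  set x₀ : Matrix (Fin (k+1)) (Fin (k+1)) F :=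
    Matrix.of (fun a b => if b = i then (v i)⁻¹ * v a else 0) with hx₀
  have hcol : ∀ j, x₀ᵀ j ∈ V := by
    intro j
    by_cases hj : j = i
    · subst hj
      have : x₀ᵀ j = (v j)⁻¹ • v := by
        funext a
        simp [hx₀, Matrix.transpose_apply]
      rw [this]
      exact Submodule.smul_mem _ _ hvV
    · have : x₀ᵀ j = 0 := by
        funext a
        simp [hx₀, Matrix.transpose_apply, hj]
      rw [this]
      exact zero_mem _
  have htr : trk x₀ = 1 := by
    unfold trk
    have : ∀ i' : Fin (k+1), x₀ i' i' = if i' = i then (v i)⁻¹ * v i' else 0 := by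
      intro i'; simp [hx₀]
    rw [Finset.sum_congr rfl (fun i' _ => this i')]
    rw [Finset.sum_ite_eq' (Finset.univ.filter (fun i' : Fin (k+1) => (i' : ℕ) < k)) i
      (fun i' => (v i)⁻¹ * v i')]
    rw [if_pos (by simp [hik])]
    exact inv_mul_cancel₀ hvi
  apply Nat.card_congr
  refine
    { toFun := fun X => ⟨X.1 + x₀, ?_, ?_⟩
      invFun := fun Y => ⟨Y.1 - x₀, ?_, ?_⟩
      left_inv := fun X => Subtype.ext (add_sub_cancel_right X.1 x₀)
      right_inv := fun Y => Subtype.ext (sub_add_cancel Y.1 x₀) }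
  · rw [range_le_iff]
    intro j
    rw [Matrix.transpose_add]
    exact add_mem ((range_le_iff X.1 V).1 X.2.1 j) (hcol j)
  · rw [trk_add, X.2.2, htr]
  · rw [range_le_iff]
    intro j
    rw [Matrix.transpose_sub]
    exact sub_mem ((range_le_iff Y.1 V).1 Y.2.1 j) (hcol j)
  · rw [trk_sub, Y.2.2, htr]
    ring

lemma range_le_bot_iff (X : Matrix (Fin (k+1)) (Fin (k+1)) F) :
    LinearMap.range X.mulVecLin ≤ (⊥ : Submodule F (Fin (k+1) → F)) ↔ X = 0 := by
  rw [range_le_iff]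
  constructor
  · intro h
    ext a b
    have := h b
    rw [Submodule.mem_bot] at this
    have := congr_fun this a
    simpa [Matrix.transpose_apply] using this
  · intro h; subst h
    intro j
    rw [Submodule.mem_bot]
    funext a
    simp

lemma trk_zero_mat : trk (0 : Matrix (Fin (k+1)) (Fin (k+1)) F) = 0 := by
  unfold trk; simp

lemma Fc_bot_zero : Fc F k 0 ⊥ = 1 := by
  rw [Fc]
  haveI : Unique {X : Matrix (Fin (k+1)) (Fin (k+1)) F //
      LinearMap.range X.mulVecLin ≤ ⊥ ∧ trk X = 0} := by
    refine ⟨⟨⟨0, ?_, trk_zero_mat⟩⟩, ?_⟩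
    · exact (range_le_bot_iff 0).2 rfl
    · rintro ⟨X, h1, h2⟩
      apply Subtype.ext
      exact (range_le_bot_iff X).1 h1
  exact Nat.card_unique

lemma Fc_bot_one : Fc F k 1 ⊥ = 0 := by
  rw [Fc]
  haveI : IsEmpty {X : Matrix (Fin (k+1)) (Fin (k+1)) F //
      LinearMap.range X.mulVecLin ≤ ⊥ ∧ trk X = 1} := by
    constructor
    rintro ⟨X, h1, h2⟩
    rw [(range_le_bot_iff X).1 h1, trk_zero_mat] at h2
    exact one_ne_zero h2.symm
  exact Nat.card_of_isEmpty

lemma trk_of_le_W0 (X : Matrix (Fin (k+1)) (Fin (k+1)) F)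
    (h : LinearMap.range X.mulVecLin ≤ W0 F k) : trk X = 0 := by
  rw [range_le_iff] at h
  unfold trk
  apply Finset.sum_eq_zero
  intro i hi
  rw [Finset.mem_filter] at hi
  have := (mem_W0_iff.1 (h i)) i hi.2
  simpa [Matrix.transpose_apply] using this

lemma Fc_W0_zero : Fc F k 0 (W0 F k) = Fintype.card F ^ (k+1) := by
  rw [Fc]
  have e1 : {X : Matrix (Fin (k+1)) (Fin (k+1)) F //
        LinearMap.range X.mulVecLin ≤ W0 F k ∧ trk X = 0}
      ≃ {X : Matrix (Fin (k+1)) (Fin (k+1)) F //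
        LinearMap.range X.mulVecLin ≤ W0 F k} :=
    Equiv.subtypeEquivRight (fun X =>
      ⟨fun h => h.1, fun h => ⟨h, trk_of_le_W0 X h⟩⟩)
  have e2 : {X : Matrix (Fin (k+1)) (Fin (k+1)) F //
        LinearMap.range X.mulVecLin ≤ W0 F k}
      ≃ (Fin (k+1) → ↥(W0 F k)) :=
    { toFun := fun X j => ⟨X.1ᵀ j, (range_le_iff X.1 _).1 X.2 j⟩
      invFun := fun g => ⟨Matrix.of (fun a b => (g b : Fin (k+1) → F) a),
        (range_le_iff _ _).2 (fun j => by
          have : (Matrix.of (fun a b => (g b : Fin (k+1) → F) a))ᵀ j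
              = (g j : Fin (k+1) → F) := by
            funext a; simp [Matrix.transpose_apply]
          rw [this]; exact (g j).2)⟩
      left_inv := fun X => Subtype.ext (by
        ext a b; simp [Matrix.transpose_apply])
      right_inv := fun g => by
        funext j; apply Subtype.ext; funext a; simp [Matrix.transpose_apply] }
  rw [Nat.card_congr (e1.trans e2), Nat.card_eq_fintype_card, Fintype.card_fun]
  rw [card_eq_pow_finrank (K := F) (V := ↥(W0 F k)), finrank_W0, pow_one,
    Fintype.card_fin]

lemma Fc_W0_one : Fc F k 1 (W0 F k) = 0 := by
  rw [Fc]
  haveI : IsEmpty {X : Matrix (Fin (k+1)) (Fin (k+1)) F //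
      LinearMap.range X.mulVecLin ≤ W0 F k ∧ trk X = 1} := by
    constructor
    rintro ⟨X, h1, h2⟩
    rw [trk_of_le_W0 X h1] at h2
    exact one_ne_zero h2.symm
  exact Nat.card_of_isEmpty

end QAux

namespace QAux

open Finset Module Matrix

attribute [local instance] Classical.propDecidable

variable {F : Type*} [Field F] [Fintype F] {k : ℕ}

variable (F k) in
noncomputable def dqv (q : ℕ) (V : Submodule F (Fin (k+1) → F)) : ℚ :=
  if W0 F k ≤ V then ac q (finrank F V) + (q:ℚ)^(k+1) * ac q (finrank F V - 1)
  else ac q (finrank F V)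

variable (F k) in
noncomputable def Gval (q : ℕ) (V : Submodule F (Fin (k+1) → F)) : ℚ :=
  if V = ⊥ then 1 else if V = W0 F k then (q:ℚ)^(k+1) else 0

lemma le_W0_cases {V : Submodule F (Fin (k+1) → F)} (h : V ≤ W0 F k) :
    V = ⊥ ∨ V = W0 F k := by
  by_cases hb : V = ⊥
  · exact Or.inl hb
  · right
    apply Submodule.eq_of_le_of_finrank_le h
    rw [finrank_W0]
    by_contra hc
    push_neg at hc
    interval_cases hfr : finrank F V
    · exact hb ((Submodule.finrank_eq_zero).1 hfr)

variable (q : ℕ) (hq : 2 ≤ q) (hqc : Fintype.card F = q)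
include hq hqc

lemma Fc_diff (V : Submodule F (Fin (k+1) → F)) :
    (Fc F k 0 V : ℚ) - Fc F k 1 V = Gval F k q V := by
  by_cases hb : V = ⊥
  · subst hb
    rw [Fc_bot_zero, Fc_bot_one, Gval, if_pos rfl]
    norm_num
  by_cases hw : V = W0 F k
  · subst hw
    rw [Fc_W0_zero, Fc_W0_one, Gval, if_neg (W0_ne_bot), if_pos rfl, hqc]
    push_cast
    ring
  have hnle : ¬ V ≤ W0 F k := fun h => by
    rcases le_W0_cases h with h' | h' <;> tauto
  have := Fc_shift hnle (0 : F)
  rw [zero_add] at this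
  rw [this, Gval, if_neg hb, if_neg hw]
  ring

lemma sum_dqv (V : Submodule F (Fin (k+1) → F)) :
    ∑ U ∈ Finset.univ.filter (fun U : Submodule F (Fin (k+1) → F) => U ≤ V),
      dqv F k q U = Gval F k q V := by
  obtain ⟨s, hs⟩ : ∃ s, finrank F V = s := ⟨_, rfl⟩
  -- partition by dimension
  rw [← Finset.sum_fiberwise_of_maps_to
    (g := fun U : Submodule F (Fin (k+1) → F) => finrank F U)
    (t := Finset.range (s+1))
    (by
      intro U hU
      simp only [Finset.mem_filter, Finset.mem_univ, true_and] at hU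
      simp only [Finset.mem_range]
      have h1 : finrank F U ≤ finrank F V := Submodule.finrank_mono hU
      show finrank F U < s + 1
      omega)]
  beta_reduce
  -- the two card functions
  set cW : ℕ → ℕ := fun j => (Finset.univ.filter
    (fun U : Submodule F (Fin (k+1) → F) =>
      ((U ≤ V ∧ finrank F U = j) ∧ W0 F k ≤ U))).card with hcW
  set cN : ℕ → ℕ := fun j => (Finset.univ.filter
    (fun U : Submodule F (Fin (k+1) → F) =>
      ((U ≤ V ∧ finrank F U = j) ∧ ¬ W0 F k ≤ U))).card with hcN
  have inner : ∀ j ∈ Finset.range (s+1),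
      ∑ U ∈ (Finset.univ.filter
          (fun U : Submodule F (Fin (k+1) → F) => U ≤ V)).filter
          (fun U : Submodule F (Fin (k+1) → F) => finrank F U = j), dqv F k q U
        = (cW j : ℚ) * (ac q j + (q:ℚ)^(k+1) * ac q (j-1)) + (cN j : ℚ) * ac q j := by
    intro j _
    rw [Finset.filter_filter]
    rw [← Finset.sum_filter_add_sum_filter_not
      (Finset.univ.filter (fun U : Submodule F (Fin (k+1) → F) =>
        U ≤ V ∧ finrank F U = j)) (fun U => W0 F k ≤ U)]
    rw [Finset.filter_filter, Finset.filter_filter]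
    congr 1
    · rw [Finset.sum_congr rfl (g := fun _ => ac q j + (q:ℚ)^(k+1) * ac q (j-1))
        (by
          intro U hU
          simp only [Finset.mem_filter, Finset.mem_univ, true_and] at hU
          rw [dqv, if_pos hU.2, hU.1.2])]
      rw [Finset.sum_const, nsmul_eq_mul, hcW]
    · rw [Finset.sum_congr rfl (g := fun _ => ac q j)
        (by
          intro U hU
          simp only [Finset.mem_filter, Finset.mem_univ, true_and] at hU
          rw [dqv, if_neg hU.2, hU.1.2])]
      rw [Finset.sum_const, nsmul_eq_mul, hcN]
  rw [Finset.sum_congr rfl inner]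
  -- total count per dimension
  have hTot : ∀ j, (cW j : ℚ) + (cN j : ℚ) = gaussBinom q s j := by
    intro j
    have hadd := Finset.card_filter_add_card_filter_not
      (s := Finset.univ.filter (fun U : Submodule F (Fin (k+1) → F) =>
        U ≤ V ∧ finrank F U = j)) (p := fun U => W0 F k ≤ U)
    rw [Finset.filter_filter, Finset.filter_filter] at hadd
    have hc := card_le_rat q hq hqc V j
    rw [natCard_eq_filter, hs] at hc
    rw [hcW, hcN, ← Nat.cast_add, hadd]
    convert hc using 4 <;> rfl
  by_cases hWV : W0 F k ≤ V
  · -- V contains the line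
    have hs1 : 1 ≤ s := by
      have h1 := Submodule.finrank_mono hWV
      rw [finrank_W0, hs] at h1
      exact h1
    have hcW0 : cW 0 = 0 := by
      rw [hcW, Finset.card_eq_zero, Finset.filter_eq_empty_iff]
      intro U _
      rintro ⟨⟨_, hU0⟩, hWU⟩
      have : U = ⊥ := (Submodule.finrank_eq_zero).1 hU0
      rw [this, le_bot_iff] at hWU
      exact W0_ne_bot hWU
    have hcWs : ∀ i, (cW (i+1) : ℚ) = gaussBinom q (s-1) i := by
      intro i
      have hbetween := card_between_rat q hq hqc (W0 F k) V hWV finrank_W0 i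
      rw [natCard_eq_filter, hs] at hbetween
      have hset : (Finset.univ.filter
          (fun U : Submodule F (Fin (k+1) → F) =>
            ((U ≤ V ∧ finrank F U = i+1) ∧ W0 F k ≤ U)))
          = (Finset.univ.filter
            (fun U : Submodule F (Fin (k+1) → F) =>
              U ≤ V ∧ W0 F k ≤ U ∧ finrank F U = i+1)) := by
        ext U
        simp only [Finset.mem_filter, Finset.mem_univ, true_and]
        tauto
      simp only [hcW]
      rw [hset]
      convert hbetween using 4
    -- rewrite the sum
    have key : ∑ j ∈ Finset.range (s+1),
        ((cW j : ℚ) * (ac q j + (q:ℚ)^(k+1) * ac q (j-1)) + (cN j : ℚ) * ac q j)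
        = (q:ℚ)^(k+1) * (∑ i ∈ Finset.range s, ac q i * gaussBinom q (s-1) i)
          + Asum q s := by
      have expand : ∀ j ∈ Finset.range (s+1),
          (cW j : ℚ) * (ac q j + (q:ℚ)^(k+1) * ac q (j-1)) + (cN j : ℚ) * ac q j
            = (cW j : ℚ) * ((q:ℚ)^(k+1) * ac q (j-1)) + gaussBinom q s j * ac q j := by
        intro j _
        rw [← hTot j]
        ring
      rw [Finset.sum_congr rfl expand, Finset.sum_add_distrib]
      congr 1
      · rw [Finset.sum_range_succ' (fun j => (cW j : ℚ) * ((q:ℚ)^(k+1) * ac q (j-1)))]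
        beta_reduce
        rw [hcW0]
        rw [Finset.mul_sum]
        rw [Finset.sum_congr rfl
          (g := fun i => (q:ℚ)^(k+1) * (ac q i * gaussBinom q (s-1) i))
          (by
            intro i _
            show (cW (i+1) : ℚ) * ((q:ℚ)^(k+1) * ac q (i+1-1))
              = (q:ℚ)^(k+1) * (ac q i * gaussBinom q (s-1) i)
            rw [hcWs i, Nat.add_sub_cancel]
            ring)]
        push_cast
        ring
      · rw [Asum]
        apply Finset.sum_congr rfl
        intro j _
        ring
    rw [key]
    obtain ⟨t, rfl⟩ : ∃ t, s = t + 1 := ⟨s - 1, by omega⟩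
    have hst : t + 1 - 1 = t := by omega
    rw [hst, ← Asum]
    rcases Nat.eq_zero_or_pos t with ht | ht
    · subst ht
      rw [Asum_zero, Asum_eq_zero q hq (by omega), mul_one, add_zero]
      have hVW : V = W0 F k := by
        symm
        apply Submodule.eq_of_le_of_finrank_le hWV
        rw [finrank_W0, hs]
      rw [Gval, if_neg (by rw [hVW]; exact W0_ne_bot), if_pos hVW]
    · rw [Asum_eq_zero q hq (by omega), Asum_eq_zero q hq (by omega)]
      have hVb : V ≠ ⊥ := by
        intro h
        rw [h, le_bot_iff] at hWV
        exact W0_ne_bot hWV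
      have hVW : V ≠ W0 F k := by
        intro h
        have h2 := finrank_W0 (F := F) (k := k)
        rw [← h, hs] at h2
        omega
      rw [Gval, if_neg hVb, if_neg hVW]
      ring
  · -- V does not contain the line
    have hcWz : ∀ j, cW j = 0 := by
      intro j
      rw [hcW, Finset.card_eq_zero, Finset.filter_eq_empty_iff]
      intro U _
      rintro ⟨⟨h1, _⟩, h2⟩
      exact hWV (le_trans h2 h1)
    have key : ∑ j ∈ Finset.range (s+1),
        ((cW j : ℚ) * (ac q j + (q:ℚ)^(k+1) * ac q (j-1)) + (cN j : ℚ) * ac q j)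
        = Asum q s := by
      rw [Asum]
      apply Finset.sum_congr rfl
      intro j _
      have h2 := hTot j
      rw [hcWz j] at h2 ⊢
      push_cast at h2 ⊢
      rw [← h2]
      ring
    rw [key]
    by_cases hb : V = ⊥
    · have hs0 : s = 0 := by
        rw [hb, finrank_bot] at hs
        omega
      rw [hs0, Asum_zero, Gval, if_pos hb]
    · have hs1 : 1 ≤ s := by
        by_contra hc
        push_neg at hc
        have hs0 : finrank F V = 0 := by omega
        exact hb ((Submodule.finrank_eq_zero).1 hs0)
      rw [Asum_eq_zero q hq hs1, Gval, if_neg hb, if_neg (by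
        intro h
        exact hWV (le_of_eq h.symm))]

theorem cc_diff : ∀ V : Submodule F (Fin (k+1) → F),
    (cc F k 0 V : ℚ) - cc F k 1 V = dqv F k q V := by
  suffices H : ∀ s (V : Submodule F (Fin (k+1) → F)), finrank F V = s →
      (cc F k 0 V : ℚ) - cc F k 1 V = dqv F k q V by
    exact fun V => H _ V rfl
  intro s
  induction s using Nat.strong_induction_on with
  | _ s IH =>
    intro V hV
    have hsplit : Finset.univ.filter
        (fun U : Submodule F (Fin (k+1) → F) => U ≤ V)
        = insert V (Finset.univ.filter
          (fun U : Submodule F (Fin (k+1) → F) => U < V)) := by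
      ext U
      simp only [Finset.mem_filter, Finset.mem_univ, true_and, Finset.mem_insert]
      rw [le_iff_lt_or_eq]
      tauto
    have hVnot : V ∉ Finset.univ.filter
        (fun U : Submodule F (Fin (k+1) → F) => U < V) := by
      simp [lt_irrefl]
    have hD : ∑ U ∈ Finset.univ.filter
        (fun U : Submodule F (Fin (k+1) → F) => U ≤ V),
        ((cc F k 0 U : ℚ) - cc F k 1 U) = Gval F k q V := by
      rw [Finset.sum_sub_distrib]
      rw [← Nat.cast_sum, ← Nat.cast_sum, sum_cc_eq_Fc, sum_cc_eq_Fc]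
      exact Fc_diff q hq hqc V
    have hC := sum_dqv q hq hqc V
    rw [hsplit, Finset.sum_insert hVnot] at hD hC
    have hlt : ∑ U ∈ Finset.univ.filter
        (fun U : Submodule F (Fin (k+1) → F) => U < V),
        ((cc F k 0 U : ℚ) - cc F k 1 U)
        = ∑ U ∈ Finset.univ.filter
          (fun U : Submodule F (Fin (k+1) → F) => U < V), dqv F k q U := by
      apply Finset.sum_congr rfl
      intro U hU
      simp only [Finset.mem_filter, Finset.mem_univ, true_and] at hU
      have hfr : finrank F U < s := by
        rw [← hV]
        exact Submodule.finrank_lt_finrank_of_lt hU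
      exact IH _ hfr U rfl
    rw [hlt] at hD
    linarith [hD, hC]

end QAux

namespace QAux

open Finset Module Matrix

attribute [local instance] Classical.propDecidable

variable (q : ℕ) (hq : 2 ≤ q)
include hq

lemma ac_zero : ac q 0 = 1 := by simp [ac]

omit hq in
lemma ac_def (j : ℕ) : ac q j = (-1:ℚ)^j * (q:ℚ)^(j.choose 2) := rfl

lemma gb_step (u m : ℕ) :
    gaussBinom q (u+m+1) u * ((q:ℚ)^(m+1) - 1)
      = gaussBinom q (u+m+1) (u+1) * ((q:ℚ)^(u+1) - 1) := by
  rw [gaussBinom_eq_pp q hq (by omega), gaussBinom_eq_pp q hq (by omega)]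
  rw [show u + m + 1 - u = m + 1 from by omega,
    show u + m + 1 - (u+1) = m from by omega]
  rw [pp_succ q m, pp_succ q u]
  have n1 := pp_ne q hq u
  have n2 := pp_ne q hq m
  have n3 := pp_ne q hq (u+m+1)
  have n4 := qpow_sub_one_ne q hq (m := u+1) (by omega)
  have n5 := qpow_sub_one_ne q hq (m := m+1) (by omega)
  field_simp

end QAux

open Finset Module Matrix QAux in
theorem stmt6 (F : Type*) [Field F] [Fintype F] (q : ℕ) (hq : Fintype.card F = q)
    (k r : ℕ) (hk : 0 < k) (hr : r ≤ k) :
    ((q : ℚ) ^ (k + 1 - r) - 1) *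
        ((fcard F (k + 1) r k 0 : ℚ) - (fcard F (k + 1) r k 1 : ℚ)) =
      (-1 : ℚ) ^ r * (q : ℚ) ^ (r.choose 2) * gaussBinom q k r *
        (((q : ℚ) ^ (k - r + 2) - 1) + (q : ℚ) ^ (k + 1) * (1 - (q : ℚ))) := by
  classical
  have hq2 : 2 ≤ q := by
    have := Fintype.one_lt_card (α := F)
    omega
  have hfr_pi : finrank F (Fin (k+1) → F) = k + 1 := Module.finrank_fin_fun F
  -- difference of counts as a sum of dqv
  have hdiff : (fcard F (k + 1) r k 0 : ℚ) - (fcard F (k + 1) r k 1 : ℚ)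
      = ∑ V ∈ Finset.univ.filter
          (fun V : Submodule F (Fin (k+1) → F) => finrank F V = r),
          dqv F k q V := by
    rw [fcard_eq, fcard_eq, Nat.cast_sum, Nat.cast_sum, ← Finset.sum_sub_distrib]
    exact Finset.sum_congr rfl (fun V _ => cc_diff q hq2 hq V)
  rw [hdiff]
  rcases r with _ | u
  · -- r = 0
    have hfil : Finset.univ.filter
        (fun V : Submodule F (Fin (k+1) → F) => finrank F V = 0) = {⊥} := by
      ext V
      simp only [Finset.mem_filter, Finset.mem_univ, true_and, Finset.mem_singleton]
      constructor
      · intro h; exact (Submodule.finrank_eq_zero).1 h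
      · intro h; rw [h]; exact finrank_bot F _
    rw [hfil, Finset.sum_singleton]
    have hd : dqv F k q ⊥ = 1 := by
      rw [dqv, if_neg (fun h => W0_ne_bot (le_bot_iff.1 h)), finrank_bot, ac_zero q hq2]
    rw [hd, gb_zero_right q hq2]
    have h02 : (0:ℕ).choose 2 = 0 := rfl
    rw [h02]
    simp only [Nat.sub_zero, pow_zero, one_mul, mul_one]
    rw [show k + 2 = (k+1)+1 from rfl, pow_succ]
    ring
  · -- r = u + 1
    have hru : u + 1 ≤ k := hr
    obtain ⟨m, rfl⟩ : ∃ m, k = u + m + 1 := ⟨k - u - 1, by omega⟩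
    -- counting
    have hcnt := card_submodule_rat (W := Fin (u+m+1+1) → F) q hq2 hq hfr_pi (u+1)
    rw [natCard_eq_filter] at hcnt
    have hbet := card_between_rat q hq2 hq (W0 F (u+m+1))
      (⊤ : Submodule F (Fin (u+m+1+1) → F)) le_top finrank_W0 u
    rw [natCard_eq_filter] at hbet
    have hfrtop : finrank F (⊤ : Submodule F (Fin (u+m+1+1) → F)) - 1 = u+m+1 := by
      rw [finrank_top, hfr_pi]
      omega
    rw [hfrtop] at hbet
    -- split the sum according to whether V contains the line
    rw [← Finset.sum_filter_add_sum_filter_not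
      (Finset.univ.filter (fun V : Submodule F (Fin (u+m+1+1) → F) =>
        finrank F V = u+1)) (fun V => W0 F (u+m+1) ≤ V) (dqv F (u+m+1) q)]
    rw [Finset.filter_filter, Finset.filter_filter]
    rw [Finset.sum_congr rfl
      (g := fun _ => ac q (u+1) + (q:ℚ)^(u+m+1+1) * ac q u)
      (s₁ := Finset.univ.filter (fun V : Submodule F (Fin (u+m+1+1) → F) =>
        finrank F V = u+1 ∧ W0 F (u+m+1) ≤ V))
      (by
        intro V hV
        simp only [Finset.mem_filter, Finset.mem_univ, true_and] at hV
        rw [dqv, if_pos hV.2, hV.1, Nat.add_sub_cancel])]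
    rw [Finset.sum_congr rfl
      (g := fun _ => ac q (u+1))
      (s₁ := Finset.univ.filter (fun V : Submodule F (Fin (u+m+1+1) → F) =>
        finrank F V = u+1 ∧ ¬ W0 F (u+m+1) ≤ V))
      (by
        intro V hV
        simp only [Finset.mem_filter, Finset.mem_univ, true_and] at hV
        rw [dqv, if_neg hV.2, hV.1])]
    rw [Finset.sum_const, Finset.sum_const, nsmul_eq_mul, nsmul_eq_mul]
    -- identify the first card with hbet
    have hEq : (Finset.univ.filter (fun V : Submodule F (Fin (u+m+1+1) → F) =>
          finrank F V = u+1 ∧ W0 F (u+m+1) ≤ V))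
        = (Finset.univ.filter (fun V : Submodule F (Fin (u+m+1+1) → F) =>
          V ≤ ⊤ ∧ W0 F (u+m+1) ≤ V ∧ finrank F V = u+1)) := by
      ext V
      simp only [Finset.mem_filter, Finset.mem_univ, true_and, le_top, true_and]
      tauto
    rw [hEq]
    -- the complementary card
    have hadd := Finset.card_filter_add_card_filter_not
      (s := Finset.univ.filter (fun V : Submodule F (Fin (u+m+1+1) → F) =>
        finrank F V = u+1)) (p := fun V => W0 F (u+m+1) ≤ V)
    rw [Finset.filter_filter, Finset.filter_filter] at hadd
    have hcN : ((Finset.univ.filter (fun V : Submodule F (Fin (u+m+1+1) → F) =>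
          finrank F V = u+1 ∧ ¬ W0 F (u+m+1) ≤ V)).card : ℚ)
        = (q:ℚ)^(u+1) * gaussBinom q (u+m+1) (u+1) := by
      have hpas := pascal1' q hq2 u (m+1)
      rw [show u + (m+1) + 1 = u+m+1+1 from by omega,
        show u + (m+1) = u + m + 1 from by omega] at hpas
      have h1 : ((Finset.univ.filter (fun V : Submodule F (Fin (u+m+1+1) → F) =>
            finrank F V = u+1 ∧ W0 F (u+m+1) ≤ V)).card : ℚ)
          = gaussBinom q (u+m+1) u := by
        rw [hEq]
        convert hbet using 4
      have h2 : ((Finset.univ.filter (fun V : Submodule F (Fin (u+m+1+1) → F) =>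
            finrank F V = u+1 ∧ W0 F (u+m+1) ≤ V)).card : ℚ)
          + ((Finset.univ.filter (fun V : Submodule F (Fin (u+m+1+1) → F) =>
            finrank F V = u+1 ∧ ¬ W0 F (u+m+1) ≤ V)).card : ℚ)
          = gaussBinom q (u+m+1+1) (u+1) := by
        rw [← Nat.cast_add, hadd]
        convert hcnt using 4 <;> rfl
      rw [h1] at h2
      rw [hpas] at h2
      linarith
    rw [hcN]
    have hbetQ : ((Finset.univ.filter (fun V : Submodule F (Fin (u+m+1+1) → F) =>
          V ≤ ⊤ ∧ W0 F (u+m+1) ≤ V ∧ finrank F V = u+1)).card : ℚ)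
        = gaussBinom q (u+m+1) u := by
      convert hbet using 4
    rw [hbetQ]
    -- now pure algebra
    rw [show u + m + 1 + 1 - (u + 1) = m + 1 from by omega,
      show u + m + 1 - (u + 1) + 2 = m + 2 from by omega,
      ← ac_def q]
    rw [ac_succ q hq2 u]
    have hstep := gb_step q hq2 u m
    linear_combination (ac q u) * ((q:ℚ)^(u+m+2) - (q:ℚ)^u) * hstep
end

section
/- Let F be a finite field with q elements, let 1 ≤ k < n, let α ∈ F, and let 2 ≤ r ≤ n. Then f^α_{n,r,k} = f^α_{n−1,r,k}·q^{2r} + f^α_{n−1,r−1,k}·q^{2r−2}·(2q^{n−r+1} − 1 − q) + f^α_{n−1,r−2,k}·q^{2r−3}·(q^{n−r+1} − 1)^2, where f^α_{m,s,k} denotes the number of m×m matrices over F of rank s whose k-trace equals α (taken to be 0 if s > m). -/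
open Matrix Finset

open Module

set_option linter.unusedSectionVars false
set_option linter.unusedVariables false

section Aux

variable {F : Type*} [Field F] [Fintype F] {ι κ : Type*} [Fintype ι] [Fintype κ]

theorem card_submodule (U : Submodule F (ι → F)) :
    Nat.card U = Fintype.card F ^ finrank F U := by
  classical
  have : Fintype U := Fintype.ofFinite _
  rw [Nat.card_eq_fintype_card]
  exact card_eq_pow_finrank

theorem finrank_sup_span (U : Submodule F (ι → F)) (v : ι → F) (hv : v ∉ U) :
    finrank F ↥(U ⊔ Submodule.span F {v}) = finrank F U + 1 := by
  have h := Submodule.finrank_sup_add_finrank_inf_eq U (Submodule.span F {v})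
  have hinf : U ⊓ Submodule.span F {v} = ⊥ := by
    rw [Submodule.eq_bot_iff]
    rintro x ⟨hxU, hxs⟩
    obtain ⟨a, rfl⟩ := Submodule.mem_span_singleton.mp hxs
    rcases eq_or_ne a 0 with rfl | ha
    · simp
    · exact absurd ((Submodule.smul_mem_iff _ ha).mp hxU) hv
  have hv0 : v ≠ 0 := by rintro rfl; exact hv U.zero_mem
  rw [hinf] at h
  simpa [finrank_span_singleton hv0] using h

theorem range_mulVecLin_fromColumns {κ₂ : Type*} [Fintype κ₂]
    (M : Matrix ι κ F) (N : Matrix ι κ₂ F) :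
    LinearMap.range (fromCols M N).mulVecLin =
      LinearMap.range M.mulVecLin ⊔ LinearMap.range N.mulVecLin := by
  apply le_antisymm
  · rintro x ⟨y, rfl⟩
    rw [mulVecLin_apply, ← Sum.elim_comp_inl_inr y, fromCols_mulVec_sumElim]
    exact Submodule.add_mem_sup ⟨_, rfl⟩ ⟨_, rfl⟩
  · rw [sup_le_iff]
    constructor
    · rintro x ⟨y, rfl⟩
      exact ⟨Sum.elim y 0, by simp⟩
    · rintro x ⟨y, rfl⟩
      exact ⟨Sum.elim 0 y, by simp⟩

theorem range_mulVecLin_col (v : ι → F) :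
    LinearMap.range (Matrix.replicateCol Unit v).mulVecLin = Submodule.span F {v} := by
  apply le_antisymm
  · rintro x ⟨y, rfl⟩
    have : (Matrix.replicateCol Unit v).mulVecLin y = y () • v := by
      ext i; simp [mulVecLin_apply, mulVec, dotProduct, mul_comm]
    rw [this]
    exact Submodule.smul_mem _ _ (Submodule.mem_span_singleton_self v)
  · rw [Submodule.span_le, Set.singleton_subset_iff]
    exact ⟨fun _ => 1, by ext i; simp [mulVecLin_apply, mulVec, dotProduct]⟩

theorem rank_fromColumns_col_of_mem (M : Matrix ι κ F) (v : ι → F)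
    (h : v ∈ LinearMap.range M.mulVecLin) :
    (fromCols M (Matrix.replicateCol Unit v)).rank = M.rank := by
  rw [Matrix.rank, range_mulVecLin_fromColumns, range_mulVecLin_col,
    sup_eq_left.mpr (by rwa [Submodule.span_le, Set.singleton_subset_iff])]
  rfl

theorem rank_fromColumns_col_of_nmem (M : Matrix ι κ F) (v : ι → F)
    (h : v ∉ LinearMap.range M.mulVecLin) :
    (fromCols M (Matrix.replicateCol Unit v)).rank = M.rank + 1 := by
  rw [Matrix.rank, range_mulVecLin_fromColumns, range_mulVecLin_col]
  exact finrank_sup_span _ v h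

theorem rank_fromRows_row_of_mem (M : Matrix ι κ F) (u : κ → F)
    (h : u ∈ LinearMap.range Mᵀ.mulVecLin) :
    (fromRows M (Matrix.replicateRow Unit u)).rank = M.rank := by
  rw [← Matrix.rank_transpose, transpose_fromRows, transpose_replicateRow,
    rank_fromColumns_col_of_mem _ _ h, Matrix.rank_transpose]

theorem rank_fromRows_row_of_nmem (M : Matrix ι κ F) (u : κ → F)
    (h : u ∉ LinearMap.range Mᵀ.mulVecLin) :
    (fromRows M (Matrix.replicateRow Unit u)).rank = M.rank + 1 := by
  rw [← Matrix.rank_transpose, transpose_fromRows, transpose_replicateRow,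
    rank_fromColumns_col_of_nmem _ _ h, Matrix.rank_transpose]

variable [DecidableEq ι]

theorem dual_repr (f : Module.Dual F (ι → F)) (x : ι → F) :
    f x = x ⬝ᵥ (fun i => f (Pi.single i 1)) := by
  conv_lhs => rw [pi_eq_sum_univ x]
  rw [map_sum]
  refine Finset.sum_congr rfl fun i _ => ?_
  rw [LinearMap.map_smul, smul_eq_mul]
  congr 1
  congr 1
  ext j
  simp [Pi.single_apply, eq_comm]

theorem exists_perp_of_nmem (A : Matrix ι κ F) (v : ι → F)
    (hv : v ∉ LinearMap.range A.mulVecLin) :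
    ∃ s : ι → F, Aᵀ *ᵥ s = 0 ∧ v ⬝ᵥ s ≠ 0 := by
  obtain ⟨f, hfv, hfp⟩ := Submodule.exists_dual_map_eq_bot_of_notMem hv inferInstance
  refine ⟨fun i => f (Pi.single i 1), ?_, ?_⟩
  · ext j
    have hcol : (fun i => A i j) ∈ LinearMap.range A.mulVecLin := by
      classical
      exact ⟨Pi.single j 1, by ext i; simp [mulVecLin_apply, mulVec, dotProduct, Pi.single_apply]⟩
    have hf0 : f (fun i => A i j) = 0 := by
      have h2 : f (fun i => A i j) ∈ (LinearMap.range A.mulVecLin).map f :=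
        Submodule.mem_map_of_mem hcol
      rw [hfp] at h2
      simpa using h2
    rw [dual_repr] at hf0
    simpa [mulVec, dotProduct, transpose_apply, mul_comm] using hf0
  · rw [← dual_repr]; exact hfv

variable {m : ℕ}

/-- bordered matrix -/
def bmat (A : Matrix (Fin m) (Fin m) F) (u v : Fin m → F) (c : F) :
    Matrix (Fin m ⊕ Unit) (Fin m ⊕ Unit) F :=
  fromBlocks A (Matrix.replicateCol Unit v) (Matrix.replicateRow Unit u) (Matrix.of fun _ _ => c)

theorem bmat_eq (A : Matrix (Fin m) (Fin m) F) (u v : Fin m → F) (c : F) :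
    bmat A u v c = fromRows (fromCols A (Matrix.replicateCol Unit v))
      (Matrix.replicateRow Unit (Sum.elim u fun _ => c)) := by
  rw [bmat, ← fromRows_fromCols_eq_fromBlocks]
  ext (i | i) (j | j) <;> rfl

theorem mem_rowspace_iff (A : Matrix (Fin m) (Fin m) F) (u v : Fin m → F) (c : F) :
    (Sum.elim u fun _ : Unit => c) ∈
        LinearMap.range (fromCols A (Matrix.replicateCol Unit v))ᵀ.mulVecLin ↔
      ∃ t, Aᵀ *ᵥ t = u ∧ v ⬝ᵥ t = c := by
  have hT : (fromCols A (Matrix.replicateCol Unit v))ᵀ = fromRows Aᵀ (Matrix.replicateRow Unit v) := by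
    rw [transpose_fromCols, transpose_replicateCol]
  rw [hT]
  constructor
  · rintro ⟨t, ht⟩
    refine ⟨t, ?_, ?_⟩
    · ext j
      have := congrFun ht (Sum.inl j)
      simpa [mulVecLin_apply] using this
    · have := congrFun ht (Sum.inr ())
      simpa [mulVecLin_apply, mulVec, dotProduct] using this
  · rintro ⟨t, ht1, ht2⟩
    refine ⟨t, ?_⟩
    ext (j | j)
    · simpa [mulVecLin_apply] using congrFun ht1 j
    · simpa [mulVecLin_apply, mulVec, dotProduct] using ht2

theorem key_val (A : Matrix (Fin m) (Fin m) F) (u z t : Fin m → F)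
    (ht : Aᵀ *ᵥ t = u) : (A *ᵥ z) ⬝ᵥ t = u ⬝ᵥ z := by
  rw [dotProduct_comm, dotProduct_mulVec, ← mulVec_transpose, ht]

theorem rank_bmat_mm_eq (A : Matrix (Fin m) (Fin m) F) (u z : Fin m → F) (c : F)
    (hu : u ∈ LinearMap.range Aᵀ.mulVecLin) (hc : c = u ⬝ᵥ z) :
    (bmat A u (A *ᵥ z) c).rank = A.rank := by
  obtain ⟨t, ht⟩ := hu
  rw [mulVecLin_apply] at ht
  rw [bmat_eq, rank_fromRows_row_of_mem _ _ ((mem_rowspace_iff _ _ _ _).mpr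
    ⟨t, ht, by rw [key_val A u z t ht, hc]⟩)]
  exact rank_fromColumns_col_of_mem _ _ ⟨z, rfl⟩

theorem rank_bmat_mm_ne (A : Matrix (Fin m) (Fin m) F) (u z : Fin m → F) (c : F)
    (hu : u ∈ LinearMap.range Aᵀ.mulVecLin) (hc : c ≠ u ⬝ᵥ z) :
    (bmat A u (A *ᵥ z) c).rank = A.rank + 1 := by
  rw [bmat_eq, rank_fromRows_row_of_nmem _ _ (fun h => by
    obtain ⟨t, ht1, ht2⟩ := (mem_rowspace_iff _ _ _ _).mp h
    rw [key_val A u z t ht1] at ht2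
    exact hc ht2.symm)]
  rw [rank_fromColumns_col_of_mem _ (A *ᵥ z) ⟨z, by rw [mulVecLin_apply]⟩]

theorem rank_bmat_nm (A : Matrix (Fin m) (Fin m) F) (u z : Fin m → F) (c : F)
    (hu : u ∉ LinearMap.range Aᵀ.mulVecLin) :
    (bmat A u (A *ᵥ z) c).rank = A.rank + 1 := by
  rw [bmat_eq, rank_fromRows_row_of_nmem _ _ (fun h => by
    obtain ⟨t, ht1, _⟩ := (mem_rowspace_iff _ _ _ _).mp h
    exact hu ⟨t, by rw [mulVecLin_apply, ht1]⟩)]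
  rw [rank_fromColumns_col_of_mem _ (A *ᵥ z) ⟨z, by rw [mulVecLin_apply]⟩]

theorem rank_bmat_mn (A : Matrix (Fin m) (Fin m) F) (u v : Fin m → F) (c : F)
    (hu : u ∈ LinearMap.range Aᵀ.mulVecLin) (hv : v ∉ LinearMap.range A.mulVecLin) :
    (bmat A u v c).rank = A.rank + 1 := by
  obtain ⟨t0, ht0⟩ := hu
  rw [mulVecLin_apply] at ht0
  obtain ⟨s, hs1, hs2⟩ := exists_perp_of_nmem A v hv
  have hmem : ∃ t, Aᵀ *ᵥ t = u ∧ v ⬝ᵥ t = c := by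
    refine ⟨t0 + ((c - v ⬝ᵥ t0) * (v ⬝ᵥ s)⁻¹) • s, ?_, ?_⟩
    · rw [mulVec_add, mulVec_smul, hs1, ht0]; simp
    · rw [dotProduct_add, dotProduct_smul, smul_eq_mul]
      field_simp
      ring
  rw [bmat_eq, rank_fromRows_row_of_mem _ _ ((mem_rowspace_iff _ _ _ _).mpr hmem)]
  exact rank_fromColumns_col_of_nmem _ _ hv

theorem rank_bmat_nn (A : Matrix (Fin m) (Fin m) F) (u v : Fin m → F) (c : F)
    (hu : u ∉ LinearMap.range Aᵀ.mulVecLin) (hv : v ∉ LinearMap.range A.mulVecLin) :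
    (bmat A u v c).rank = A.rank + 2 := by
  rw [bmat_eq, rank_fromRows_row_of_nmem _ _ (fun h => by
    obtain ⟨t, ht1, _⟩ := (mem_rowspace_iff _ _ _ _).mp h
    exact hu ⟨t, by rw [mulVecLin_apply, ht1]⟩)]
  rw [rank_fromColumns_col_of_nmem _ _ hv]

/-- value of the inner count -/
def gval (q m s r : ℕ) : ℕ :=
  q ^ s * (q ^ s * ((if s = r then 1 else 0) + (q - 1) * (if s + 1 = r then 1 else 0)) +
      (q ^ m - q ^ s) * (q * (if s + 1 = r then 1 else 0))) +
    (q ^ m - q ^ s) * (q ^ s * (q * (if s + 1 = r then 1 else 0)) +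
      (q ^ m - q ^ s) * (q * (if s + 2 = r then 1 else 0)))

theorem card_filter_mem (U : Submodule F (ι → F)) [DecidablePred (· ∈ U)] :
    (univ.filter (· ∈ U)).card = Fintype.card F ^ finrank F U := by
  classical
  rw [← Fintype.card_subtype, ← Nat.card_eq_fintype_card]
  exact card_submodule U

theorem card_filter_nmem (U : Submodule F (ι → F)) [DecidablePred (· ∈ U)] :
    (univ.filter (· ∉ U)).card =
      Fintype.card F ^ Fintype.card ι - Fintype.card F ^ finrank F U := by
  have h := Finset.card_filter_add_card_filter_not (s := (univ : Finset (ι → F)))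
    (p := (· ∈ U))
  rw [card_filter_mem, Finset.card_univ, Fintype.card_fun] at h
  omega

theorem countA (A : Matrix (Fin m) (Fin m) F) (r : ℕ) :
    Nat.card {p : (Fin m → F) × (Fin m → F) × F // (bmat A p.1 p.2.1 p.2.2).rank = r} =
      gval (Fintype.card F) m A.rank r := by
  classical
  set q := Fintype.card F with hq
  set s := A.rank with hs
  set RS := LinearMap.range Aᵀ.mulVecLin with hRS
  set CS := LinearMap.range A.mulVecLin with hCS
  have hscard : ∀ U : Submodule F (Fin m → F), finrank F U = s →
      (univ.filter (· ∈ U)).card = q ^ s ∧ (univ.filter (· ∉ U)).card = q ^ m - q ^ s := by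
    intro U hU
    constructor
    · rw [card_filter_mem, hU]
    · rw [card_filter_nmem, hU, Fintype.card_fin]
  have hRrank : finrank F RS = s := by
    rw [hRS, hs]
    exact A.rank_transpose
  have hCrank : finrank F CS = s := rfl
  obtain ⟨hR1, hR2⟩ := hscard RS hRrank
  obtain ⟨hC1, hC2⟩ := hscard CS hCrank
  have hmm : ∀ u v, u ∈ RS → v ∈ CS →
      (∑ c : F, if (bmat A u v c).rank = r then 1 else 0) =
        (if s = r then 1 else 0) + (q - 1) * (if s + 1 = r then 1 else 0) := by
    intro u v hu hv
    obtain ⟨z, hz⟩ := hv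
    have hv' : v = A *ᵥ z := by rw [← hz, mulVecLin_apply]
    subst hv'
    rw [← Finset.add_sum_erase univ _ (Finset.mem_univ (u ⬝ᵥ z)),
      rank_bmat_mm_eq A u z _ hu rfl]
    congr 1
    rw [Finset.sum_congr rfl (fun c hc => by
        rw [rank_bmat_mm_ne A u z c hu (Finset.ne_of_mem_erase hc)]),
      Finset.sum_const, Finset.card_erase_of_mem (Finset.mem_univ _), Finset.card_univ,
      smul_eq_mul]
  have hnm : ∀ u v, u ∉ RS → v ∈ CS →
      (∑ c : F, if (bmat A u v c).rank = r then 1 else 0) =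
        q * (if s + 1 = r then 1 else 0) := by
    intro u v hu hv
    obtain ⟨z, hz⟩ := hv
    have hv' : v = A *ᵥ z := by rw [← hz, mulVecLin_apply]
    subst hv'
    rw [Finset.sum_congr rfl (fun c _ => by rw [rank_bmat_nm A u z c hu]),
      Finset.sum_const, Finset.card_univ, smul_eq_mul]
  have hmn : ∀ u v, u ∈ RS → v ∉ CS →
      (∑ c : F, if (bmat A u v c).rank = r then 1 else 0) =
        q * (if s + 1 = r then 1 else 0) := by
    intro u v hu hv
    rw [Finset.sum_congr rfl (fun c _ => by rw [rank_bmat_mn A u v c hu hv]),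
      Finset.sum_const, Finset.card_univ, smul_eq_mul]
  have hnn : ∀ u v, u ∉ RS → v ∉ CS →
      (∑ c : F, if (bmat A u v c).rank = r then 1 else 0) =
        q * (if s + 2 = r then 1 else 0) := by
    intro u v hu hv
    rw [Finset.sum_congr rfl (fun c _ => by rw [rank_bmat_nn A u v c hu hv]),
      Finset.sum_const, Finset.card_univ, smul_eq_mul]
  have hu1 : ∀ u, u ∈ RS →
      (∑ v : Fin m → F, ∑ c : F, if (bmat A u v c).rank = r then 1 else 0) =
        q ^ s * ((if s = r then 1 else 0) + (q - 1) * (if s + 1 = r then 1 else 0)) +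
          (q ^ m - q ^ s) * (q * (if s + 1 = r then 1 else 0)) := by
    intro u hu
    rw [← Finset.sum_filter_add_sum_filter_not univ (· ∈ CS)]
    congr 1
    · rw [Finset.sum_congr rfl (fun v hv => hmm u v hu (Finset.mem_filter.mp hv).2),
        Finset.sum_const, hC1, smul_eq_mul]
    · rw [Finset.sum_congr rfl (fun v hv => hmn u v hu (Finset.mem_filter.mp hv).2),
        Finset.sum_const, hC2, smul_eq_mul]
  have hu2 : ∀ u, u ∉ RS →
      (∑ v : Fin m → F, ∑ c : F, if (bmat A u v c).rank = r then 1 else 0) =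
        q ^ s * (q * (if s + 1 = r then 1 else 0)) +
          (q ^ m - q ^ s) * (q * (if s + 2 = r then 1 else 0)) := by
    intro u hu
    rw [← Finset.sum_filter_add_sum_filter_not univ (· ∈ CS)]
    congr 1
    · rw [Finset.sum_congr rfl (fun v hv => hnm u v hu (Finset.mem_filter.mp hv).2),
        Finset.sum_const, hC1, smul_eq_mul]
    · rw [Finset.sum_congr rfl (fun v hv => hnn u v hu (Finset.mem_filter.mp hv).2),
        Finset.sum_const, hC2, smul_eq_mul]
  rw [Nat.card_eq_fintype_card, Fintype.card_subtype, Finset.card_filter]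
  simp only [Fintype.sum_prod_type]
  rw [← Finset.sum_filter_add_sum_filter_not univ (· ∈ RS)]
  rw [Finset.sum_congr rfl (fun u hu => hu1 u (Finset.mem_filter.mp hu).2),
    Finset.sum_congr rfl (fun u hu => hu2 u (Finset.mem_filter.mp hu).2),
    Finset.sum_const, Finset.sum_const, hR1, hR2, smul_eq_mul, smul_eq_mul]
  rfl

/-- the bordered-matrix equivalence -/
def bEquiv (F : Type*) [Field F] (m : ℕ) :
    (Matrix (Fin m) (Fin m) F × ((Fin m → F) × (Fin m → F) × F)) ≃
      Matrix (Fin m ⊕ Unit) (Fin m ⊕ Unit) F where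
  toFun p := bmat p.1 p.2.1 p.2.2.1 p.2.2.2
  invFun M := (M.toBlocks₁₁, fun j => M (.inr ()) (.inl j), fun i => M (.inl i) (.inr ()),
    M (.inr ()) (.inr ()))
  left_inv p := by
    obtain ⟨A, u, v, c⟩ := p
    refine Prod.ext ?_ (Prod.ext ?_ (Prod.ext ?_ ?_)) <;> try rfl
  right_inv M := by
    ext (i | i) (j | j) <;> rfl

def sumEquiv (m : ℕ) : (Fin m ⊕ Unit) ≃ Fin (m + 1) :=
  (Equiv.sumCongr (Equiv.refl (Fin m)) finOneEquiv.symm).trans finSumFinEquiv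

theorem sumEquiv_inl (m : ℕ) (i : Fin m) : sumEquiv m (Sum.inl i) = Fin.castSucc i := rfl

theorem trace_reindex {m k : ℕ} (hk : k ≤ m) (M : Matrix (Fin m ⊕ Unit) (Fin m ⊕ Unit) F) :
    (∑ i ∈ univ.filter (fun i : Fin (m + 1) => (i : ℕ) < k),
        (reindex (sumEquiv m) (sumEquiv m) M) i i) =
      ∑ i ∈ univ.filter (fun i : Fin m => (i : ℕ) < k), M (Sum.inl i) (Sum.inl i) := by
  classical
  rw [Finset.sum_filter, Finset.sum_filter, Fin.sum_univ_castSucc]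
  have hlast : ¬ ((Fin.last m : ℕ) < k) := by simp [Fin.last]; omega
  rw [if_neg hlast, add_zero]
  refine Finset.sum_congr rfl fun i _ => ?_
  have he : (reindex (sumEquiv m) (sumEquiv m) M) (Fin.castSucc i) (Fin.castSucc i) =
      M (Sum.inl i) (Sum.inl i) := by
    rw [← sumEquiv_inl]
    simp [reindex_apply, submatrix_apply]
  rw [he]
  simp [Fin.coe_castSucc]

open Classical in
theorem fcard_succ (m k r : ℕ) (hk : k ≤ m) (α : F) :
    fcard F (m + 1) r k α = ∑ A : Matrix (Fin m) (Fin m) F,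
      (if (∑ i ∈ univ.filter (fun i : Fin m => (i : ℕ) < k), A i i) = α
        then gval (Fintype.card F) m A.rank r else 0) := by
  classical
  rw [fcard]
  have hiff : ∀ p : Matrix (Fin m) (Fin m) F × ((Fin m → F) × (Fin m → F) × F),
      ((bmat p.1 p.2.1 p.2.2.1 p.2.2.2).rank = r ∧
        (∑ i ∈ univ.filter (fun i : Fin m => (i : ℕ) < k), p.1 i i) = α) ↔
      ((((bEquiv F m).trans (reindex (sumEquiv m) (sumEquiv m))) p).rank = r ∧
        (∑ i ∈ univ.filter (fun i : Fin (m + 1) => (i : ℕ) < k),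
          (((bEquiv F m).trans (reindex (sumEquiv m) (sumEquiv m))) p) i i) = α) := by
    intro p
    have h1 : (((bEquiv F m).trans (reindex (sumEquiv m) (sumEquiv m))) p).rank =
        (bmat p.1 p.2.1 p.2.2.1 p.2.2.2).rank := rank_reindex _ _ _
    have h2 : (∑ i ∈ univ.filter (fun i : Fin (m + 1) => (i : ℕ) < k),
          (((bEquiv F m).trans (reindex (sumEquiv m) (sumEquiv m))) p) i i) =
        (∑ i ∈ univ.filter (fun i : Fin m => (i : ℕ) < k), p.1 i i) := by
      have := trace_reindex (F := F) hk (bmat p.1 p.2.1 p.2.2.1 p.2.2.2)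
      exact this
    rw [h1, h2]
  rw [← Nat.card_congr (Equiv.subtypeEquiv
    ((bEquiv F m).trans (reindex (sumEquiv m) (sumEquiv m))) hiff)]
  rw [Nat.card_congr (Equiv.subtypeProdEquivSigmaSubtype
    (fun (A : Matrix (Fin m) (Fin m) F) (w : (Fin m → F) × (Fin m → F) × F) =>
      (bmat A w.1 w.2.1 w.2.2).rank = r ∧
        (∑ i ∈ univ.filter (fun i : Fin m => (i : ℕ) < k), A i i) = α))]
  rw [Nat.card_eq_fintype_card, Fintype.card_sigma]
  refine Finset.sum_congr rfl fun A _ => ?_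
  by_cases h : (∑ i ∈ univ.filter (fun i : Fin m => (i : ℕ) < k), A i i) = α
  · rw [if_pos h, ← countA A r, ← Nat.card_eq_fintype_card]
    exact Nat.card_congr (Equiv.subtypeEquivRight (fun w => and_iff_left h))
  · rw [if_neg h]
    have : IsEmpty {w : (Fin m → F) × (Fin m → F) × F // (bmat A w.1 w.2.1 w.2.2).rank = r ∧
        (∑ i ∈ univ.filter (fun i : Fin m => (i : ℕ) < k), A i i) = α} :=
      ⟨fun w => h w.2.2⟩
    rw [← Nat.card_eq_fintype_card]
    exact Nat.card_of_isEmpty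

theorem gval_eq_zero {q m s r : ℕ} (h1 : s ≠ r) (h2 : s + 1 ≠ r) (h3 : s + 2 ≠ r) :
    gval q m s r = 0 := by
  rw [gval, if_neg h1, if_neg h2, if_neg h3]
  ring

open Classical in
theorem fcard_eq_card (m s0 k : ℕ) (α : F) :
    fcard F m s0 k α = (univ.filter (fun A : Matrix (Fin m) (Fin m) F =>
      (∑ i ∈ univ.filter (fun i : Fin m => (i : ℕ) < k), A i i) = α ∧ A.rank = s0)).card := by
  rw [fcard, Nat.card_eq_fintype_card, Fintype.card_subtype]
  congr 1
  apply Finset.filter_congr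
  intro A _
  exact and_comm

open Classical in
theorem fcard_split (m k r : ℕ) (hk : k ≤ m) (hr : 2 ≤ r) (α : F) :
    fcard F (m + 1) r k α =
      fcard F m r k α * gval (Fintype.card F) m r r +
      fcard F m (r - 1) k α * gval (Fintype.card F) m (r - 1) r +
      fcard F m (r - 2) k α * gval (Fintype.card F) m (r - 2) r := by
  rw [fcard_succ m k r hk α, ← Finset.sum_filter]
  set q := Fintype.card F
  set T := univ.filter (fun A : Matrix (Fin m) (Fin m) F =>
    (∑ i ∈ univ.filter (fun i : Fin m => (i : ℕ) < k), A i i) = α) with hT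
  have hpt : ∀ A ∈ T, gval q m A.rank r =
      (if A.rank = r then gval q m r r else 0) +
      (if A.rank = r - 1 then gval q m (r - 1) r else 0) +
      (if A.rank = r - 2 then gval q m (r - 2) r else 0) := by
    intro A _
    by_cases h1 : A.rank = r
    · rw [if_pos h1, if_neg (by omega), if_neg (by omega), h1, add_zero, add_zero]
    · by_cases h2 : A.rank = r - 1
      · rw [if_neg h1, if_pos h2, if_neg (by omega), h2, zero_add, add_zero]
      · by_cases h3 : A.rank = r - 2
        · rw [if_neg h1, if_neg h2, if_pos h3, h3, zero_add, zero_add]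
        · rw [if_neg h1, if_neg h2, if_neg h3,
            gval_eq_zero h1 (by omega) (by omega), add_zero, add_zero]
  rw [Finset.sum_congr rfl hpt]
  rw [Finset.sum_add_distrib, Finset.sum_add_distrib]
  have hpart : ∀ s0 : ℕ, (∑ A ∈ T, if A.rank = s0 then gval q m s0 r else 0) =
      fcard F m s0 k α * gval q m s0 r := by
    intro s0
    rw [← Finset.sum_filter, Finset.sum_const, smul_eq_mul]
    congr 1
    rw [fcard_eq_card m s0 k α, hT, Finset.filter_filter]
  rw [hpart r, hpart (r - 1), hpart (r - 2)]

end Aux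

theorem stmt8 (F : Type*) [Field F] [Fintype F] (q : ℕ) (hq : Fintype.card F = q)
    (n k r : ℕ) (hk1 : 1 ≤ k) (hkn : k < n) (hr2 : 2 ≤ r) (hrn : r ≤ n) (α : F) :
    (fcard F n r k α : ℚ) =
      (fcard F (n - 1) r k α : ℚ) * (q : ℚ) ^ (2 * r) +
      (fcard F (n - 1) (r - 1) k α : ℚ) * (q : ℚ) ^ (2 * r - 2) *
        (2 * (q : ℚ) ^ (n - r + 1) - 1 - (q : ℚ)) +
      (fcard F (n - 1) (r - 2) k α : ℚ) * (q : ℚ) ^ (2 * r - 3) *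
        ((q : ℚ) ^ (n - r + 1) - 1) ^ 2 := by
  obtain ⟨m, rfl⟩ : ∃ m, n = m + 1 := ⟨n - 1, by omega⟩
  obtain ⟨t, rfl⟩ : ∃ t, r = t + 2 := ⟨r - 2, by omega⟩
  obtain ⟨d, rfl⟩ : ∃ d, m = t + 1 + d := ⟨m - (t + 1), by omega⟩
  have hk : k ≤ t + 1 + d := by omega
  have key := fcard_split (F := F) (t + 1 + d) k (t + 2) hk hr2 α
  rw [hq] at key
  have hq1 : 1 ≤ q := hq ▸ Fintype.card_pos
  -- simplify arithmetic of indices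
  have e1 : t + 2 - 1 = t + 1 := by omega
  have e2 : t + 2 - 2 = t := by omega
  have e3 : t + 1 + d + 1 - 1 = t + 1 + d := by omega
  have e4 : 2 * (t + 2) = 2 * t + 4 := by omega
  have e5 : 2 * t + 4 - 2 = 2 * t + 2 := by omega
  have e6 : 2 * t + 4 - 3 = 2 * t + 1 := by omega
  have e7 : t + 1 + d + 1 - (t + 2) + 1 = d + 1 := by omega
  rw [e1, e2] at key
  rw [e3, e1, e2, e4, e5, e6, e7, key]
  have g1 : gval q (t + 1 + d) (t + 2) (t + 2) = q ^ (t + 2) * q ^ (t + 2) := by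
    rw [gval, if_pos (show t + 2 = t + 2 from rfl),
      if_neg (show ¬(t + 2 + 1 = t + 2) by omega),
      if_neg (show ¬(t + 2 + 2 = t + 2) by omega)]
    ring
  have g2 : gval q (t + 1 + d) (t + 1) (t + 2) =
      q ^ (t + 1) * (q ^ (t + 1) * (q - 1) + (q ^ (t + 1 + d) - q ^ (t + 1)) * q) +
        (q ^ (t + 1 + d) - q ^ (t + 1)) * (q ^ (t + 1) * q) := by
    rw [gval, if_neg (show ¬(t + 1 = t + 2) by omega),
      if_pos (show t + 1 + 1 = t + 2 by omega),
      if_neg (show ¬(t + 1 + 2 = t + 2) by omega)]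
    ring
  have g3 : gval q (t + 1 + d) t (t + 2) =
      (q ^ (t + 1 + d) - q ^ t) * ((q ^ (t + 1 + d) - q ^ t) * q) := by
    rw [gval, if_neg (show ¬(t = t + 2) by omega),
      if_neg (show ¬(t + 1 = t + 2) by omega),
      if_pos (show t + 2 = t + 2 from rfl)]
    ring
  rw [g1, g2, g3]
  have h1 : q ^ (t + 1) ≤ q ^ (t + 1 + d) := Nat.pow_le_pow_right hq1 (by omega)
  have h2 : q ^ t ≤ q ^ (t + 1 + d) := Nat.pow_le_pow_right hq1 (by omega)
  push_cast [Nat.cast_sub h1, Nat.cast_sub h2, Nat.cast_sub hq1]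
  ring
end

section
/- Let F be a finite field with q elements, let 1 ≤ k < n, and let α ∈ F. Let f^α_{m,k}(X) = ∑_{r≥0} f^α_{m,r,k} X^r ∈ ℚ[X] be the generating polynomial of the numbers f^α_{m,r,k}. Then f^α_{n,k}(X) = f^α_{n−1,k}(q²X)·(1−X)(1−qX) + f^α_{n−1,k}(qX)·2X(1−X)q^n + f^α_{n−1,k}(X)·X²·q^{2n−1}. -/
open Matrix Finset Polynomial

/-- The generating polynomial `f^α_{n,k}(X) = ∑_{r ≥ 0} f^α_{n,r,k} X^r ∈ ℚ[X]`
(the terms with `r > n` vanish since the rank of an `n × n` matrix is at most `n`). -/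
noncomputable def fpoly (F : Type*) [Field F] [Fintype F] (n k : ℕ) (α : F) : Polynomial ℚ :=
  ∑ r ∈ Finset.range (n + 1), Polynomial.C (fcard F n r k α : ℚ) * Polynomial.X ^ r

set_option maxHeartbeats 1000000

namespace Stmt9Aux

open scoped Classical

variable {F : Type*} [Field F] [Fintype F]

/-- single-column matrix attached to a vector -/
def colMat {ι : Type*} (u : ι → F) : Matrix ι (Fin 1) F := fun i _ => u i

lemma range_mulVecLin_colMat {ι : Type*} [Fintype ι] (u : ι → F) :
    LinearMap.range (colMat u).mulVecLin = Submodule.span F {u} := by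
  ext w
  simp only [LinearMap.mem_range, Submodule.mem_span_singleton]
  constructor
  · rintro ⟨x, rfl⟩
    exact ⟨x 0, by ext i; simp [colMat, Matrix.mulVecLin_apply, Matrix.mulVec, dotProduct,
      Fin.sum_univ_one, mul_comm]⟩
  · rintro ⟨c, rfl⟩
    exact ⟨fun _ => c, by ext i; simp [colMat, Matrix.mulVecLin_apply, Matrix.mulVec, dotProduct,
      Fin.sum_univ_one, mul_comm]⟩

lemma range_mulVecLin_fromColumns {m n₁ n₂ : Type*} [Fintype m] [Fintype n₁] [Fintype n₂]
    (B₁ : Matrix m n₁ F) (B₂ : Matrix m n₂ F) :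
    LinearMap.range (fromCols B₁ B₂).mulVecLin
      = LinearMap.range B₁.mulVecLin ⊔ LinearMap.range B₂.mulVecLin := by
  have key : ∀ x : n₁ ⊕ n₂ → F, (fromCols B₁ B₂) *ᵥ x
      = B₁ *ᵥ (x ∘ Sum.inl) + B₂ *ᵥ (x ∘ Sum.inr) := by
    intro x
    ext i
    simp [Matrix.mulVec, dotProduct, Fintype.sum_sum_type, fromCols]
  ext w
  simp only [LinearMap.mem_range, Submodule.mem_sup]
  constructor
  · rintro ⟨x, rfl⟩
    exact ⟨B₁.mulVec (x ∘ Sum.inl), ⟨_, rfl⟩, B₂.mulVec (x ∘ Sum.inr), ⟨_, rfl⟩,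
      (by rw [Matrix.mulVecLin_apply, key])⟩
  · rintro ⟨_, ⟨x₁, rfl⟩, _, ⟨x₂, rfl⟩, rfl⟩
    refine ⟨Sum.elim x₁ x₂, ?_⟩
    rw [Matrix.mulVecLin_apply, key]
    simp [Matrix.mulVecLin_apply]

lemma finrank_sup_span_singleton {V : Type*} [AddCommGroup V] [Module F V]
    [FiniteDimensional F V] (W : Submodule F V) (u : V) :
    Module.finrank F ↥(W ⊔ Submodule.span F {u})
      = Module.finrank F W + (if u ∈ W then 0 else 1) := by
  by_cases hu : u ∈ W
  · rw [if_pos hu, add_zero]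
    have h : W ⊔ Submodule.span F {u} = W :=
      sup_eq_left.mpr ((Submodule.span_singleton_le_iff_mem u W).mpr hu)
    rw [h]
  · rw [if_neg hu]
    have hu0 : u ≠ 0 := fun h => hu (h ▸ W.zero_mem)
    have hinf : W ⊓ Submodule.span F {u} = ⊥ := by
      rw [eq_bot_iff]
      intro x hx
      rw [Submodule.mem_inf] at hx
      obtain ⟨hxW, hxu⟩ := hx
      rw [Submodule.mem_span_singleton] at hxu
      obtain ⟨c, rfl⟩ := hxu
      rcases eq_or_ne c 0 with rfl | hc
      · simp
      · exact absurd (by simpa [hc] using W.smul_mem c⁻¹ hxW) hu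
    have := Submodule.finrank_sup_add_finrank_inf_eq W (Submodule.span F {u})
    rw [hinf] at this
    simp only [finrank_bot, add_zero] at this
    rw [this, finrank_span_singleton hu0]

lemma rank_fromColumns_colMat {m n : Type*} [Fintype m] [Fintype n]
    (A : Matrix m n F) (u : m → F) :
    (fromCols A (colMat u)).rank
      = A.rank + (if u ∈ LinearMap.range A.mulVecLin then 0 else 1) := by
  rw [Matrix.rank, Matrix.rank, range_mulVecLin_fromColumns, range_mulVecLin_colMat,
    finrank_sup_span_singleton]


variable {m : ℕ}

/-- the bordered matrix -/
def border (A : Matrix (Fin m) (Fin m) F) (u v : Fin m → F) (d : F) :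
    Matrix (Fin m ⊕ Fin 1) (Fin m ⊕ Fin 1) F :=
  fromBlocks A (colMat u) (colMat v)ᵀ (fun _ _ => d)

lemma rank_border (A : Matrix (Fin m) (Fin m) F) (u v : Fin m → F) (d : F) :
    (border A u v d).rank =
      A.rank + (if u ∈ LinearMap.range A.mulVecLin then 0 else 1)
        + (if Sum.elim v (fun _ => d) ∈
            LinearMap.range (fromCols A (colMat u))ᵀ.mulVecLin then 0 else 1) := by
  have h1 : border A u v d
      = fromRows (fromCols A (colMat u)) (fromCols (colMat v)ᵀ (fun _ _ => d)) := by
    exact (fromRows_fromCols_eq_fromBlocks _ _ _ _).symm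
  have h2 : (fromCols (colMat v)ᵀ (fun _ _ : Fin 1 => d))ᵀ
      = colMat (Sum.elim v (fun _ => d)) := by
    ext (i | i) j <;> rfl
  rw [h1, ← Matrix.rank_transpose, transpose_fromRows, h2, rank_fromColumns_colMat,
    Matrix.rank_transpose, rank_fromColumns_colMat]


/-- number of vectors in/out of a `t`-dimensional subspace by rank condition -/
def gcount (q m t r : ℕ) : ℕ :=
  if r = t then q ^ t else if r = t + 1 then q ^ (m + 1) - q ^ t else 0

def ncount (q m s r : ℕ) : ℕ :=
  q ^ s * gcount q m s r + (q ^ m - q ^ s) * gcount q m (s + 1) r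

lemma card_filter_mem_submodule {ι : Type*} [Fintype ι] [DecidableEq ι] (W : Submodule F (ι → F)) :
    (univ.filter (· ∈ W)).card = Fintype.card F ^ Module.finrank F W := by
  calc (univ.filter (· ∈ W)).card = Fintype.card {x // x ∈ W} := (Fintype.card_subtype _).symm
    _ = Fintype.card F ^ Module.finrank F W := Module.card_eq_pow_finrank (K := F)

lemma inner_count (q : ℕ) (hq : Fintype.card F = q) (B : Matrix (Fin m) (Fin m ⊕ Fin 1) F)
    (r : ℕ) :
    (∑ w : (Fin m ⊕ Fin 1) → F,
      if B.rank + (if w ∈ LinearMap.range Bᵀ.mulVecLin then 0 else 1) = r then (1:ℕ) else 0)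
      = gcount q m B.rank r := by
  set W := LinearMap.range Bᵀ.mulVecLin with hWdef
  have hW : (univ.filter (· ∈ W)).card = q ^ B.rank := by
    rw [card_filter_mem_submodule, hq]
    congr 1
    rw [← Matrix.rank_transpose B]
    rfl
  have htot : Fintype.card ((Fin m ⊕ Fin 1) → F) = q ^ (m + 1) := by
    rw [Fintype.card_fun, hq]
    simp
  by_cases h1 : r = B.rank
  · have he : ∀ w : (Fin m ⊕ Fin 1) → F,
        (if B.rank + (if w ∈ W then 0 else 1) = r then (1:ℕ) else 0)
          = if w ∈ W then 1 else 0 := by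
      intro w
      by_cases hw : w ∈ W <;> simp [hw, h1]
    rw [Finset.sum_congr rfl fun w _ => he w, ← Finset.card_filter, hW, gcount, if_pos h1]
  · by_cases h2 : r = B.rank + 1
    · have he : ∀ w : (Fin m ⊕ Fin 1) → F,
          (if B.rank + (if w ∈ W then 0 else 1) = r then (1:ℕ) else 0)
            = if w ∉ W then 1 else 0 := by
        intro w
        by_cases hw : w ∈ W <;> simp [hw, h2]
      rw [Finset.sum_congr rfl fun w _ => he w, ← Finset.card_filter]
      have hsplit := Finset.card_filter_add_card_filter_not
        (s := (univ : Finset ((Fin m ⊕ Fin 1) → F))) (p := (· ∈ W))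
      rw [Finset.card_univ, htot, hW] at hsplit
      rw [gcount, if_neg h1, if_pos h2]
      omega
    · have he : ∀ w : (Fin m ⊕ Fin 1) → F,
          (if B.rank + (if w ∈ W then 0 else 1) = r then (1:ℕ) else 0) = 0 := by
        intro w
        by_cases hw : w ∈ W <;> simp [hw] <;> omega
      rw [Finset.sum_congr rfl fun w _ => he w, Finset.sum_const_zero, gcount,
        if_neg h1, if_neg h2]

def pairEquiv (m : ℕ) (F : Type*) : ((Fin m → F) × F) ≃ ((Fin m ⊕ Fin 1) → F) where
  toFun p := Sum.elim p.1 (fun _ => p.2)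
  invFun w := (w ∘ Sum.inl, w (Sum.inr 0))
  left_inv p := rfl
  right_inv w := by
    funext x
    cases x with
    | inl i => rfl
    | inr i => simp [Fin.eq_zero i]

lemma border_count (q : ℕ) (hq : Fintype.card F = q) (A : Matrix (Fin m) (Fin m) F) (r : ℕ) :
    (∑ u : Fin m → F, ∑ v : Fin m → F, ∑ d : F,
      if (border A u v d).rank = r then (1:ℕ) else 0) = ncount q m A.rank r := by
  have hvd : ∀ u : Fin m → F,
      (∑ v : Fin m → F, ∑ d : F, if (border A u v d).rank = r then (1:ℕ) else 0)
        = gcount q m ((fromCols A (colMat u)).rank) r := by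
    intro u
    rw [← Fintype.sum_prod_type']
    rw [← inner_count q hq (fromCols A (colMat u)) r]
    apply Fintype.sum_equiv (pairEquiv m F)
    rintro ⟨v, d⟩
    have hr : (border A u v d).rank = (fromCols A (colMat u)).rank
        + (if Sum.elim v (fun _ => d) ∈
            LinearMap.range (fromCols A (colMat u))ᵀ.mulVecLin then 0 else 1) := by
      rw [rank_border A u v d, rank_fromColumns_colMat]
    rw [hr]
    rfl
  rw [Finset.sum_congr rfl fun u _ => hvd u]
  rw [← Finset.sum_filter_add_sum_filter_not univ (· ∈ LinearMap.range A.mulVecLin)]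
  have hWA : (univ.filter (· ∈ LinearMap.range A.mulVecLin)).card = q ^ A.rank := by
    rw [card_filter_mem_submodule, hq]; rfl
  have htot : Fintype.card (Fin m → F) = q ^ m := by
    rw [Fintype.card_fun, hq]; simp
  have hsplit := Finset.card_filter_add_card_filter_not
    (s := (univ : Finset (Fin m → F))) (p := (· ∈ LinearMap.range A.mulVecLin))
  rw [Finset.card_univ, htot, hWA] at hsplit
  have h1 : ∀ u ∈ univ.filter (· ∈ LinearMap.range A.mulVecLin),
      gcount q m ((fromCols A (colMat u)).rank) r = gcount q m A.rank r := by
    intro u hu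
    rw [Finset.mem_filter] at hu
    rw [rank_fromColumns_colMat, if_pos hu.2, add_zero]
  have h2 : ∀ u ∈ univ.filter (· ∉ LinearMap.range A.mulVecLin),
      gcount q m ((fromCols A (colMat u)).rank) r = gcount q m (A.rank + 1) r := by
    intro u hu
    rw [Finset.mem_filter] at hu
    rw [rank_fromColumns_colMat, if_neg hu.2]
  rw [Finset.sum_congr rfl h1, Finset.sum_congr rfl h2, Finset.sum_const, Finset.sum_const,
    hWA, smul_eq_mul, smul_eq_mul, ncount]
  have : (univ.filter (· ∉ LinearMap.range A.mulVecLin)).card = q ^ m - q ^ A.rank := by omega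
  rw [this]


lemma sum_filter_lt {M : Type*} [AddCommMonoid M] {n k : ℕ} (hk : k ≤ n) (f : Fin n → M) :
    ∑ i ∈ univ.filter (fun i : Fin n => (i : ℕ) < k), f i
      = ∑ j : Fin k, f (Fin.castLE hk j) := by
  rw [← Finset.sum_attach (univ.filter (fun i : Fin n => (i : ℕ) < k)) f]
  apply Finset.sum_bij (fun i _ => (⟨(i.1 : ℕ), by
    have := i.2; simp only [Finset.mem_filter] at this; exact this.2⟩ : Fin k))
  · intro a _; exact Finset.mem_univ _
  · intro a _ b _ h
    simp only [Fin.mk.injEq] at h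
    exact Subtype.ext (Fin.ext h)
  · intro b _
    refine ⟨⟨Fin.castLE hk b, ?_⟩, Finset.mem_attach _ _, ?_⟩
    · simp [Fin.castLE, b.isLt]
    · rfl
  · intro a _
    exact congrArg f (Fin.ext rfl)

/-- the decomposition of an `(m+1) × (m+1)` matrix into a bordered matrix -/
def quadEquiv (F : Type*) [Field F] (m : ℕ) :
    (Matrix (Fin m) (Fin m) F × ((Fin m → F) × (Fin m → F) × F))
      ≃ Matrix (Fin (m + 1)) (Fin (m + 1)) F where
  toFun p := (border p.1 p.2.1 p.2.2.1 p.2.2.2).submatrix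
      (finSumFinEquiv (m := m) (n := 1)).symm (finSumFinEquiv (m := m) (n := 1)).symm
  invFun X :=
    ((X.submatrix (finSumFinEquiv (m := m) (n := 1)) (finSumFinEquiv (m := m) (n := 1))).toBlocks₁₁,
     fun i => (X.submatrix finSumFinEquiv finSumFinEquiv).toBlocks₁₂ i 0,
     fun j => (X.submatrix finSumFinEquiv finSumFinEquiv).toBlocks₂₁ 0 j,
     (X.submatrix finSumFinEquiv finSumFinEquiv).toBlocks₂₂ 0 0)
  left_inv p := by
    obtain ⟨A, u, v, d⟩ := p
    simp only [Prod.mk.injEq]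
    refine ⟨?_, ?_, ?_, ?_⟩
    · ext i j
      simp [border, Matrix.toBlocks₁₁, Matrix.submatrix, fromBlocks, colMat]
    · ext i
      simp [border, Matrix.toBlocks₁₂, Matrix.submatrix, fromBlocks, colMat]
    · ext j
      simp [border, Matrix.toBlocks₂₁, Matrix.submatrix, fromBlocks, colMat]
    · simp [border, Matrix.toBlocks₂₂, Matrix.submatrix, fromBlocks, colMat]
  right_inv X := by
    ext i j
    rcases h1 : finSumFinEquiv.symm i with i' | i' <;>
      rcases h2 : finSumFinEquiv.symm j with j' | j' <;>
      rw [Equiv.symm_apply_eq] at h1 h2 <;> subst h1 <;> subst h2 <;>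
      simp [border, fromBlocks, Matrix.toBlocks₁₁, Matrix.toBlocks₁₂, Matrix.toBlocks₂₁,
        Matrix.toBlocks₂₂, Matrix.submatrix, colMat, Fin.eq_zero]

lemma fcard_succ (q : ℕ) (hq : Fintype.card F = q) (m k : ℕ) (hk : k ≤ m) (α : F) (r : ℕ) :
    fcard F (m + 1) r k α = ∑ s ∈ range (m + 1), fcard F m s k α * ncount q m s r := by
  have hcond : ∀ p : Matrix (Fin m) (Fin m) F × ((Fin m → F) × (Fin m → F) × F),
      ((border p.1 p.2.1 p.2.2.1 p.2.2.2).rank = r ∧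
        (∑ i ∈ univ.filter (fun i : Fin m => (i : ℕ) < k), p.1 i i) = α)
      ↔ ((quadEquiv F m p).rank = r ∧
        (∑ i ∈ univ.filter (fun i : Fin (m+1) => (i : ℕ) < k), (quadEquiv F m p) i i) = α) := by
    intro p
    have h1 : (quadEquiv F m p).rank = (border p.1 p.2.1 p.2.2.1 p.2.2.2).rank :=
      Matrix.rank_submatrix _ finSumFinEquiv.symm finSumFinEquiv.symm
    have h2 : (∑ i ∈ univ.filter (fun i : Fin (m+1) => (i : ℕ) < k), (quadEquiv F m p) i i)
        = (∑ i ∈ univ.filter (fun i : Fin m => (i : ℕ) < k), p.1 i i) := by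
      rw [sum_filter_lt (le_trans hk (Nat.le_add_right m 1)), sum_filter_lt hk]
      apply Finset.sum_congr rfl
      intro j _
      have hcast : finSumFinEquiv.symm (Fin.castLE (le_trans hk (Nat.le_add_right m 1)) j)
          = Sum.inl (Fin.castLE hk j) := by
        have h : Fin.castLE (le_trans hk (Nat.le_add_right m 1)) j
            = Fin.castAdd 1 (Fin.castLE hk j) := rfl
        rw [h, finSumFinEquiv_symm_apply_castAdd]
      show (border p.1 p.2.1 p.2.2.1 p.2.2.2).submatrix _ _ _ _ = _
      simp [Matrix.submatrix_apply, hcast, border, fromBlocks]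
    rw [h1, h2]
  rw [fcard, Nat.card_eq_fintype_card,
    Fintype.card_congr (Equiv.subtypeEquiv (quadEquiv F m) hcond).symm, Fintype.card_subtype,
    Finset.card_filter]
  simp only [Fintype.sum_prod_type]
  have hsplit : ∀ (A : Matrix (Fin m) (Fin m) F) (u v : Fin m → F) (d : F),
      (if ((border A u v d).rank = r ∧
          (∑ i ∈ univ.filter (fun i : Fin m => (i : ℕ) < k), A i i) = α) then (1:ℕ) else 0)
      = (if (∑ i ∈ univ.filter (fun i : Fin m => (i : ℕ) < k), A i i) = α then 1 else 0)
          * (if (border A u v d).rank = r then 1 else 0) := by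
    intro A u v d
    by_cases h1 : (border A u v d).rank = r <;>
      by_cases h2 : (∑ i ∈ univ.filter (fun i : Fin m => (i : ℕ) < k), A i i) = α <;>
      simp [h1, h2]
  simp only [hsplit, ← Finset.mul_sum]
  have hbc : ∀ A : Matrix (Fin m) (Fin m) F,
      (if (∑ i ∈ univ.filter (fun i : Fin m => (i : ℕ) < k), A i i) = α then (1:ℕ) else 0)
        * (∑ u : Fin m → F, ∑ v : Fin m → F, ∑ d : F,
            if (border A u v d).rank = r then (1:ℕ) else 0)
      = (if (∑ i ∈ univ.filter (fun i : Fin m => (i : ℕ) < k), A i i) = α then (1:ℕ) else 0)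
        * ncount q m A.rank r := by
    intro A
    rw [border_count q hq]
  rw [Finset.sum_congr rfl fun A _ => hbc A]
  have hmaps : ∀ A : Matrix (Fin m) (Fin m) F, A ∈ (univ : Finset _) →
      A.rank ∈ range (m + 1) := fun A _ =>
    Finset.mem_range.mpr (Nat.lt_succ_of_le (Matrix.rank_le_width A))
  rw [← Finset.sum_fiberwise_of_maps_to hmaps]
  apply Finset.sum_congr rfl
  intro s hs
  have hcg : ∀ A ∈ univ.filter (fun A : Matrix (Fin m) (Fin m) F => A.rank = s),
      (if (∑ i ∈ univ.filter (fun i : Fin m => (i : ℕ) < k), A i i) = α then (1:ℕ) else 0)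
        * ncount q m A.rank r
      = (if (∑ i ∈ univ.filter (fun i : Fin m => (i : ℕ) < k), A i i) = α then (1:ℕ) else 0)
        * ncount q m s r := by
    intro A hA
    rw [(Finset.mem_filter.mp hA).2]
  rw [Finset.sum_congr rfl hcg, ← Finset.sum_mul]
  congr 1
  rw [fcard, Nat.card_eq_fintype_card, Fintype.card_subtype, Finset.card_filter,
    Finset.sum_filter]
  apply Finset.sum_congr rfl
  intro A _
  by_cases h1 : A.rank = s <;>
    by_cases h2 : (∑ i ∈ univ.filter (fun i : Fin m => (i : ℕ) < k), A i i) = α <;>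
    simp [h1, h2]


lemma ncount_out (q m s : ℕ) (hs : s ≤ m) : ncount q m s (m + 2) = 0 := by
  rcases eq_or_lt_of_le hs with rfl | h
  · have h1 : gcount q s (s + 1) (s + 2) = q ^ (s + 1) - q ^ (s + 1) := by
      simp [gcount, show s + 2 ≠ s + 1 by omega]
    have h2 : gcount q s s (s + 2) = 0 := by
      simp [gcount, show ¬ (s + 2 = s) by omega, show ¬ (s + 2 = s + 1) by omega]
    simp [ncount, h1, h2, Nat.sub_self]
  · have h1 : gcount q m s (m + 2) = 0 := by
      simp [gcount, show ¬ (m + 2 = s) by omega, show ¬ (m + 2 = s + 1) by omega]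
    have h2 : gcount q m (s + 1) (m + 2) = 0 := by
      simp [gcount, show ¬ (m + 2 = s + 1) by omega, show ¬ (m + 2 = s + 1 + 1) by omega, show ¬ (m = s) by omega]
    simp [ncount, h1, h2]

lemma gsum (q m t : ℕ) (hq1 : 1 ≤ q) (ht : t ≤ m + 1) :
    (∑ r ∈ range (m + 3), C ((gcount q m t r : ℚ)) * X ^ r)
      = C ((q:ℚ) ^ t) * X ^ t + C ((q:ℚ) ^ (m + 1) - (q:ℚ) ^ t) * X ^ (t + 1) := by
  have hle : q ^ t ≤ q ^ (m + 1) := Nat.pow_le_pow_right hq1 ht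
  have hpt : ∀ r, C ((gcount q m t r : ℚ)) * X ^ r
      = (if r = t then C ((q:ℚ) ^ t) * X ^ r else 0)
        + (if r = t + 1 then C ((q:ℚ) ^ (m + 1) - (q:ℚ) ^ t) * X ^ r else 0) := by
    intro r
    by_cases h1 : r = t
    · subst h1
      rw [if_pos rfl, if_neg (by omega), add_zero]
      simp [gcount]
    · by_cases h2 : r = t + 1
      · subst h2
        rw [if_neg h1, if_pos rfl, zero_add]
        have hg : gcount q m t (t + 1) = q ^ (m + 1) - q ^ t := by
          simp [gcount, show t + 1 ≠ t by omega]
        rw [hg, Nat.cast_sub hle]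
        push_cast
        ring_nf
      · simp [gcount, h1, h2]
  rw [Finset.sum_congr rfl fun r _ => hpt r, Finset.sum_add_distrib,
    Finset.sum_ite_eq' (range (m + 3)) t, Finset.sum_ite_eq' (range (m + 3)) (t + 1),
    if_pos (Finset.mem_range.mpr (by omega)), if_pos (Finset.mem_range.mpr (by omega))]


end Stmt9Aux

open Stmt9Aux in
theorem stmt9 (F : Type*) [Field F] [Fintype F] (q : ℕ) (hq : Fintype.card F = q)
    (n k : ℕ) (hk1 : 1 ≤ k) (hkn : k < n) (α : F) :
    fpoly F n k α =
      (fpoly F (n - 1) k α).comp (Polynomial.C ((q : ℚ) ^ 2) * Polynomial.X) *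
          ((1 - Polynomial.X) * (1 - Polynomial.C (q : ℚ) * Polynomial.X)) +
      (fpoly F (n - 1) k α).comp (Polynomial.C (q : ℚ) * Polynomial.X) *
          (2 * Polynomial.X * (1 - Polynomial.X) * Polynomial.C ((q : ℚ) ^ n)) +
      fpoly F (n - 1) k α * (Polynomial.X ^ 2 * Polynomial.C ((q : ℚ) ^ (2 * n - 1))) := by
  obtain ⟨m, rfl⟩ : ∃ m, n = m + 1 := ⟨n - 1, by omega⟩
  have hk : k ≤ m := by omega
  have hq1 : 1 ≤ q := by rw [← hq]; exact Fintype.card_pos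
  have hsub1 : m + 1 - 1 = m := by omega
  have hsub2 : 2 * (m + 1) - 1 = 2 * m + 1 := by omega
  rw [hsub1, hsub2]
  have hLHS : fpoly F (m + 1) k α
      = ∑ s ∈ range (m + 1), C ((fcard F m s k α : ℚ))
          * (∑ r ∈ range (m + 3), C ((ncount q m s r : ℚ)) * X ^ r) := by
    unfold fpoly
    calc ∑ r ∈ range (m + 1 + 1), C ((fcard F (m + 1) r k α : ℚ)) * X ^ r
        = ∑ r ∈ range (m + 2), ∑ s ∈ range (m + 1),
            C ((fcard F m s k α : ℚ)) * (C ((ncount q m s r : ℚ)) * X ^ r) := by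
          apply Finset.sum_congr rfl
          intro r _
          rw [fcard_succ q hq m k hk α r, Nat.cast_sum, map_sum, Finset.sum_mul]
          apply Finset.sum_congr rfl
          intro s _
          rw [Nat.cast_mul, Polynomial.C_mul, mul_assoc]
      _ = ∑ s ∈ range (m + 1), ∑ r ∈ range (m + 2),
            C ((fcard F m s k α : ℚ)) * (C ((ncount q m s r : ℚ)) * X ^ r) := Finset.sum_comm
      _ = ∑ s ∈ range (m + 1), C ((fcard F m s k α : ℚ))
            * (∑ r ∈ range (m + 3), C ((ncount q m s r : ℚ)) * X ^ r) := by
          apply Finset.sum_congr rfl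
          intro s hs
          have hs' : s ≤ m := Nat.lt_succ_iff.mp (Finset.mem_range.mp hs)
          rw [Finset.sum_range_succ (fun r => C ((ncount q m s r : ℚ)) * X ^ r) (m + 2),
            ncount_out q m s hs']
          simp only [Nat.cast_zero, map_zero, zero_mul, add_zero]
          rw [Finset.mul_sum]
  have hinner : ∀ s ∈ range (m + 1),
      (∑ r ∈ range (m + 3), C ((ncount q m s r : ℚ)) * X ^ r)
        = C ((q:ℚ) ^ s) * (C ((q:ℚ) ^ s) * X ^ s
            + C ((q:ℚ) ^ (m + 1) - (q:ℚ) ^ s) * X ^ (s + 1))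
          + C ((q:ℚ) ^ m - (q:ℚ) ^ s) * (C ((q:ℚ) ^ (s + 1)) * X ^ (s + 1)
            + C ((q:ℚ) ^ (m + 1) - (q:ℚ) ^ (s + 1)) * X ^ (s + 2)) := by
    intro s hs
    have hs' : s ≤ m := Nat.lt_succ_iff.mp (Finset.mem_range.mp hs)
    have hcast : ∀ r, ((ncount q m s r : ℕ) : ℚ)
        = (q:ℚ) ^ s * (gcount q m s r : ℚ)
          + ((q:ℚ) ^ m - (q:ℚ) ^ s) * (gcount q m (s + 1) r : ℚ) := by
      intro r
      rw [ncount, Nat.cast_add, Nat.cast_mul, Nat.cast_mul,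
        Nat.cast_sub (Nat.pow_le_pow_right hq1 hs')]
      push_cast
      ring
    calc ∑ r ∈ range (m + 3), C ((ncount q m s r : ℚ)) * X ^ r
        = ∑ r ∈ range (m + 3), (C ((q:ℚ) ^ s) * (C ((gcount q m s r : ℚ)) * X ^ r)
            + C ((q:ℚ) ^ m - (q:ℚ) ^ s) * (C ((gcount q m (s + 1) r : ℚ)) * X ^ r)) := by
          apply Finset.sum_congr rfl
          intro r _
          rw [hcast r, Polynomial.C_add, Polynomial.C_mul, Polynomial.C_mul, add_mul, mul_assoc, mul_assoc]
      _ = C ((q:ℚ) ^ s) * (∑ r ∈ range (m + 3), C ((gcount q m s r : ℚ)) * X ^ r)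
            + C ((q:ℚ) ^ m - (q:ℚ) ^ s)
              * (∑ r ∈ range (m + 3), C ((gcount q m (s + 1) r : ℚ)) * X ^ r) := by
          rw [Finset.sum_add_distrib, ← Finset.mul_sum, ← Finset.mul_sum]
      _ = _ := by rw [gsum q m s hq1 (by omega), gsum q m (s + 1) hq1 (by omega)]
  have hcomp : ∀ b : ℚ, (fpoly F m k α).comp (C b * X)
      = ∑ s ∈ range (m + 1), C ((fcard F m s k α : ℚ)) * (C b * X) ^ s := by
    intro b
    unfold fpoly
    rw [Polynomial.sum_comp]
    apply Finset.sum_congr rfl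
    intro s _
    rw [Polynomial.mul_comp, Polynomial.C_comp, Polynomial.pow_comp, Polynomial.X_comp]
  rw [hLHS, hcomp, hcomp,
    show fpoly F m k α = ∑ s ∈ range (m + 1), C ((fcard F m s k α : ℚ)) * X ^ s from rfl,
    Finset.sum_mul, Finset.sum_mul, Finset.sum_mul, ← Finset.sum_add_distrib,
    ← Finset.sum_add_distrib]
  apply Finset.sum_congr rfl
  intro s hs
  rw [hinner s hs]
  simp only [map_sub, map_pow]
  ring
end

section
/- Let F be a finite field with q elements and let n be a positive integer. Let A_m(X) = ∑_{r=0}^{m} a(m,r,q) X^r ∈ ℚ[X], where a(m,r,q) is the number of m×m matrices over F of rank r. Then A_n(X) = A_{n−1}(q²X)·(1−X)(1−qX) + 2X(1−X)q^n·A_{n−1}(qX) + A_{n−1}(X)·X²·q^{2n−1}. -/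
open Matrix Finset Polynomial

/-- `acard F m r` is the number of `m × m` matrices over `F` of rank `r`. -/
noncomputable def acard (F : Type*) [Field F] [Fintype F] (m r : ℕ) : ℕ :=
  Nat.card {X : Matrix (Fin m) (Fin m) F // X.rank = r}

/-- The generating polynomial `A_m(X) = ∑_{r=0}^{m} a(m,r,q) X^r ∈ ℚ[X]`. -/
noncomputable def Apoly (F : Type*) [Field F] [Fintype F] (m : ℕ) : Polynomial ℚ :=
  ∑ r ∈ Finset.range (m + 1), Polynomial.C (acard F m r : ℚ) * Polynomial.X ^ r

namespace Stmt10Aux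

variable {F : Type*} [Field F] [Fintype F]
set_option linter.unusedSectionVars false

local notation "q" => Fintype.card F

lemma inj_iff {r m : ℕ} (g : (Fin r → F) →ₗ[F] (Fin m → F)) :
    Function.Injective g ↔ Module.finrank F (LinearMap.range g) = r := by
  constructor
  · intro h
    rw [LinearMap.finrank_range_of_inj h, Module.finrank_fintype_fun_eq_card, Fintype.card_fin]
  · intro h
    rw [← LinearMap.ker_eq_bot]
    have h2 := LinearMap.finrank_range_add_finrank_ker g
    rw [h, Module.finrank_fintype_fun_eq_card, Fintype.card_fin] at h2
    have h3 : Module.finrank F (LinearMap.ker g) = 0 := by omega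
    exact Submodule.finrank_eq_zero.mp h3

lemma surj_iff {r m : ℕ} (f : (Fin m → F) →ₗ[F] (Fin r → F)) :
    Function.Surjective f ↔ Module.finrank F (LinearMap.range f) = r := by
  rw [← LinearMap.range_eq_top]
  constructor
  · intro h; rw [h, finrank_top, Module.finrank_fintype_fun_eq_card, Fintype.card_fin]
  · intro h
    apply Submodule.eq_top_of_finrank_eq
    rw [h, Module.finrank_fintype_fun_eq_card, Fintype.card_fin]

lemma rank_toMatrix' {a b : ℕ} (g : (Fin a → F) →ₗ[F] (Fin b → F)) :
    (LinearMap.toMatrix' g).rank = Module.finrank F (LinearMap.range g) := by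
  rw [Matrix.rank, ← Matrix.toLin'_apply', Matrix.toLin'_toMatrix']

lemma card_rank_rect {m r : ℕ} (hr : r ≤ m) :
    Nat.card {C : Matrix (Fin m) (Fin r) F // C.rank = r} =
      ∏ i ∈ range r, (q ^ m - q ^ i) := by
  have e : {C : Matrix (Fin m) (Fin r) F // C.rank = r} ≃
      {s : Fin r → (Fin m → F) // LinearIndependent F s} := by
    refine Equiv.subtypeEquiv
      ⟨fun C i j => C j i, fun s => Matrix.of fun j i => s i j, fun C => rfl, fun s => rfl⟩ ?_
    intro C
    rw [Matrix.rank_eq_finrank_span_cols, linearIndependent_iff_card_eq_finrank_span]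
    simp only [Fintype.card_fin, Set.finrank]
    exact eq_comm
  rw [Nat.card_congr e, card_linearIndependent
    (by rwa [Module.finrank_fintype_fun_eq_card, Fintype.card_fin])]
  rw [Module.finrank_fintype_fun_eq_card, Fintype.card_fin]
  exact Fin.prod_univ_eq_prod_range (fun i => q ^ m - q ^ i) r


lemma card_inj {m r : ℕ} (hr : r ≤ m) :
    Nat.card {g : (Fin r → F) →ₗ[F] (Fin m → F) // Function.Injective g} =
      ∏ i ∈ range r, (q ^ m - q ^ i) := by
  rw [← card_rank_rect hr]
  apply Nat.card_congr
  refine Equiv.subtypeEquiv LinearMap.toMatrix'.toEquiv fun g => ?_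
  rw [inj_iff]
  show _ ↔ (LinearMap.toMatrix' g).rank = r
  rw [rank_toMatrix']

lemma card_surj {m r : ℕ} (hr : r ≤ m) :
    Nat.card {f : (Fin m → F) →ₗ[F] (Fin r → F) // Function.Surjective f} =
      ∏ i ∈ range r, (q ^ m - q ^ i) := by
  rw [← card_rank_rect hr]
  apply Nat.card_congr
  refine Equiv.subtypeEquiv
    (LinearMap.toMatrix'.toEquiv.trans
      ⟨fun C => Cᵀ, fun C => Cᵀ, fun C => rfl, fun C => rfl⟩) fun f => ?_
  rw [surj_iff]
  have : ((LinearMap.toMatrix' f)ᵀ).rank = (LinearMap.toMatrix' f).rank :=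
    Matrix.rank_transpose _
  rw [rank_toMatrix'] at this
  rw [show ((LinearMap.toMatrix'.toEquiv.trans
      ⟨fun C => Cᵀ, fun C => Cᵀ, fun C => rfl, fun C => rfl⟩) f) = (LinearMap.toMatrix' f)ᵀ
    from rfl, this]

lemma card_auto (r : ℕ) :
    Nat.card ((Fin r → F) ≃ₗ[F] (Fin r → F)) = ∏ i ∈ range r, (q ^ r - q ^ i) := by
  rw [← card_inj (le_refl r)]
  apply Nat.card_congr
  exact
    { toFun := fun e => ⟨e.toLinearMap, e.injective⟩
      invFun := fun g => LinearMap.linearEquivOfInjective g.1 g.2 rfl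
      left_inv := fun e => by
        ext x
        simp [LinearMap.linearEquivOfInjective_apply]
      right_inv := fun g => by
        ext x
        simp [LinearMap.linearEquivOfInjective_apply] }


noncomputable def eMap {m r : ℕ} (M : Matrix (Fin m) (Fin m) F) (hM : M.rank = r) :
    (Fin r → F) ≃ₗ[F] LinearMap.range M.mulVecLin :=
  LinearEquiv.ofFinrankEq _ _ (by
    rw [Module.finrank_fintype_fun_eq_card, Fintype.card_fin, ← hM]
    rfl)

lemma eMap_coe_congr {m r : ℕ} {M M' : Matrix (Fin m) (Fin m) F} (hMM : M' = M)
    (hM' : M'.rank = r) (hM : M.rank = r) (z : Fin r → F) :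
    (↑(eMap M' hM' z) : Fin m → F) = ↑(eMap M hM z) := by
  subst hMM; rfl

noncomputable def keyEquiv (m r : ℕ) :
    ({f : (Fin m → F) →ₗ[F] (Fin r → F) // Function.Surjective f} ×
      {g : (Fin r → F) →ₗ[F] (Fin m → F) // Function.Injective g}) ≃
    ({M : Matrix (Fin m) (Fin m) F // M.rank = r} × ((Fin r → F) ≃ₗ[F] (Fin r → F))) where
  toFun p :=
    have hcomp : (LinearMap.toMatrix' (p.2.1 ∘ₗ p.1.1)).mulVecLin = p.2.1 ∘ₗ p.1.1 := by
      rw [← Matrix.toLin'_apply', Matrix.toLin'_toMatrix']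
    have hrange : LinearMap.range p.2.1 =
        LinearMap.range (LinearMap.toMatrix' (p.2.1 ∘ₗ p.1.1)).mulVecLin := by
      rw [hcomp, LinearMap.range_comp, LinearMap.range_eq_top.mpr p.1.2, Submodule.map_top]
    have hM : (LinearMap.toMatrix' (p.2.1 ∘ₗ p.1.1)).rank = r := by
      rw [Matrix.rank, ← hrange, ← inj_iff]
      exact p.2.2
    (⟨LinearMap.toMatrix' (p.2.1 ∘ₗ p.1.1), hM⟩,
      (LinearEquiv.ofInjective p.2.1 p.2.2).trans
        ((LinearEquiv.ofEq _ _ hrange).trans (eMap _ hM).symm))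
  invFun p :=
    (⟨p.2.symm.toLinearMap ∘ₗ ((eMap p.1.1 p.1.2).symm.toLinearMap ∘ₗ
        p.1.1.mulVecLin.rangeRestrict), by
      simp only [LinearMap.coe_comp, LinearEquiv.coe_coe]
      exact p.2.symm.surjective.comp ((eMap p.1.1 p.1.2).symm.surjective.comp
        (LinearMap.surjective_rangeRestrict _))⟩,
     ⟨(LinearMap.range p.1.1.mulVecLin).subtype ∘ₗ ((eMap p.1.1 p.1.2).toLinearMap ∘ₗ
        p.2.toLinearMap), by
      simp only [LinearMap.coe_comp, LinearEquiv.coe_coe, Submodule.coe_subtype]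
      exact (Submodule.injective_subtype _).comp
        ((eMap p.1.1 p.1.2).injective.comp p.2.injective)⟩)
  left_inv := by
    rintro ⟨⟨f, hf⟩, ⟨g, hg⟩⟩
    have hcomp : (LinearMap.toMatrix' (g ∘ₗ f)).mulVecLin = g ∘ₗ f := by
      rw [← Matrix.toLin'_apply', Matrix.toLin'_toMatrix']
    refine Prod.ext (Subtype.ext ?_) (Subtype.ext ?_)
    · refine LinearMap.ext fun y => hg ?_
      dsimp only
      simp only [LinearMap.coe_comp, Function.comp_apply, LinearEquiv.coe_coe,
        LinearEquiv.trans_symm, LinearEquiv.trans_apply, LinearEquiv.symm_symm,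
        LinearEquiv.apply_symm_apply]
      rw [LinearEquiv.ofInjective_symm_apply]
      simp [hcomp]
    · ext x
      simp [LinearEquiv.trans_apply]
  right_inv := by
    rintro ⟨⟨M, hM⟩, h⟩
    have hcomp : ((LinearMap.range M.mulVecLin).subtype ∘ₗ ((eMap M hM).toLinearMap ∘ₗ
        h.toLinearMap)) ∘ₗ (h.symm.toLinearMap ∘ₗ ((eMap M hM).symm.toLinearMap ∘ₗ
        M.mulVecLin.rangeRestrict)) = M.mulVecLin := by
      ext x
      simp
    have hMM : LinearMap.toMatrix' (((LinearMap.range M.mulVecLin).subtype ∘ₗ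
        ((eMap M hM).toLinearMap ∘ₗ h.toLinearMap)) ∘ₗ (h.symm.toLinearMap ∘ₗ
        ((eMap M hM).symm.toLinearMap ∘ₗ M.mulVecLin.rangeRestrict))) = M := by
      rw [hcomp, ← Matrix.toLin'_apply', LinearMap.toMatrix'_toLin']
    refine Prod.ext (Subtype.ext ?_) ?_
    · exact hMM
    · refine LinearEquiv.toLinearMap_injective (LinearMap.ext fun y => ?_)
      dsimp only
      simp only [LinearEquiv.coe_coe, LinearEquiv.trans_apply]
      rw [LinearEquiv.symm_apply_eq]
      exact Subtype.ext (eMap_coe_congr hMM _ hM (h y)).symm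


lemma acard_mul_eq {m r : ℕ} (hr : r ≤ m) :
    acard F m r * ∏ i ∈ range r, (q ^ r - q ^ i) =
      (∏ i ∈ range r, (q ^ m - q ^ i)) ^ 2 := by
  have h := Nat.card_congr (keyEquiv (F := F) m r)
  rw [Nat.card_prod, Nat.card_prod, card_surj hr, card_inj hr, card_auto] at h
  rw [acard, ← h, sq]

lemma acard_zero {m r : ℕ} (h : m < r) : acard F m r = 0 := by
  rw [acard, Nat.card_eq_zero]
  left
  refine ⟨fun X => ?_⟩
  have h1 := X.2
  have h2 := Matrix.rank_le_card_width X.1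
  rw [Fintype.card_fin] at h2
  omega


end Stmt10Aux

namespace Stmt10Aux
open Polynomial

noncomputable def cq (Q : ℚ) (m r : ℕ) : ℚ := ∏ i ∈ range r, (Q ^ m - Q ^ i)

lemma cq_zero (Q : ℚ) (m : ℕ) : cq Q m 0 = 1 := by simp [cq]

lemma cq_succ (Q : ℚ) (m r : ℕ) : cq Q m (r + 1) = cq Q m r * (Q ^ m - Q ^ r) :=
  prod_range_succ _ r

lemma cq_step (Q : ℚ) (m r : ℕ) :
    cq Q (m + 1) (r + 1) = (Q ^ (m + 1) - 1) * Q ^ r * cq Q m r := by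
  rw [cq, prod_range_succ']
  simp only [pow_zero]
  rw [show (∏ i ∈ range r, (Q ^ (m + 1) - Q ^ (i + 1))) =
      ∏ i ∈ range r, (Q * (Q ^ m - Q ^ i)) from prod_congr rfl fun i _ => by ring,
    prod_mul_distrib, prod_const, card_range, cq]
  ring

lemma cq_ne_zero {Q : ℚ} (hQ : 1 < Q) {m r : ℕ} (hr : r ≤ m) : cq Q m r ≠ 0 := by
  rw [cq]
  rw [prod_ne_zero_iff]
  intro i hi
  rw [mem_range] at hi
  have h1 : Q ^ i < Q ^ m := pow_lt_pow_right₀ hQ (by omega)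
  intro h
  linarith [sub_eq_zero.mp h]

variable {F : Type*} [Field F] [Fintype F]
set_option linter.unusedSectionVars false

local notation "q" => Fintype.card F

lemma cast_prod_sub {m r : ℕ} (hr : r ≤ m) :
    ((∏ i ∈ range r, (q ^ m - q ^ i) : ℕ) : ℚ) = cq (q : ℚ) m r := by
  rw [Nat.cast_prod, cq]
  refine prod_congr rfl fun i hi => ?_
  rw [mem_range] at hi
  have hle : q ^ i ≤ q ^ m := Nat.pow_le_pow_right Fintype.card_pos (by omega)
  rw [Nat.cast_sub hle, Nat.cast_pow, Nat.cast_pow]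

lemma acard_cast {m r : ℕ} (hr : r ≤ m) :
    (acard F m r : ℚ) = cq (q : ℚ) m r ^ 2 / cq (q : ℚ) r r := by
  have h := acard_mul_eq (F := F) hr
  have h2 := congrArg (fun n : ℕ => (n : ℚ)) h
  simp only [Nat.cast_mul, Nat.cast_pow] at h2
  rw [cast_prod_sub (le_refl r), cast_prod_sub hr] at h2
  have hQ : (1 : ℚ) < (q : ℚ) := by exact_mod_cast Fintype.one_lt_card
  rw [eq_div_iff (cq_ne_zero hQ (le_refl r))]
  exact h2

lemma sum_comp_CX (g : ℕ → ℚ) (M : ℕ) (a : ℚ) :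
    (∑ r ∈ range M, C (g r) * X ^ r).comp (C a * X) =
      ∑ r ∈ range M, C (g r * a ^ r) * X ^ r := by
  simp only [Polynomial.comp, Polynomial.eval₂_finset_sum, eval₂_mul, eval₂_C, eval₂_X_pow,
    mul_pow, ← C_pow]
  refine sum_congr rfl fun r _ => ?_
  rw [← mul_assoc, ← C_mul]

lemma coeff_sum_CX (g : ℕ → ℚ) (M k : ℕ) :
    (∑ r ∈ range M, C (g r) * X ^ r).coeff k = if k < M then g k else 0 := by
  rw [Polynomial.finset_sum_coeff]
  simp only [coeff_C_mul, coeff_X_pow, mul_ite, mul_one, mul_zero]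
  rw [Finset.sum_ite_eq (range M) k g]
  simp [mem_range]

lemma expand_poly (Q : ℚ) (N : ℕ) (p1 p2 p3 : Polynomial ℚ) :
    p1 * ((1 - X) * (1 - C Q * X)) + 2 * X * (1 - X) * C (Q ^ (N + 1)) * p2 +
        p3 * (X ^ 2 * C (Q ^ (2 * N + 1))) =
      p1 - C (1 + Q) * (p1 * X ^ 1) + C Q * (p1 * X ^ 2) +
        C (2 * Q ^ (N + 1)) * (p2 * X ^ 1) - C (2 * Q ^ (N + 1)) * (p2 * X ^ 2) +
        C (Q ^ (2 * N + 1)) * (p3 * X ^ 2) := by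
  simp only [C_add, C_mul, C_1, map_ofNat]
  ring

end Stmt10Aux


open Stmt10Aux

set_option maxHeartbeats 2000000 in
theorem stmt10 (F : Type*) [Field F] [Fintype F] (q : ℕ) (hq : Fintype.card F = q)
    (n : ℕ) (hn : 0 < n) :
    Apoly F n =
      (Apoly F (n - 1)).comp (Polynomial.C ((q : ℚ) ^ 2) * Polynomial.X) *
          ((1 - Polynomial.X) * (1 - Polynomial.C (q : ℚ) * Polynomial.X)) +
      2 * Polynomial.X * (1 - Polynomial.X) * Polynomial.C ((q : ℚ) ^ n) *
          (Apoly F (n - 1)).comp (Polynomial.C (q : ℚ) * Polynomial.X) +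
      Apoly F (n - 1) * (Polynomial.X ^ 2 * Polynomial.C ((q : ℚ) ^ (2 * n - 1))) := by
  subst hq
  obtain ⟨N, rfl⟩ : ∃ N, n = N + 1 := ⟨n - 1, (Nat.succ_pred_eq_of_pos hn).symm⟩
  have h2n : 2 * (N + 1) - 1 = 2 * N + 1 := by omega
  rw [h2n, Nat.add_sub_cancel]
  have hQ : (1 : ℚ) < ((Fintype.card F : ℕ) : ℚ) := by exact_mod_cast Fintype.one_lt_card
  set Q : ℚ := ((Fintype.card F : ℕ) : ℚ) with hQdef
  have hQ0 : Q ≠ 0 := by linarith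
  simp only [Apoly]
  rw [sum_comp_CX, sum_comp_CX, expand_poly]
  refine Polynomial.ext fun k => ?_
  simp only [Polynomial.coeff_sub, Polynomial.coeff_add, Polynomial.coeff_C_mul,
    Polynomial.coeff_mul_X_pow', coeff_sum_CX]
  have hone : ∀ i : ℕ, Q ^ (i + 1) - 1 ≠ 0 := fun i => by
    have h1 : (1 : ℚ) < Q ^ (i + 1) := one_lt_pow₀ hQ (by omega)
    intro h
    linarith [sub_eq_zero.mp h]
  have hdif : ∀ i : ℕ, Q ^ (i + 1) - Q ^ i ≠ 0 := fun i => by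
    have h1 : Q ^ i < Q ^ (i + 1) := pow_lt_pow_right₀ hQ (by omega)
    intro h
    linarith [sub_eq_zero.mp h]
  obtain _ | _ | j := k
  · -- k = 0
    split_ifs <;> try omega
    rw [acard_cast (Nat.zero_le _), acard_cast (Nat.zero_le _), ← hQdef]
    simp [cq_zero]
  · -- k = 1
    obtain hN | hN : N = 0 ∨ 1 ≤ N := by omega
    · subst hN
      split_ifs <;> try omega
      rw [acard_cast le_rfl, acard_cast (Nat.zero_le _), ← hQdef]
      simp only [cq, zero_add, prod_range_one, prod_range_zero, pow_zero, pow_one]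
      have nz : Q - 1 ≠ 0 := by
        have := hone 0
        simpa using this
      field_simp
      ring
    · split_ifs <;> try omega
      rw [acard_cast (by omega : 1 ≤ N + 1), acard_cast hN, acard_cast (Nat.zero_le _), ← hQdef]
      simp only [cq, prod_range_one, prod_range_zero, pow_zero, pow_one]
      have nz : Q - 1 ≠ 0 := by
        have := hone 0
        simpa using this
      field_simp
      ring
  · -- k = j + 2
    simp only [show j + 2 - 1 = j + 1 from rfl, show j + 2 - 2 = j from rfl]
    have nz0 : cq Q j j ≠ 0 := cq_ne_zero hQ le_rfl
    have p0 : Q ^ j ≠ 0 := pow_ne_zero _ hQ0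
    have p1 : Q ^ (j + 1) ≠ 0 := pow_ne_zero _ hQ0
    have p2 : Q ^ (j + 2) ≠ 0 := pow_ne_zero _ hQ0
    have n1 : Q ^ (j + 1) - 1 ≠ 0 := hone j
    have n2 : Q ^ (j + 2) - 1 ≠ 0 := hone (j + 1)
    have d1 : Q ^ (j + 1) - Q ^ j ≠ 0 := hdif j
    have e4 : cq Q (j + 2) (j + 2) = (Q ^ (j + 2) - 1) * Q ^ (j + 1) * cq Q (j + 1) (j + 1) :=
      cq_step Q (j + 1) (j + 1)
    have e5 : cq Q (j + 1) (j + 1) = (Q ^ (j + 1) - 1) * Q ^ j * cq Q j j := cq_step Q j j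
    obtain hc | hc | hc | hc : j + 1 < N ∨ N = j + 1 ∨ N = j ∨ N < j := by omega
    · -- case a
      split_ifs <;> try omega
      rw [acard_cast (by omega : j + 2 ≤ N + 1), acard_cast (by omega : j + 2 ≤ N),
        acard_cast (by omega : j + 1 ≤ N), acard_cast (by omega : j ≤ N), ← hQdef]
      have e1 : cq Q (N + 1) (j + 2) = (Q ^ (N + 1) - 1) * Q ^ (j + 1) * cq Q N (j + 1) :=
        cq_step Q N (j + 1)
      have e2 : cq Q N (j + 2) = cq Q N (j + 1) * (Q ^ N - Q ^ (j + 1)) := cq_succ Q N (j + 1)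
      have e3 : cq Q N (j + 1) = cq Q N j * (Q ^ N - Q ^ j) := cq_succ Q N j
      rw [e1, e2, e3, e4, e5]
      field_simp
      ring
    · -- case b
      subst hc
      split_ifs <;> try omega
      rw [acard_cast le_rfl, acard_cast le_rfl, acard_cast (by omega : j ≤ j + 1), ← hQdef]
      have hu : cq Q (j + 1) j = (Q ^ (j + 1) - 1) * Q ^ j * cq Q j j / (Q ^ (j + 1) - Q ^ j) := by
        rw [eq_div_iff (hdif j), ← cq_succ Q (j + 1) j]
        exact cq_step Q j j
      rw [e4, e5, hu]
      field_simp
      ring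
    · -- case c
      subst hc
      split_ifs <;> try omega
      ring
    · -- case d
      split_ifs <;> try omega
      ring
end

section
/- Let F be a finite field with q elements, let 1 ≤ k < n, and let g_{m,k}(X) = ∑_{r≥0} (f^0_{m,r,k} − f^1_{m,r,k}) X^r ∈ ℚ[X]. Then g_{n,k}(X) = g_{n−1,k}(q²X)·(1−X)(1−qX) + 2X(1−X)q^n·g_{n−1,k}(qX) + g_{n−1,k}(X)·X²·q^{2n−1}. -/
open Matrix Finset Polynomial

/-- `g_{m,k}(X) = ∑_{r ≥ 0} (f^0_{m,r,k} - f^1_{m,r,k}) X^r ∈ ℚ[X]`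
(the terms with `r > m` vanish since the rank of an `m × m` matrix is at most `m`). -/
noncomputable def gpoly (F : Type*) [Field F] [Fintype F] (m k : ℕ) : Polynomial ℚ :=
  ∑ r ∈ Finset.range (m + 1),
    Polynomial.C ((fcard F m r k 0 : ℚ) - (fcard F m r k 1 : ℚ)) * Polynomial.X ^ r

set_option linter.unusedSectionVars false
set_option maxHeartbeats 800000

namespace S11

variable {F : Type*} [Field F]

section RankAppend

variable {p m : Type*} [Fintype p] [Fintype m] [DecidableEq p] [DecidableEq m]

lemma col_eq_tr {a b : Type*} (A : Matrix a b F) : A.col = Aᵀ := rfl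

lemma cols_fromColumns_col (B : Matrix p m F) (u : p → F) :
    Set.range (Matrix.fromCols B (Matrix.replicateCol (Fin 1) u))ᵀ = insert u (Set.range Bᵀ) := by
  rw [Matrix.transpose_fromCols]
  have h1 : Set.range (Matrix.fromRows Bᵀ (Matrix.replicateCol (Fin 1) u)ᵀ)
      = Set.range Bᵀ ∪ Set.range (Matrix.replicateCol (Fin 1) u)ᵀ := Set.Sum.elim_range _ _
  have h2 : Set.range (Matrix.replicateCol (Fin 1) u)ᵀ = {u} := by
    ext v
    constructor
    · rintro ⟨i, rfl⟩; rfl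
    · rintro rfl; exact ⟨0, rfl⟩
  rw [h1, h2, Set.union_singleton]

lemma rank_fromColumns_col_of_mem (B : Matrix p m F) (u : p → F)
    (h : u ∈ LinearMap.range B.mulVecLin) :
    (Matrix.fromCols B (Matrix.replicateCol (Fin 1) u)).rank = B.rank := by
  rw [Matrix.rank_eq_finrank_span_cols, col_eq_tr, cols_fromColumns_col,
    Submodule.span_insert_eq_span (by rwa [Matrix.range_mulVecLin] at h),
    ← col_eq_tr, ← Matrix.rank_eq_finrank_span_cols]

lemma rank_fromColumns_col_of_not_mem (B : Matrix p m F) (u : p → F)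
    (h : u ∉ LinearMap.range B.mulVecLin) :
    (Matrix.fromCols B (Matrix.replicateCol (Fin 1) u)).rank = B.rank + 1 := by
  rw [Matrix.range_mulVecLin, col_eq_tr] at h
  rw [Matrix.rank_eq_finrank_span_cols, col_eq_tr, cols_fromColumns_col, Submodule.span_insert]
  have hinf : (F ∙ u) ⊓ Submodule.span F (Set.range Bᵀ) = ⊥ := by
    rw [Submodule.eq_bot_iff]
    rintro x ⟨hx1, hx2⟩
    rcases Submodule.mem_span_singleton.mp hx1 with ⟨t, rfl⟩
    by_contra hne
    have ht : t ≠ 0 := by rintro rfl; simp at hne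
    exact h (by simpa [ht] using Submodule.smul_mem _ t⁻¹ hx2)
  have key := Submodule.finrank_sup_add_finrank_inf_eq (F ∙ u) (Submodule.span F (Set.range Bᵀ))
  rw [hinf] at key
  simp only [finrank_bot, add_zero] at key
  have hu0 : u ≠ 0 := by rintro rfl; exact h (Submodule.zero_mem _)
  rw [key, finrank_span_singleton hu0, ← col_eq_tr, ← Matrix.rank_eq_finrank_span_cols]
  ring

lemma rank_fromRows_row_of_mem (B : Matrix p m F) (c : m → F)
    (h : c ∈ LinearMap.range B.vecMulLinear) :
    (Matrix.fromRows B (Matrix.replicateRow (Fin 1) c)).rank = B.rank := by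
  rw [← Matrix.rank_transpose, Matrix.transpose_fromRows, Matrix.transpose_replicateRow,
    rank_fromColumns_col_of_mem _ _ (by rwa [Matrix.mulVecLin_transpose]),
    Matrix.rank_transpose]

lemma rank_fromRows_row_of_not_mem (B : Matrix p m F) (c : m → F)
    (h : c ∉ LinearMap.range B.vecMulLinear) :
    (Matrix.fromRows B (Matrix.replicateRow (Fin 1) c)).rank = B.rank + 1 := by
  rw [← Matrix.rank_transpose, Matrix.transpose_fromRows, Matrix.transpose_replicateRow,
    rank_fromColumns_col_of_not_mem _ _ (by rwa [Matrix.mulVecLin_transpose]),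
    Matrix.rank_transpose]

end RankAppend

section Border

variable {ι : Type*} [Fintype ι] [DecidableEq ι]


/-- If `c` is not in the row space of `A`, there is a kernel vector on which `c` is nonzero. -/
lemma exists_ker_dot_ne_zero (A : Matrix ι ι F) (c : ι → F)
    (hc : c ∉ LinearMap.range A.vecMulLinear) :
    ∃ y, A *ᵥ y = 0 ∧ c ⬝ᵥ y ≠ 0 := by
  classical
  set B₁ : Matrix (ι ⊕ Fin 1) ι F := Matrix.fromRows A (Matrix.replicateRow (Fin 1) c) with hB₁
  have hB₁mul : ∀ x, B₁ *ᵥ x = Sum.elim (A *ᵥ x) (fun _ => c ⬝ᵥ x) := by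
    intro x
    ext (i | j)
    · rfl
    · rfl
  have hrank : B₁.rank = A.rank + 1 := rank_fromRows_row_of_not_mem A c hc
  set W := LinearMap.range B₁.mulVecLin with hW
  set π : ((ι ⊕ Fin 1) → F) →ₗ[F] (ι → F) := LinearMap.funLeft F F Sum.inl with hπ
  have hcomp : π ∘ₗ B₁.mulVecLin = A.mulVecLin := by
    apply LinearMap.ext
    intro x
    ext i
    simp only [LinearMap.comp_apply, Matrix.mulVecLin_apply, hπ, LinearMap.funLeft_apply,
      Function.comp_apply, hB₁mul]
    rfl
  set f : W →ₗ[F] (ι → F) := π ∘ₗ W.subtype with hf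
  have hrangef : LinearMap.range f = LinearMap.range A.mulVecLin := by
    rw [hf, LinearMap.range_comp, Submodule.range_subtype, ← hcomp, LinearMap.range_comp]
  have hfinW : Module.finrank F W = A.rank + 1 := hrank
  have hrn := LinearMap.finrank_range_add_finrank_ker f
  rw [hfinW, hrangef] at hrn
  have hker : Module.finrank F (LinearMap.ker f) = 1 := by
    have : Module.finrank F (LinearMap.range A.mulVecLin) = A.rank := rfl
    omega
  have hkerne : LinearMap.ker f ≠ ⊥ := by
    intro hbot
    rw [hbot] at hker
    simp [finrank_bot] at hker
  rcases (Submodule.ne_bot_iff _).mp hkerne with ⟨⟨w, hwW⟩, hwker, hwne⟩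
  have hπw : π w = 0 := hwker
  have hwinl : ∀ i, w (Sum.inl i) = 0 := by
    intro i
    have := congrFun hπw i
    simpa [hπ, LinearMap.funLeft_apply] using this
  have ht : w (Sum.inr 0) ≠ 0 := by
    intro h0
    apply hwne
    apply Subtype.ext
    funext z
    rcases z with i | j
    · exact hwinl i
    · rw [Subsingleton.elim j 0]; exact h0
  rcases hwW with ⟨y, hy⟩
  refine ⟨y, ?_, ?_⟩
  · funext i
    have : (B₁ *ᵥ y) (Sum.inl i) = w (Sum.inl i) := by rw [← Matrix.mulVecLin_apply, hy]
    rw [hB₁mul] at this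
    simpa [hwinl i] using this
  · have h2 : (B₁ *ᵥ y) (Sum.inr 0) = w (Sum.inr 0) := by rw [← Matrix.mulVecLin_apply, hy]
    rw [hB₁mul] at h2
    simp only [Sum.elim_inr] at h2
    rw [h2]
    exact ht

lemma exists_mulVec_eq (A : Matrix ι ι F) (c : ι → F)
    (hc : c ∉ LinearMap.range A.vecMulLinear) {b : ι → F}
    (hb : b ∈ LinearMap.range A.mulVecLin) (d : F) :
    ∃ x, A *ᵥ x = b ∧ c ⬝ᵥ x = d := by
  rcases hb with ⟨x₀, hx₀⟩
  rcases exists_ker_dot_ne_zero A c hc with ⟨y, hy0, hyc⟩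
  refine ⟨x₀ + ((d - c ⬝ᵥ x₀) / (c ⬝ᵥ y)) • y, ?_, ?_⟩
  · rw [Matrix.mulVec_add, Matrix.mulVec_smul, hy0]
    simpa using hx₀
  · rw [dotProduct_add, dotProduct_smul, smul_eq_mul]
    field_simp
    ring


/-- The `(m+1) × (m+1)` bordered matrix `[[A, b], [c, d]]`. -/
def border (A : Matrix ι ι F) (b c : ι → F) (d : F) : Matrix (ι ⊕ Fin 1) (ι ⊕ Fin 1) F :=
  Matrix.fromCols (Matrix.fromRows A (Matrix.replicateRow (Fin 1) c))
    (Matrix.replicateCol (Fin 1) (Sum.elim b (fun _ => d)))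

lemma border_apply_inl_inl (A : Matrix ι ι F) (b c : ι → F) (d : F) (i j : ι) :
    border A b c d (Sum.inl i) (Sum.inl j) = A i j := rfl

lemma fromRows_row_mulVec (A : Matrix ι ι F) (c : ι → F) (x : ι → F) :
    Matrix.fromRows A (Matrix.replicateRow (Fin 1) c) *ᵥ x = Sum.elim (A *ᵥ x) (fun _ => c ⬝ᵥ x) := by
  ext (i | j) <;> rfl

lemma mem_colspace_iff (A : Matrix ι ι F) (c : ι → F) (b : ι → F) (d : F) :
    (Sum.elim b fun _ => d) ∈
        LinearMap.range (Matrix.fromRows A (Matrix.replicateRow (Fin 1) c)).mulVecLin ↔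
      ∃ x, A *ᵥ x = b ∧ c ⬝ᵥ x = d := by
  constructor
  · rintro ⟨x, hx⟩
    rw [Matrix.mulVecLin_apply, fromRows_row_mulVec] at hx
    refine ⟨x, ?_, ?_⟩
    · funext i; exact congrFun hx (Sum.inl i)
    · exact congrFun hx (Sum.inr 0)
  · rintro ⟨x, hx1, hx2⟩
    refine ⟨x, ?_⟩
    rw [Matrix.mulVecLin_apply, fromRows_row_mulVec, hx1, hx2]

lemma rank_border_case1a (A : Matrix ι ι F) (v : ι → F) (b c : ι → F) (d : F)
    (hc : c = v ᵥ* A) (hb : b ∈ LinearMap.range A.mulVecLin) (hd : d = v ⬝ᵥ b) :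
    (border A b c d).rank = A.rank := by
  have hcmem : c ∈ LinearMap.range A.vecMulLinear := ⟨v, hc.symm⟩
  have hB₁ : (Matrix.fromRows A (Matrix.replicateRow (Fin 1) c)).rank = A.rank :=
    rank_fromRows_row_of_mem A c hcmem
  rcases hb with ⟨x₀, hx₀⟩
  rw [border, rank_fromColumns_col_of_mem, hB₁]
  rw [mem_colspace_iff]
  refine ⟨x₀, hx₀, ?_⟩
  rw [hc, ← Matrix.dotProduct_mulVec, Matrix.mulVecLin_apply] at *
  rw [hx₀, hd]

lemma rank_border_case1b (A : Matrix ι ι F) (v : ι → F) (b c : ι → F) (d : F)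
    (hc : c = v ᵥ* A) (hd : d ≠ v ⬝ᵥ b) :
    (border A b c d).rank = A.rank + 1 := by
  have hcmem : c ∈ LinearMap.range A.vecMulLinear := ⟨v, hc.symm⟩
  have hB₁ : (Matrix.fromRows A (Matrix.replicateRow (Fin 1) c)).rank = A.rank :=
    rank_fromRows_row_of_mem A c hcmem
  rw [border, rank_fromColumns_col_of_not_mem, hB₁]
  rw [mem_colspace_iff]
  rintro ⟨x, hx1, hx2⟩
  apply hd
  rw [← hx2, hc, ← Matrix.dotProduct_mulVec, hx1]

lemma rank_border_case2 (A : Matrix ι ι F) (b c : ι → F) (d : F)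
    (hc : c ∈ LinearMap.range A.vecMulLinear) (hb : b ∉ LinearMap.range A.mulVecLin) :
    (border A b c d).rank = A.rank + 1 := by
  have hB₁ : (Matrix.fromRows A (Matrix.replicateRow (Fin 1) c)).rank = A.rank :=
    rank_fromRows_row_of_mem A c hc
  rw [border, rank_fromColumns_col_of_not_mem, hB₁]
  rw [mem_colspace_iff]
  rintro ⟨x, hx1, hx2⟩
  exact hb ⟨x, hx1⟩

lemma rank_border_case3 (A : Matrix ι ι F) (b c : ι → F) (d : F)
    (hc : c ∉ LinearMap.range A.vecMulLinear) (hb : b ∈ LinearMap.range A.mulVecLin) :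
    (border A b c d).rank = A.rank + 1 := by
  have hB₁ : (Matrix.fromRows A (Matrix.replicateRow (Fin 1) c)).rank = A.rank + 1 :=
    rank_fromRows_row_of_not_mem A c hc
  rw [border, rank_fromColumns_col_of_mem, hB₁]
  rw [mem_colspace_iff]
  exact exists_mulVec_eq A c hc hb d

lemma rank_border_case4 (A : Matrix ι ι F) (b c : ι → F) (d : F)
    (hc : c ∉ LinearMap.range A.vecMulLinear) (hb : b ∉ LinearMap.range A.mulVecLin) :
    (border A b c d).rank = A.rank + 2 := by
  have hB₁ : (Matrix.fromRows A (Matrix.replicateRow (Fin 1) c)).rank = A.rank + 1 :=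
    rank_fromRows_row_of_not_mem A c hc
  rw [border, rank_fromColumns_col_of_not_mem, hB₁]
  rw [mem_colspace_iff]
  rintro ⟨x, hx1, hx2⟩
  exact hb ⟨x, hx1⟩

end Border


section Counting

variable {ι : Type*} [Fintype ι] [DecidableEq ι] [Fintype F] [DecidableEq F]

/-- number of `d`'s in case 1 -/
def w1 (q s r : ℕ) : ℕ := if r = s then 1 else if r = s + 1 then q - 1 else 0

/-- the total weight: number of `(b,c,d)` triples turning a rank-`s` matrix into a
rank-`r` bordered matrix. -/
def wt (q μ s r : ℕ) : ℕ :=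
  q ^ s * (q ^ s * w1 q s r + (q ^ μ - q ^ s) * (if r = s + 1 then q else 0)) +
    (q ^ μ - q ^ s) *
      (q ^ s * (if r = s + 1 then q else 0) + (q ^ μ - q ^ s) * (if r = s + 2 then q else 0))

lemma card_d_case1 (A : Matrix ι ι F) (v b c : ι → F) (r : ℕ)
    (hc : c = v ᵥ* A) (hb : b ∈ LinearMap.range A.mulVecLin) :
    (univ.filter fun d : F => (border A b c d).rank = r).card = w1 (Fintype.card F) A.rank r := by
  rcases eq_or_ne r A.rank with hr | hr
  · have : (univ.filter fun d : F => (border A b c d).rank = r) = {v ⬝ᵥ b} := by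
      ext d
      simp only [Finset.mem_filter, Finset.mem_univ, true_and, Finset.mem_singleton]
      constructor
      · intro h
        by_contra hd
        rw [rank_border_case1b A v b c d hc hd] at h
        omega
      · intro hd
        rw [rank_border_case1a A v b c d hc hb hd, hr]
    rw [this, w1, if_pos hr, Finset.card_singleton]
  · rcases eq_or_ne r (A.rank + 1) with hr1 | hr1
    · have : (univ.filter fun d : F => (border A b c d).rank = r) = univ.erase (v ⬝ᵥ b) := by
        ext d
        simp only [Finset.mem_filter, Finset.mem_univ, true_and, Finset.mem_erase, and_true]
        constructor
        · intro h hd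
          rw [rank_border_case1a A v b c d hc hb hd] at h
          omega
        · intro hd
          rw [rank_border_case1b A v b c d hc hd, hr1]
      rw [this, w1, if_neg hr, if_pos hr1, Finset.card_erase_of_mem (Finset.mem_univ _),
        Finset.card_univ]
    · have : (univ.filter fun d : F => (border A b c d).rank = r) = ∅ := by
        ext d
        simp only [Finset.mem_filter, Finset.mem_univ, true_and, Finset.notMem_empty, iff_false]
        intro h
        by_cases hd : d = v ⬝ᵥ b
        · rw [rank_border_case1a A v b c d hc hb hd] at h; omega
        · rw [rank_border_case1b A v b c d hc hd] at h; omega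
      rw [this, w1, if_neg hr, if_neg hr1, Finset.card_empty]

lemma card_d_const (A : Matrix ι ι F) (b c : ι → F) (r e : ℕ)
    (h : ∀ d : F, (border A b c d).rank = A.rank + e) :
    (univ.filter fun d : F => (border A b c d).rank = r).card =
      if r = A.rank + e then Fintype.card F else 0 := by
  rcases eq_or_ne r (A.rank + e) with hr | hr
  · rw [if_pos hr]
    rw [Finset.filter_true_of_mem (fun d _ => by rw [h d, hr]), Finset.card_univ]
  · rw [if_neg hr]
    rw [Finset.filter_false_of_mem (fun d _ => by rw [h d]; omega), Finset.card_empty]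

open scoped Classical in
lemma card_col (A : Matrix ι ι F) :
    (univ.filter fun b : ι → F => b ∈ LinearMap.range A.mulVecLin).card
      = Fintype.card F ^ A.rank := by
  rw [← Fintype.card_subtype, Fintype.card_eq_nat_card, Nat.card_eq_fintype_card]
  exact Module.card_eq_pow_finrank

open scoped Classical in
lemma card_row (A : Matrix ι ι F) :
    (univ.filter fun c : ι → F => c ∈ LinearMap.range A.vecMulLinear).card
      = Fintype.card F ^ A.rank := by
  rw [← Fintype.card_subtype, Fintype.card_eq_nat_card, Nat.card_eq_fintype_card]
  refine (Module.card_eq_pow_finrank (K := F)).trans ?_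
  congr 1
  rw [_root_.range_vecMulLinear, ← Matrix.rank_eq_finrank_span_row]

open scoped Classical in
lemma card_not_mem (S : Submodule F (ι → F)) (hS : (univ.filter fun b : ι → F => b ∈ S).card = Fintype.card F ^ A₀) :
    (univ.filter fun b : ι → F => b ∉ S).card
      = Fintype.card F ^ Fintype.card ι - Fintype.card F ^ A₀ := by
  have := Finset.card_filter_add_card_filter_not (s := (univ : Finset (ι → F)))
    (p := fun b => b ∈ S)
  rw [hS, Finset.card_univ, Fintype.card_fun] at this
  omega

open scoped Classical in
lemma card_triples (A : Matrix ι ι F) (r : ℕ) :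
    Nat.card {t : (ι → F) × (ι → F) × F // (border A t.1 t.2.1 t.2.2).rank = r}
      = wt (Fintype.card F) (Fintype.card ι) A.rank r := by
  set q := Fintype.card F
  set μ := Fintype.card ι
  set s := A.rank
  rw [Nat.card_eq_fintype_card, Fintype.card_subtype, Finset.card_filter]
  simp only [Fintype.sum_prod_type]
  have hd : ∀ b c : ι → F, (∑ d : F, if (border A b c d).rank = r then 1 else 0)
      = (univ.filter fun d : F => (border A b c d).rank = r).card := by
    intro b c
    rw [Finset.card_filter]
  simp only [hd]
  rw [Finset.sum_comm]
  rw [← Finset.sum_filter_add_sum_filter_not univ (fun c : ι → F =>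
    c ∈ LinearMap.range A.vecMulLinear)]
  have h1 : ∑ c ∈ univ.filter (fun c : ι → F => c ∈ LinearMap.range A.vecMulLinear),
      (∑ b : ι → F, (univ.filter fun d : F => (border A b c d).rank = r).card)
      = q ^ s * (q ^ s * w1 q s r + (q ^ μ - q ^ s) * (if r = s + 1 then q else 0)) := by
    rw [Finset.sum_congr rfl (g := fun _ =>
        q ^ s * w1 q s r + (q ^ μ - q ^ s) * (if r = s + 1 then q else 0))]
    · rw [Finset.sum_const, card_row, smul_eq_mul]
    · intro c hc
      rw [Finset.mem_filter] at hc
      obtain ⟨v, hv⟩ := hc.2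
      have hcv : c = v ᵥ* A := hv.symm
      rw [← Finset.sum_filter_add_sum_filter_not univ (fun b : ι → F =>
        b ∈ LinearMap.range A.mulVecLin)]
      congr 1
      · rw [Finset.sum_congr rfl (g := fun _ => w1 q s r)]
        · rw [Finset.sum_const, card_col, smul_eq_mul]
        · intro b hb
          rw [Finset.mem_filter] at hb
          exact card_d_case1 A v b c r hcv hb.2
      · rw [Finset.sum_congr rfl (g := fun _ => if r = s + 1 then q else 0)]
        · rw [Finset.sum_const, card_not_mem _ (card_col A), smul_eq_mul]
        · intro b hb
          rw [Finset.mem_filter] at hb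
          exact card_d_const A b c r 1 (fun d => rank_border_case2 A b c d hc.2 hb.2)
  have h2 : ∑ c ∈ univ.filter (fun c : ι → F => ¬ c ∈ LinearMap.range A.vecMulLinear),
      (∑ b : ι → F, (univ.filter fun d : F => (border A b c d).rank = r).card)
      = (q ^ μ - q ^ s) *
          (q ^ s * (if r = s + 1 then q else 0) + (q ^ μ - q ^ s) * (if r = s + 2 then q else 0)) := by
    rw [Finset.sum_congr rfl (g := fun _ =>
        q ^ s * (if r = s + 1 then q else 0) + (q ^ μ - q ^ s) * (if r = s + 2 then q else 0))]
    · rw [Finset.sum_const, card_not_mem _ (card_row A), smul_eq_mul]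
    · intro c hc
      rw [Finset.mem_filter] at hc
      rw [← Finset.sum_filter_add_sum_filter_not univ (fun b : ι → F =>
        b ∈ LinearMap.range A.mulVecLin)]
      congr 1
      · rw [Finset.sum_congr rfl (g := fun _ => if r = s + 1 then q else 0)]
        · rw [Finset.sum_const, card_col, smul_eq_mul]
        · intro b hb
          rw [Finset.mem_filter] at hb
          exact card_d_const A b c r 1 (fun d => rank_border_case3 A b c d hc.2 hb.2)
      · rw [Finset.sum_congr rfl (g := fun _ => if r = s + 2 then q else 0)]
        · rw [Finset.sum_const, card_not_mem _ (card_col A), smul_eq_mul]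
        · intro b hb
          rw [Finset.mem_filter] at hb
          exact card_d_const A b c r 2 (fun d => rank_border_case4 A b c d hc.2 hb.2)
  rw [h1, h2, wt]

end Counting

section Assembly

variable [Fintype F] [DecidableEq F]

/-- the `k`-trace -/
def ktr (m k : ℕ) (X : Matrix (Fin m) (Fin m) F) : F :=
  ∑ i ∈ Finset.univ.filter (fun i : Fin m => (i : ℕ) < k), X i i

/-- the decomposition bijection -/
def Phi (m : ℕ) (t : Matrix (Fin m) (Fin m) F × ((Fin m → F) × (Fin m → F) × F)) :
    Matrix (Fin (m + 1)) (Fin (m + 1)) F :=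
  (border t.1 t.2.1 t.2.2.1 t.2.2.2).submatrix
    (finSumFinEquiv (m := m) (n := 1)).symm (finSumFinEquiv (m := m) (n := 1)).symm

def Psi (m : ℕ) (X : Matrix (Fin (m + 1)) (Fin (m + 1)) F) :
    Matrix (Fin m) (Fin m) F × ((Fin m → F) × (Fin m → F) × F) :=
  (Matrix.of fun i j => X (finSumFinEquiv (Sum.inl i)) (finSumFinEquiv (Sum.inl j)),
   fun i => X (finSumFinEquiv (Sum.inl i)) (finSumFinEquiv (Sum.inr 0)),
   fun j => X (finSumFinEquiv (Sum.inr 0)) (finSumFinEquiv (Sum.inl j)),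
   X (finSumFinEquiv (Sum.inr 0)) (finSumFinEquiv (Sum.inr 0)))

lemma border_apply (A : Matrix (Fin m) (Fin m) F) (b c : Fin m → F) (d : F) :
    ∀ i j, border A b c d i j =
      Sum.elim (fun i' => Sum.elim (fun j' => A i' j') (fun _ => b i') j)
        (fun _ => Sum.elim (fun j' => c j') (fun _ => d) j) i := by
  rintro (i | i) (j | j) <;> rfl

def PhiEquiv (m : ℕ) :
    (Matrix (Fin m) (Fin m) F × ((Fin m → F) × (Fin m → F) × F)) ≃
      Matrix (Fin (m + 1)) (Fin (m + 1)) F where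
  toFun := Phi m
  invFun := Psi m
  left_inv := by
    rintro ⟨A, b, c, d⟩
    have key : ∀ z : Fin m ⊕ Fin 1, ∀ w : Fin m ⊕ Fin 1,
        Phi m (A, b, c, d) (finSumFinEquiv z) (finSumFinEquiv w) = border A b c d z w := by
      intro z w
      simp [Phi, Matrix.submatrix_apply]
    refine Prod.ext ?_ (Prod.ext ?_ (Prod.ext ?_ ?_))
    · ext i j
      exact key (Sum.inl i) (Sum.inl j)
    · funext i
      exact key (Sum.inl i) (Sum.inr 0)
    · funext j
      exact key (Sum.inr 0) (Sum.inl j)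
    · exact key (Sum.inr 0) (Sum.inr 0)
  right_inv := by
    intro X
    ext i j
    rw [Phi, Matrix.submatrix_apply]
    rw [border_apply]
    rcases h1 : (finSumFinEquiv (m := m) (n := 1)).symm i with i' | i' <;>
      rcases h2 : (finSumFinEquiv (m := m) (n := 1)).symm j with j' | j' <;>
      · have e1 := congrArg finSumFinEquiv h1
        have e2 := congrArg finSumFinEquiv h2
        rw [Equiv.apply_symm_apply] at e1 e2
        simp [Psi, e1, e2, Subsingleton.elim _ (0 : Fin 1)]
  
lemma rank_Phi (m : ℕ) (t : Matrix (Fin m) (Fin m) F × ((Fin m → F) × (Fin m → F) × F)) :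
    (Phi m t).rank = (border t.1 t.2.1 t.2.2.1 t.2.2.2).rank :=
  Matrix.rank_submatrix _ _ _

lemma ktr_Phi (m k : ℕ) (hk : k ≤ m)
    (t : Matrix (Fin m) (Fin m) F × ((Fin m → F) × (Fin m → F) × F)) :
    ktr (m + 1) k (Phi m t) = ktr m k t.1 := by
  obtain ⟨A, b, c, d⟩ := t
  rw [ktr, ktr]
  refine Finset.sum_bij' (fun i hi => Fin.castLT i ?_) (fun i hi => Fin.castSucc i) ?_ ?_ ?_ ?_ ?_
  · rw [Finset.mem_filter] at hi
    exact lt_of_lt_of_le hi.2 hk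
  · intro i hi
    rw [Finset.mem_filter] at hi ⊢
    exact ⟨Finset.mem_univ _, hi.2⟩
  · intro i hi
    rw [Finset.mem_filter] at hi ⊢
    refine ⟨Finset.mem_univ _, ?_⟩
    simpa using hi.2
  · intro i hi
    ext
    simp
  · intro i hi
    ext
    simp
  · intro i hi
    rw [Finset.mem_filter] at hi
    have hilt : (i : ℕ) < m := lt_of_lt_of_le hi.2 hk
    have hsymm : (finSumFinEquiv (m := m) (n := 1)).symm i = Sum.inl ⟨(i : ℕ), hilt⟩ := by
      rw [Equiv.symm_apply_eq]
      ext
      simp [finSumFinEquiv]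
    rw [Phi, Matrix.submatrix_apply, hsymm]
    rfl

lemma fcard_eq_card_filter (m r k : ℕ) (α : F) :
    fcard F m r k α = (univ.filter fun A : Matrix (Fin m) (Fin m) F =>
      A.rank = r ∧ ktr m k A = α).card := by
  classical
  rw [fcard, Nat.card_eq_fintype_card, Fintype.card_subtype]
  rfl

open scoped Classical in
lemma fcard_succ (m r k : ℕ) (hk : k ≤ m) (α : F) :
    fcard F (m + 1) r k α =
      ∑ s ∈ Finset.range (m + 1),
        fcard F m s k α * wt (Fintype.card F) m s r := by
  classical
  have h1 : fcard F (m + 1) r k α = Nat.card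
      {t : Matrix (Fin m) (Fin m) F × ((Fin m → F) × (Fin m → F) × F) //
        (border t.1 t.2.1 t.2.2.1 t.2.2.2).rank = r ∧ ktr m k t.1 = α} := by
    rw [fcard]
    refine Nat.card_congr (Equiv.subtypeEquiv (PhiEquiv m).symm ?_)
    intro X
    rw [show ((PhiEquiv m).symm X : _) = (PhiEquiv m).symm X from rfl]
    constructor
    · rintro ⟨hr, ht⟩
      have hX : Phi m ((PhiEquiv m).symm X) = X := (PhiEquiv m).apply_symm_apply X
      constructor
      · rw [← rank_Phi, hX, hr]
      · rw [← ktr_Phi m k hk, hX, ← ht]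
        rfl
    · rintro ⟨hr, ht⟩
      have hX : Phi m ((PhiEquiv m).symm X) = X := (PhiEquiv m).apply_symm_apply X
      constructor
      · rw [← hX, rank_Phi, hr]
      · rw [show (∑ i ∈ Finset.univ.filter (fun i : Fin (m+1) => (i : ℕ) < k), X i i) =
          ktr (m+1) k X from rfl, ← hX, ktr_Phi m k hk, ht]
  rw [h1]
  have h2 : Nat.card
      {t : Matrix (Fin m) (Fin m) F × ((Fin m → F) × (Fin m → F) × F) //
        (border t.1 t.2.1 t.2.2.1 t.2.2.2).rank = r ∧ ktr m k t.1 = α}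
      = ∑ A : Matrix (Fin m) (Fin m) F, Nat.card
          {tr : (Fin m → F) × (Fin m → F) × F //
            (border A tr.1 tr.2.1 tr.2.2).rank = r ∧ ktr m k A = α} := by
    rw [Nat.card_congr (Equiv.subtypeProdEquivSigmaSubtype
      (fun (A : Matrix (Fin m) (Fin m) F) (tr : (Fin m → F) × (Fin m → F) × F) =>
        (border A tr.1 tr.2.1 tr.2.2).rank = r ∧ ktr m k A = α))]
    rw [Nat.card_eq_fintype_card, Fintype.card_sigma]
    congr 1
    funext A
    rw [Nat.card_eq_fintype_card]
  rw [h2]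
  have h3 : ∀ A : Matrix (Fin m) (Fin m) F, Nat.card
      {tr : (Fin m → F) × (Fin m → F) × F //
        (border A tr.1 tr.2.1 tr.2.2).rank = r ∧ ktr m k A = α}
      = if ktr m k A = α then wt (Fintype.card F) m A.rank r else 0 := by
    intro A
    by_cases hA : ktr m k A = α
    · rw [if_pos hA]
      have hct := card_triples A r
      rw [Fintype.card_fin] at hct
      rw [← hct]
      refine Nat.card_congr (Equiv.subtypeEquivRight ?_)
      intro tr
      simp [hA]
    · rw [if_neg hA]
      have : IsEmpty {tr : (Fin m → F) × (Fin m → F) × F //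
          (border A tr.1 tr.2.1 tr.2.2).rank = r ∧ ktr m k A = α} := by
        refine ⟨?_⟩
        rintro ⟨tr, _, h⟩
        exact hA h
      exact Nat.card_of_isEmpty
  rw [Finset.sum_congr rfl (fun A _ => h3 A)]
  rw [← Finset.sum_filter]
  have hmap : ∀ A ∈ univ.filter (fun A : Matrix (Fin m) (Fin m) F => ktr m k A = α),
      A.rank ∈ Finset.range (m + 1) := by
    intro A _
    rw [Finset.mem_range]
    have := Matrix.rank_le_width A
    omega
  rw [← Finset.sum_fiberwise_of_maps_to hmap
    (fun A => wt (Fintype.card F) m A.rank r)]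
  refine Finset.sum_congr rfl ?_
  intro s hs
  rw [Finset.sum_congr rfl (g := fun _ => wt (Fintype.card F) m s r)
    (fun A hA => by rw [Finset.mem_filter] at hA; rw [hA.2])]
  rw [Finset.sum_const, smul_eq_mul]
  congr 1
  rw [fcard_eq_card_filter]
  congr 1
  rw [Finset.filter_filter]
  apply Finset.filter_congr
  intro A _
  simp [and_comm]

end Assembly

section Poly

lemma wt_cast (q m s r : ℕ) (hq : 1 ≤ q) (hs : s ≤ m) :
    (wt q m s r : ℚ) =
      (if r = s then (q:ℚ)^(2*s) else 0) +
      (if r = s+1 then (q:ℚ)^(2*s)*((q:ℚ)-1) + 2*(q:ℚ)^s*((q:ℚ)^m-(q:ℚ)^s)*(q:ℚ) else 0) +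
      (if r = s+2 then ((q:ℚ)^m-(q:ℚ)^s)^2*(q:ℚ) else 0) := by
  have hpow : q ^ s ≤ q ^ m := Nat.pow_le_pow_right hq hs
  rw [wt, w1]
  rcases eq_or_ne r s with h | h
  · rw [if_pos h, if_pos h, if_neg (by omega), if_neg (by omega), if_neg (by omega),
      if_neg (by omega)]
    push_cast [Nat.cast_sub hpow]
    ring
  · rcases eq_or_ne r (s+1) with h1 | h1
    · rw [if_neg h, if_neg h, if_pos h1, if_pos h1, if_pos h1, if_neg (by omega),
        if_neg (by omega)]
      push_cast [Nat.cast_sub hpow, Nat.cast_sub hq]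
      ring
    · rcases eq_or_ne r (s+2) with h2 | h2
      · rw [if_neg h, if_neg h, if_neg h1, if_neg h1, if_neg h1, if_pos h2, if_pos h2]
        push_cast [Nat.cast_sub hpow]
        ring
      · rw [if_neg h, if_neg h, if_neg h1, if_neg h1, if_neg h1, if_neg h2, if_neg h2]
        push_cast
        ring

lemma sum_wt_poly (q m s : ℕ) (hq : 1 ≤ q) (hs : s ≤ m) :
    ∑ r ∈ Finset.range (m + 2), Polynomial.C ((wt q m s r : ℚ)) * Polynomial.X ^ r =
      Polynomial.C ((q:ℚ)^2)^s * Polynomial.X^s *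
          ((1 - Polynomial.X) * (1 - Polynomial.C (q:ℚ) * Polynomial.X)) +
      2 * Polynomial.X * (1 - Polynomial.X) * Polynomial.C ((q:ℚ)^(m+1)) *
          (Polynomial.C (q:ℚ)^s * Polynomial.X^s) +
      Polynomial.X^s * (Polynomial.X^2 * Polynomial.C ((q:ℚ)^(2*m+1))) := by
  have key : ∀ r ∈ Finset.range (m+2), Polynomial.C ((wt q m s r : ℚ)) * Polynomial.X ^ r =
      (if r = s then Polynomial.C ((q:ℚ)^(2*s)) * Polynomial.X ^ r else 0) +
      ((if r = s+1 then Polynomial.C ((q:ℚ)^(2*s)*((q:ℚ)-1) +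
          2*(q:ℚ)^s*((q:ℚ)^m-(q:ℚ)^s)*(q:ℚ)) * Polynomial.X ^ r else 0) +
       (if r = s+2 then Polynomial.C (((q:ℚ)^m-(q:ℚ)^s)^2*(q:ℚ)) * Polynomial.X ^ r else 0)) := by
    intro r _
    rw [wt_cast q m s r hq hs]
    split_ifs with h1 h2 h3 h2 h3 h3 <;> try omega
    all_goals simp
  rw [Finset.sum_congr rfl key]
  rw [Finset.sum_add_distrib, Finset.sum_add_distrib]
  rw [Finset.sum_ite_eq' (Finset.range (m+2)) s, Finset.sum_ite_eq' (Finset.range (m+2)) (s+1),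
    Finset.sum_ite_eq' (Finset.range (m+2)) (s+2)]
  rw [if_pos (Finset.mem_range.mpr (by omega)), if_pos (Finset.mem_range.mpr (by omega))]
  have h3 : (if s+2 ∈ Finset.range (m+2) then
      Polynomial.C (((q:ℚ)^m-(q:ℚ)^s)^2*(q:ℚ)) * Polynomial.X ^ (s+2) else 0)
      = Polynomial.C (((q:ℚ)^m-(q:ℚ)^s)^2*(q:ℚ)) * Polynomial.X ^ (s+2) := by
    rcases lt_or_eq_of_le hs with h | h
    · rw [if_pos (Finset.mem_range.mpr (by omega))]
    · subst h
      simp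
  rw [h3]
  simp only [_root_.map_mul, _root_.map_add, _root_.map_sub, map_pow, _root_.map_one,
    _root_.map_ofNat]
  ring

end Poly

end S11

theorem stmt11 (F : Type*) [Field F] [Fintype F] (q : ℕ) (hq : Fintype.card F = q)
    (n k : ℕ) (hk1 : 1 ≤ k) (hkn : k < n) :
    gpoly F n k =
      (gpoly F (n - 1) k).comp (Polynomial.C ((q : ℚ) ^ 2) * Polynomial.X) *
          ((1 - Polynomial.X) * (1 - Polynomial.C (q : ℚ) * Polynomial.X)) +
      2 * Polynomial.X * (1 - Polynomial.X) * Polynomial.C ((q : ℚ) ^ n) *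
          (gpoly F (n - 1) k).comp (Polynomial.C (q : ℚ) * Polynomial.X) +
      gpoly F (n - 1) k * (Polynomial.X ^ 2 * Polynomial.C ((q : ℚ) ^ (2 * n - 1))) := by
  classical
  obtain ⟨m, rfl⟩ : ∃ m, n = m + 1 := ⟨n - 1, by omega⟩
  have hm : m + 1 - 1 = m := rfl
  have h2m : 2 * (m + 1) - 1 = 2 * m + 1 := by omega
  have hk : k ≤ m := by omega
  have hq1 : 1 ≤ q := by rw [← hq]; exact Fintype.card_pos
  rw [hm, h2m]
  set D : ℕ → ℚ := fun s => (fcard F m s k 0 : ℚ) - (fcard F m s k 1 : ℚ) with hD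
  have hrec : ∀ r, (fcard F (m+1) r k 0 : ℚ) - (fcard F (m+1) r k 1 : ℚ)
      = ∑ s ∈ Finset.range (m+1), D s * (S11.wt q m s r : ℚ) := by
    intro r
    rw [S11.fcard_succ m r k hk 0, S11.fcard_succ m r k hk 1, hq]
    push_cast
    rw [← Finset.sum_sub_distrib]
    exact Finset.sum_congr rfl (fun s _ => by rw [hD]; ring)
  have hcomp : ∀ e : ℚ, (gpoly F m k).comp (Polynomial.C e * Polynomial.X)
      = ∑ s ∈ Finset.range (m+1), Polynomial.C (D s) *
          (Polynomial.C e ^ s * Polynomial.X ^ s) := by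
    intro e
    rw [gpoly, Polynomial.comp, Polynomial.eval₂_finset_sum]
    refine Finset.sum_congr rfl ?_
    intro s _
    rw [Polynomial.eval₂_mul, Polynomial.eval₂_C, Polynomial.eval₂_X_pow, mul_pow]
  have hlhs : gpoly F (m+1) k = ∑ s ∈ Finset.range (m+1), Polynomial.C (D s) *
      (∑ r ∈ Finset.range (m+2), Polynomial.C ((S11.wt q m s r : ℚ)) * Polynomial.X ^ r) := by
    rw [gpoly]
    have : ∀ r ∈ Finset.range (m + 1 + 1),
        Polynomial.C ((fcard F (m+1) r k 0 : ℚ) - (fcard F (m+1) r k 1 : ℚ)) * Polynomial.X ^ r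
        = ∑ s ∈ Finset.range (m+1),
            Polynomial.C (D s) * (Polynomial.C ((S11.wt q m s r : ℚ)) * Polynomial.X ^ r) := by
      intro r _
      rw [hrec r, map_sum, Finset.sum_mul]
      exact Finset.sum_congr rfl (fun s _ => by rw [_root_.map_mul]; ring)
    rw [Finset.sum_congr rfl this, Finset.sum_comm]
    exact Finset.sum_congr rfl (fun s _ => by rw [Finset.mul_sum])
  rw [hlhs, hcomp, hcomp, gpoly]
  rw [Finset.sum_mul, Finset.mul_sum, Finset.sum_mul, ← Finset.sum_add_distrib,
    ← Finset.sum_add_distrib]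
  refine Finset.sum_congr rfl ?_
  intro s hs
  rw [Finset.mem_range] at hs
  rw [S11.sum_wt_poly q m s hq1 (by omega)]
  ring
end
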